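/- arXiv:2407.05808 — 9 statements merged into one kernel-verified Lean document; each statement's English description precedes it below -/
import Mathlib

section
/- Let ν_M be a valuated matroid of rank r on E with extension ν̃_M to subsets of size at most r. For every S with |S| ≤ r − 1 and ν̃_M(S) < ∞, there exists e ∈ E − S such that ν̃_M(S ∪ {e}) = ν̃_M(S). -/
open Finset
open scoped Classical

noncomputable section

/-- The valuated symmetric basis exchange property for a map on `r`-element subsets. -/
def ExchProp {E Γ : Type*} [AddCommGroup Γ] [LinearOrder Γ] [IsOrderedAddMonoid Γ]
    (r : ℕ) (ν : Finset E → WithTop Γ) : Prop :=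
  ∀ S T : Finset E, S.card = r → T.card = r → ∀ s ∈ S, s ∉ T →
    ∃ t ∈ T, t ∉ S ∧
      ν (insert t (S.erase s)) + ν (insert s (T.erase t)) ≤ ν S + ν T

/-- A valuated matroid of rank `r`: not identically `∞` on `r`-sets, and the
valuated basis exchange property. -/
def IsVMatroid {E Γ : Type*} [AddCommGroup Γ] [LinearOrder Γ] [IsOrderedAddMonoid Γ]
    (r : ℕ) (ν : Finset E → WithTop Γ) : Prop :=
  (∃ B : Finset E, B.card = r ∧ ν B ≠ ⊤) ∧ ExchProp r ν

/-- The independent-set extension `ν̃(S) = min {ν B : S ⊆ B, |B| = r}`. -/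
def extν {E Γ : Type*} [Fintype E] [AddCommGroup Γ] [LinearOrder Γ] [IsOrderedAddMonoid Γ]
    (r : ℕ) (ν : Finset E → WithTop Γ) (S : Finset E) : WithTop Γ :=
  ((Finset.univ.powersetCard r).filter (fun B => S ⊆ B)).inf ν

/-- any independent set of size `< r` with finite value can be enlarged
without changing the value of the extension. -/
theorem extension_augment_same_value {E Γ : Type*} [Fintype E] [AddCommGroup Γ] [LinearOrder Γ] [IsOrderedAddMonoid Γ]
    (r : ℕ) (ν : Finset E → WithTop Γ) (hM : IsVMatroid r ν)
    (S : Finset E) (hS : S.card + 1 ≤ r) (hfin : extν r ν S ≠ ⊤) :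
    ∃ e : E, e ∉ S ∧ extν r ν (insert e S) = extν r ν S := by
  classical
  set F := ((Finset.univ.powersetCard r).filter (fun B => S ⊆ B)) with hF
  have hne : F.Nonempty := by
    by_contra h
    rw [Finset.not_nonempty_iff_eq_empty] at h
    apply hfin
    simp [extν, ← hF, h]
  obtain ⟨B, hBF, hBeq⟩ := Finset.exists_mem_eq_inf F hne ν
  have hBinf : extν r ν S = ν B := hBeq
  simp only [hF, Finset.mem_filter, Finset.mem_powersetCard] at hBF
  obtain ⟨⟨-, hBcard⟩, hSB⟩ := hBF
  have hlt : S.card < B.card := by omega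
  obtain ⟨e, he⟩ := Finset.sdiff_nonempty.2
    (fun h : B ⊆ S => absurd (Finset.card_le_card h) (by omega))
  obtain ⟨heB, heS⟩ := Finset.mem_sdiff.1 he
  refine ⟨e, heS, le_antisymm ?_ ?_⟩
  · rw [hBinf]
    apply Finset.inf_le
    simp only [hF, Finset.mem_filter, Finset.mem_powersetCard]
    exact ⟨⟨Finset.subset_univ B, hBcard⟩, Finset.insert_subset heB hSB⟩
  · apply Finset.inf_mono
    intro B' hB'
    simp only [hF, Finset.mem_filter] at hB' ⊢
    exact ⟨hB'.1, (Finset.subset_insert e S).trans hB'.2⟩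
end
end

section
/- Let M = (E, ν_M) be a valuated matroid of rank r on a finite set E, and let Q be a finite set disjoint from E with |Q| ≥ r. Define ν_M̃ : binom(Q ⊔ E, r) → Γ̄ by ν_M̃(S̃) = ν̃_M(S̃ ∩ E), where ν̃_M is the independent-set extension of ν_M. Then ν_M̃ satisfies the valuated symmetric basis exchange property, i.e., it defines a valuated matroid of rank r on Q ⊔ E. -/
open Finset
open scoped Classical

noncomputable section

namespace GenExt
set_option linter.unusedSectionVars false

variable {E Γ : Type*} [Fintype E] [AddCommGroup Γ] [LinearOrder Γ] [IsOrderedAddMonoid Γ]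
variable {r : ℕ} {ν : Finset E → WithTop Γ}

lemma extν_le_base {A B : Finset E} (hAB : A ⊆ B) (hB : B.card = r) :
    extν r ν A ≤ ν B := by
  apply Finset.inf_le
  simp only [mem_filter, Finset.mem_powersetCard]
  exact ⟨⟨subset_univ B, hB⟩, hAB⟩

lemma extν_mono {A A' : Finset E} (h : A ⊆ A') : extν r ν A ≤ extν r ν A' := by
  apply Finset.inf_mono
  intro B hB
  simp only [mem_filter] at hB ⊢
  exact ⟨hB.1, h.trans hB.2⟩

lemma extν_attained {A : Finset E} (h : extν r ν A ≠ ⊤) :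
    ∃ B : Finset E, A ⊆ B ∧ B.card = r ∧ ν B = extν r ν A := by
  have hne : ((Finset.univ.powersetCard r).filter (fun B => A ⊆ B)).Nonempty := by
    by_contra hc
    rw [Finset.not_nonempty_iff_eq_empty] at hc
    rw [extν, hc] at h
    simp at h
  obtain ⟨B, hBmem, hBeq⟩ := Finset.exists_mem_eq_inf _ hne ν
  simp only [mem_filter, Finset.mem_powersetCard] at hBmem
  exact ⟨B, hBmem.2, hBmem.1.2, hBeq.symm⟩

lemma add_ne_top' {a b : WithTop Γ} (h : a + b ≠ ⊤) : a ≠ ⊤ ∧ b ≠ ⊤ := by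
  constructor <;> intro hc <;> rw [hc] at h <;> simp at h

lemma card_swap {S : Finset E} {s t : E} (hs : s ∈ S) (ht : t ∉ S) {k : ℕ} (hS : S.card = k) :
    (insert t (S.erase s)).card = k := by
  rw [card_insert_of_notMem (fun hc => ht (mem_of_mem_erase hc)), card_erase_of_mem hs, hS]
  have : 1 ≤ k := by rw [← hS]; exact card_pos.mpr ⟨s, hs⟩
  omega

lemma subset_swap_of_subset {A B : Finset E} {s t : E} (hAB : A ⊆ B) (hs : s ∉ A) :
    A ⊆ insert t (B.erase s) := by
  intro x hx
  rcases eq_or_ne x t with rfl | hxt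
  · exact mem_insert_self _ _
  · exact mem_insert_of_mem (mem_erase.mpr ⟨fun hc => hs (hc ▸ hx), hAB hx⟩)

lemma exists_not_mem {S T : Finset E} (h : S.card < T.card) : ∃ j ∈ T, j ∉ S := by
  by_contra hc
  push_neg at hc
  exact absurd (card_le_card hc) (not_le.mpr h)

/-- (3v)/step1: either a pure swap at `i`, or the down-up option. -/
lemma step1 (hex : ExchProp r ν) {S T : Finset E} {i : E} (hiS : i ∈ S) (hiT : i ∉ T) :
    (∃ j ∈ T, j ∉ S ∧
        extν r ν (insert j (S.erase i)) + extν r ν (insert i (T.erase j)) ≤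
          extν r ν S + extν r ν T) ∨
      extν r ν (S.erase i) + extν r ν (insert i T) ≤ extν r ν S + extν r ν T := by
  by_cases hΦ : extν r ν S + extν r ν T = ⊤
  · right; rw [hΦ]; exact le_top
  obtain ⟨hSf, hTf⟩ := add_ne_top' hΦ
  obtain ⟨B, hSB, hBr, hBv⟩ := extν_attained hSf
  obtain ⟨C, hTC, hCr, hCv⟩ := extν_attained hTf
  by_cases hiC : i ∈ C
  · right
    have h1 : extν r ν (S.erase i) ≤ extν r ν S := extν_mono (erase_subset _ _)
    have h2 : extν r ν (insert i T) ≤ ν C := extν_le_base (insert_subset hiC hTC) hCr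
    calc extν r ν (S.erase i) + extν r ν (insert i T) ≤ extν r ν S + ν C :=
          add_le_add h1 h2
      _ = extν r ν S + extν r ν T := by rw [hCv]
  · obtain ⟨c, hcC, hcB, hineq⟩ := hex B C hBr hCr i (hSB hiS) hiC
    rw [hBv, hCv] at hineq
    by_cases hcT : c ∈ T
    · left
      refine ⟨c, hcT, fun hc => hcB (hSB hc), ?_⟩
      have h1 : extν r ν (insert c (S.erase i)) ≤ ν (insert c (B.erase i)) := by
        apply extν_le_base _ (card_swap (hSB hiS) hcB hBr)
        intro x hx
        rcases mem_insert.mp hx with rfl | hx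
        · exact mem_insert_self _ _
        · exact mem_insert_of_mem (mem_erase.mpr ⟨(mem_erase.mp hx).1, hSB (mem_of_mem_erase hx)⟩)
      have h2 : extν r ν (insert i (T.erase c)) ≤ ν (insert i (C.erase c)) := by
        apply extν_le_base _ (card_swap hcC hiC hCr)
        intro x hx
        rcases mem_insert.mp hx with rfl | hx
        · exact mem_insert_self _ _
        · exact mem_insert_of_mem (mem_erase.mpr ⟨(mem_erase.mp hx).1, hTC (mem_of_mem_erase hx)⟩)
      exact le_trans (add_le_add h1 h2) hineq
    · right
      have h1 : extν r ν (S.erase i) ≤ ν (insert c (B.erase i)) := by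
        apply extν_le_base _ (card_swap (hSB hiS) hcB hBr)
        apply subset_swap_of_subset (fun x hx => hSB (mem_of_mem_erase hx))
        exact notMem_erase i S
      have h2 : extν r ν (insert i T) ≤ ν (insert i (C.erase c)) := by
        apply extν_le_base _ (card_swap hcC hiC hCr)
        intro x hx
        rcases mem_insert.mp hx with rfl | hx
        · exact mem_insert_self _ _
        · exact mem_insert_of_mem (mem_erase.mpr ⟨fun hc => hcT (hc ▸ hx), hTC hx⟩)
      exact le_trans (add_le_add h1 h2) hineq

/-- Local submodularity of the independent-set extension. -/
lemma lsm (hex : ExchProp r ν) {T : Finset E} {i j : E} (hiT : i ∉ T) (hjT : j ∈ T) :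
    extν r ν (insert i (T.erase j)) + extν r ν T ≤
      extν r ν (insert i T) + extν r ν (T.erase j) := by
  by_cases hΦ : extν r ν (insert i T) + extν r ν (T.erase j) = ⊤
  · rw [hΦ]; exact le_top
  obtain ⟨hDf, hFf⟩ := add_ne_top' hΦ
  obtain ⟨D, hD, hDr, hDv⟩ := extν_attained hDf
  obtain ⟨F, hF, hFr, hFv⟩ := extν_attained hFf
  by_cases hiF : i ∈ F
  · have h1 : extν r ν (insert i (T.erase j)) ≤ ν F :=
      extν_le_base (insert_subset hiF hF) hFr
    have h2 : extν r ν T ≤ ν D :=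
      extν_le_base ((subset_insert _ _).trans hD) hDr
    calc extν r ν (insert i (T.erase j)) + extν r ν T ≤ ν F + ν D := add_le_add h1 h2
      _ = extν r ν (insert i T) + extν r ν (T.erase j) := by rw [hDv, hFv, add_comm]
  · by_cases hjF : j ∈ F
    · have h1 : extν r ν (insert i (T.erase j)) ≤ extν r ν (insert i T) :=
        extν_mono (insert_subset_insert _ (erase_subset _ _))
      have h2 : extν r ν T ≤ ν F := by
        apply extν_le_base _ hFr
        intro x hx
        rcases eq_or_ne x j with rfl | hxj
        · exact hjF
        · exact hF (mem_erase.mpr ⟨hxj, hx⟩)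
      calc extν r ν (insert i (T.erase j)) + extν r ν T ≤ extν r ν (insert i T) + ν F :=
            add_le_add h1 h2
        _ = extν r ν (insert i T) + extν r ν (T.erase j) := by rw [hFv]
    · have hjD : j ∈ D := hD (mem_insert_of_mem hjT)
      obtain ⟨b, hbF, hbD, hineq⟩ := hex D F hDr hFr j hjD hjF
      rw [hDv, hFv] at hineq
      have hbT : b ∉ T := fun hc => hbD (hD (mem_insert_of_mem hc))
      have h1 : extν r ν (insert i (T.erase j)) ≤ ν (insert b (D.erase j)) := by
        apply extν_le_base _ (card_swap hjD hbD hDr)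
        intro x hx
        rcases mem_insert.mp hx with rfl | hx
        · exact mem_insert_of_mem (mem_erase.mpr ⟨fun hc => hiT (hc ▸ hjT),
            hD (mem_insert_self _ _)⟩)
        · exact mem_insert_of_mem (mem_erase.mpr ⟨(mem_erase.mp hx).1,
            hD (mem_insert_of_mem (mem_of_mem_erase hx))⟩)
      have h2 : extν r ν T ≤ ν (insert j (F.erase b)) := by
        apply extν_le_base _ (card_swap hbF hjF hFr)
        intro x hx
        rcases eq_or_ne x j with rfl | hxj
        · exact mem_insert_self _ _
        · exact mem_insert_of_mem (mem_erase.mpr ⟨fun hc => hbT (hc ▸ hx),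
            hF (mem_erase.mpr ⟨hxj, hx⟩)⟩)
      exact le_trans (add_le_add h1 h2) hineq

/-- (1v): valuated augmentation for the independent-set extension. -/
lemma onev_aux (hex : ExchProp r ν) :
    ∀ (n : ℕ) (S T : Finset E), r - T.card = n → S.card < T.card →
      ∃ j ∈ T, j ∉ S ∧
        extν r ν (insert j S) + extν r ν (T.erase j) ≤ extν r ν S + extν r ν T := by
  intro n
  induction n using Nat.strong_induction_on with
  | _ n ih =>
    intro S T hn hST
    obtain ⟨j₀, hj₀T, hj₀S⟩ := exists_not_mem hST
    by_cases hΦ : extν r ν S + extν r ν T = ⊤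
    · exact ⟨j₀, hj₀T, hj₀S, by rw [hΦ]; exact le_top⟩
    obtain ⟨hSf, hTf⟩ := add_ne_top' hΦ
    obtain ⟨B, hSB, hBr, hBv⟩ := extν_attained hSf
    obtain ⟨C, hTC, hCr, hCv⟩ := extν_attained hTf
    have key : ∃ j ∈ C, j ∉ S ∧
        extν r ν (insert j S) + extν r ν (C.erase j) ≤ extν r ν S + ν C := by
      by_cases h1 : ∃ j ∈ C, j ∉ S ∧ j ∈ B
      · obtain ⟨j, hjC, hjS, hjB⟩ := h1
        refine ⟨j, hjC, hjS, ?_⟩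
        have b1 : extν r ν (insert j S) ≤ ν B := extν_le_base (insert_subset hjB hSB) hBr
        have b2 : extν r ν (C.erase j) ≤ ν C := extν_le_base (erase_subset _ _) hCr
        calc extν r ν (insert j S) + extν r ν (C.erase j) ≤ ν B + ν C := add_le_add b1 b2
          _ = extν r ν S + ν C := by rw [hBv]
      · push_neg at h1
        have hcardB : S.card < B.card := by
          rw [hBr]
          calc S.card < T.card := hST
            _ ≤ C.card := card_le_card hTC
            _ = r := hCr
        obtain ⟨u, huB, huS⟩ := exists_not_mem hcardB
        have huC : u ∉ C := fun hc => (h1 u hc huS) huB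
        obtain ⟨c, hcC, hcB, hineq⟩ := hex B C hBr hCr u huB huC
        rw [hBv] at hineq
        have hcS : c ∉ S := fun hc => hcB (hSB hc)
        refine ⟨c, hcC, hcS, ?_⟩
        have b1 : extν r ν (insert c S) ≤ ν (insert c (B.erase u)) := by
          apply extν_le_base _ (card_swap huB hcB hBr)
          apply insert_subset (mem_insert_self _ _)
          intro x hx
          exact mem_insert_of_mem (mem_erase.mpr ⟨fun hc => huS (hc ▸ hx), hSB hx⟩)
        have b2 : extν r ν (C.erase c) ≤ ν (insert u (C.erase c)) :=
          extν_le_base (subset_insert _ _) (card_swap hcC huC hCr)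
        exact le_trans (add_le_add b1 b2) hineq
    obtain ⟨j, hjC, hjS, keyj⟩ := key
    by_cases hjT : j ∈ T
    · refine ⟨j, hjT, hjS, ?_⟩
      have b1 : extν r ν (T.erase j) ≤ extν r ν (C.erase j) :=
        extν_mono (erase_subset_erase _ hTC)
      calc extν r ν (insert j S) + extν r ν (T.erase j)
          ≤ extν r ν (insert j S) + extν r ν (C.erase j) := add_le_add le_rfl b1
        _ ≤ extν r ν S + ν C := keyj
        _ = extν r ν S + extν r ν T := by rw [hCv]
    · have hTCj : T ⊆ C.erase j := fun x hx => mem_erase.mpr ⟨fun hc => hjT (hc ▸ hx), hTC hx⟩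
      have hCjv : extν r ν (C.erase j) = ν C := by
        refine le_antisymm (extν_le_base (erase_subset _ _) hCr) ?_
        rw [hCv]
        exact extν_mono hTCj
      have hCf : ν C ≠ ⊤ := by rw [hCv]; exact hTf
      have hSj : extν r ν (insert j S) ≤ extν r ν S := by
        rw [hCjv] at keyj
        exact (WithTop.add_le_add_iff_right hCf).mp keyj
      have hTr : T.card < r := by
        have h1 : T.card ≤ (C.erase j).card := card_le_card hTCj
        rw [card_erase_of_mem hjC, hCr] at h1
        have h2 : 1 ≤ r := by rw [← hCr]; exact card_pos.mpr ⟨j, hjC⟩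
        omega
      have hrec := ih (r - (insert j T).card)
        (by rw [card_insert_of_notMem hjT]; omega) (insert j S) (insert j T) rfl
        (by rw [card_insert_of_notMem hjT, card_insert_of_notMem hjS]; omega)
      obtain ⟨j', hj'T, hj'S, rec⟩ := hrec
      have hj'j : j' ≠ j := fun hc => hj'S (hc ▸ mem_insert_self _ _)
      have hj'T' : j' ∈ T := by
        rcases mem_insert.mp hj'T with hc | h
        · exact absurd hc hj'j
        · exact h
      have hj'S' : j' ∉ S := fun hc => hj'S (mem_insert_of_mem hc)
      refine ⟨j', hj'T', hj'S', ?_⟩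
      have m1 : extν r ν (insert j' S) ≤ extν r ν (insert j' (insert j S)) :=
        extν_mono (insert_subset_insert _ (subset_insert _ _))
      have m2 : extν r ν (T.erase j') ≤ extν r ν ((insert j T).erase j') :=
        extν_mono (erase_subset_erase _ (subset_insert _ _))
      have m3 : extν r ν (insert j T) ≤ extν r ν T := by
        have h := extν_le_base (ν := ν) (insert_subset hjC hTC) hCr
        rw [hCv] at h; exact h
      calc extν r ν (insert j' S) + extν r ν (T.erase j')
          ≤ extν r ν (insert j' (insert j S)) + extν r ν ((insert j T).erase j') :=
            add_le_add m1 m2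
        _ ≤ extν r ν (insert j S) + extν r ν (insert j T) := rec
        _ ≤ extν r ν S + extν r ν T := add_le_add hSj m3

lemma onev (hex : ExchProp r ν) {S T : Finset E} (hST : S.card < T.card) :
    ∃ j ∈ T, j ∉ S ∧
      extν r ν (insert j S) + extν r ν (T.erase j) ≤ extν r ν S + extν r ν T :=
  onev_aux hex (r - T.card) S T rfl hST

/-- (2v): pure swap when `|S| ≤ |T|`. -/
lemma twov (hex : ExchProp r ν) {S T : Finset E} {i : E}
    (hiS : i ∈ S) (hiT : i ∉ T) (hST : S.card ≤ T.card) :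
    ∃ j ∈ T, j ∉ S ∧
      extν r ν (insert j (S.erase i)) + extν r ν (insert i (T.erase j)) ≤
        extν r ν S + extν r ν T := by
  have hTSne : ∃ j ∈ T, j ∉ S := by
    by_contra hc
    push_neg at hc
    have hTS : T ⊆ S.erase i := fun x hx =>
      mem_erase.mpr ⟨fun h => hiT (h ▸ hx), hc x hx⟩
    have h2 := card_le_card hTS
    rw [card_erase_of_mem hiS] at h2
    have : 1 ≤ S.card := card_pos.mpr ⟨i, hiS⟩
    omega
  rcases step1 hex hiS hiT with done | h0
  · exact done
  by_cases hΦ : extν r ν S + extν r ν T = ⊤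
  · obtain ⟨j₀, hj₀T, hj₀S⟩ := hTSne
    exact ⟨j₀, hj₀T, hj₀S, by rw [hΦ]; exact le_top⟩
  obtain ⟨hSf, hTf⟩ := add_ne_top' hΦ
  have hcard : (S.erase i).card < T.card := by
    rw [card_erase_of_mem hiS]
    have : 1 ≤ S.card := card_pos.mpr ⟨i, hiS⟩
    omega
  obtain ⟨j, hjT, hjS', halpha⟩ := onev hex (S := S.erase i) (T := T) hcard
  have hji : j ≠ i := fun hc => hiT (hc ▸ hjT)
  have hjS : j ∉ S := fun hc => hjS' (mem_erase.mpr ⟨hji, hc⟩)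
  have hbeta := lsm hex (T := T) (i := i) (j := j) hiT hjT
  refine ⟨j, hjT, hjS, ?_⟩
  set A := extν r ν (insert j (S.erase i)) with hA
  set Bi := extν r ν (insert i (T.erase j)) with hBi
  set Tj := extν r ν (T.erase j) with hTj
  set Tt := extν r ν T with hTt
  set Se := extν r ν (S.erase i) with hSe
  set Ti := extν r ν (insert i T) with hTi
  have hTjf : Tj ≠ ⊤ := by
    intro hc
    have h := extν_mono (r := r) (ν := ν) (erase_subset j T)
    rw [← hTj, ← hTt, hc] at h
    exact hTf (top_le_iff.mp h)
  have hsum := add_le_add halpha hbeta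
  rw [add_add_add_comm A Tj Bi Tt, add_add_add_comm Se Tt Ti Tj, add_comm Tt Tj] at hsum
  have hcancel : A + Bi ≤ Se + Ti :=
    (WithTop.add_le_add_iff_right (WithTop.add_ne_top.mpr ⟨hTjf, hTf⟩)).mp hsum
  exact le_trans hcancel h0

end GenExt

section Global

set_option linter.unusedSectionVars false

open GenExt

variable {E Q Γ : Type*} [Fintype E] [Fintype Q] [AddCommGroup Γ] [LinearOrder Γ] [IsOrderedAddMonoid Γ]

/-- The `E`-part of a subset of `Q ⊕ E`. -/
private def resE (St : Finset (Q ⊕ E)) : Finset E :=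
  Finset.univ.filter (fun e : E => Sum.inr e ∈ St)

private def resQ (St : Finset (Q ⊕ E)) : Finset Q :=
  Finset.univ.filter (fun q : Q => Sum.inl q ∈ St)

private lemma card_resolve (St : Finset (Q ⊕ E)) :
    (resQ St).card + (resE St).card = St.card := by
  have h1 : (resQ St).map ⟨Sum.inl, Sum.inl_injective⟩ =
      St.filter (fun x => x.isLeft) := by
    ext x
    cases x with
    | inl q => simp [resQ]
    | inr e => simp [resQ]
  have h2 : (resE St).map ⟨Sum.inr, Sum.inr_injective⟩ =
      St.filter (fun x => ¬ x.isLeft) := by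
    ext x
    cases x with
    | inl q => simp [resE]
    | inr e => simp [resE]
  have := Finset.card_filter_add_card_filter_not
    (s := St) (p := fun x => x.isLeft)
  rw [← this, ← h1, ← h2, Finset.card_map, Finset.card_map]

private lemma mem_resE {St : Finset (Q ⊕ E)} {e : E} :
    e ∈ resE St ↔ Sum.inr e ∈ St := by simp [resE]

private lemma resE_insert_inl (q : Q) (X : Finset (Q ⊕ E)) :
    resE (insert (Sum.inl q) X) = resE X := by
  ext e; simp [resE]

private lemma resE_erase_inl (q : Q) (X : Finset (Q ⊕ E)) :
    resE (X.erase (Sum.inl q)) = resE X := by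
  ext e; simp [resE]

private lemma resE_insert_inr (j : E) (X : Finset (Q ⊕ E)) :
    resE (insert (Sum.inr j) X) = insert j (resE X) := by
  ext e; simp [resE]

private lemma resE_erase_inr (j : E) (X : Finset (Q ⊕ E)) :
    resE (X.erase (Sum.inr j)) = (resE X).erase j := by
  ext e; simp [resE, and_comm]

theorem generic_extension_isVMatroid' 
    (r : ℕ) (ν : Finset E → WithTop Γ) (hM : IsVMatroid r ν)
    (hQ : r ≤ Fintype.card Q) :
    IsVMatroid r (fun St : Finset (Q ⊕ E) =>
      extν r ν (Finset.univ.filter (fun e : E => Sum.inr e ∈ St))) := by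
  obtain ⟨⟨B0, hB0r, hB0⟩, hex⟩ := hM
  constructor
  · -- nontriviality
    obtain ⟨P, hPsub, hPcard⟩ :=
      Finset.exists_subset_card_eq (s := (Finset.univ : Finset Q)) (n := r) (by simpa using hQ)
    refine ⟨P.map ⟨Sum.inl, Sum.inl_injective⟩, by rw [Finset.card_map, hPcard], ?_⟩
    have hres : Finset.univ.filter
        (fun e : E => Sum.inr e ∈ P.map ⟨Sum.inl, Sum.inl_injective⟩) = (∅ : Finset E) := by
      ext e; simp
    dsimp only
    rw [hres]
    intro hc
    have h := extν_le_base (ν := ν) (A := (∅ : Finset E)) (empty_subset B0) hB0r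
    rw [hc] at h
    exact hB0 (top_le_iff.mp h)
  · -- exchange property
    intro St Tt hStr hTtr st hstS hstT
    have hScard : (resQ St).card + (resE St).card = r := by rw [card_resolve, hStr]
    have hTcard : (resQ Tt).card + (resE Tt).card = r := by rw [card_resolve, hTtr]
    cases st with
    | inl q =>
      by_cases hA : ∃ q' : Q, Sum.inl q' ∈ Tt ∧ Sum.inl q' ∉ St
      · obtain ⟨q', hq'T, hq'S⟩ := hA
        refine ⟨Sum.inl q', hq'T, hq'S, ?_⟩
        dsimp only
        have hid : extν r ν (resE St) + extν r ν (resE Tt) ≤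
            extν r ν (resE St) + extν r ν (resE Tt) := le_rfl
        convert hid using 3
        all_goals (ext x; simp [resE])
      · push_neg at hA
        have hQsub : resQ Tt ⊆ resQ St := by
          intro q' hq'
          simp only [resQ, Finset.mem_filter] at hq' ⊢
          exact ⟨Finset.mem_univ _, hA q' hq'.2⟩
        have hqS : q ∈ resQ St := by simp [resQ, hstS]
        have hqT : q ∉ resQ Tt := by simp [resQ]; exact fun hc => hstT hc
        have hQsub' : resQ Tt ⊆ (resQ St).erase q := fun x hx =>
          Finset.mem_erase.mpr ⟨fun hc => hqT (hc ▸ hx), hQsub hx⟩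
        have hQlt : (resQ Tt).card < (resQ St).card := by
          have h1 := Finset.card_le_card hQsub'
          rw [Finset.card_erase_of_mem hqS] at h1
          have : 1 ≤ (resQ St).card := Finset.card_pos.mpr ⟨q, hqS⟩
          omega
        have hElt : (resE St).card < (resE Tt).card := by omega
        obtain ⟨j, hjT, hjS, hineq⟩ := onev hex hElt
        refine ⟨Sum.inr j, mem_resE.mp hjT, fun hc => hjS (mem_resE.mpr hc), ?_⟩
        dsimp only
        convert hineq using 3
        all_goals (ext x; simp [resE])
    | inr e =>
      have heS : e ∈ resE St := mem_resE.mpr hstS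
      have heT : e ∉ resE Tt := fun hc => hstT (mem_resE.mp hc)
      by_cases hB : ∃ q' : Q, Sum.inl q' ∈ Tt ∧ Sum.inl q' ∉ St
      · obtain ⟨q', hq'T, hq'S⟩ := hB
        rcases step1 hex heS heT with ⟨j, hjT, hjS, hineq⟩ | h0
        · refine ⟨Sum.inr j, mem_resE.mp hjT, fun hc => hjS (mem_resE.mpr hc), ?_⟩
          dsimp only
          convert hineq using 3
          all_goals (ext x; simp [resE])
        · refine ⟨Sum.inl q', hq'T, hq'S, ?_⟩
          dsimp only
          convert h0 using 3
          all_goals (ext x; simp [resE])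
      · push_neg at hB
        have hQsub : resQ Tt ⊆ resQ St := by
          intro q' hq'
          simp only [resQ, Finset.mem_filter] at hq' ⊢
          exact ⟨Finset.mem_univ _, hB q' hq'.2⟩
        have hQle : (resQ Tt).card ≤ (resQ St).card := Finset.card_le_card hQsub
        have hEle : (resE St).card ≤ (resE Tt).card := by omega
        obtain ⟨j, hjT, hjS, hineq⟩ := twov hex heS heT hEle
        refine ⟨Sum.inr j, mem_resE.mp hjT, fun hc => hjS (mem_resE.mpr hc), ?_⟩
        dsimp only
        convert hineq using 3
        all_goals (ext x; simp [resE])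

end Global


/-- the generic extension of a valuated matroid `M` on `E` to the disjoint
union `Q ⊔ E`, given by `ν_M̃(St) = ν̃_M(St ∩ E)`, is a valuated matroid of rank `r`. -/
theorem generic_extension_isVMatroid {E Q Γ : Type*} [Fintype E] [Fintype Q]
    [AddCommGroup Γ] [LinearOrder Γ] [IsOrderedAddMonoid Γ]
    (r : ℕ) (ν : Finset E → WithTop Γ) (hM : IsVMatroid r ν)
    (hQ : r ≤ Fintype.card Q) :
    IsVMatroid r (fun St : Finset (Q ⊕ E) =>
      extν r ν (Finset.univ.filter (fun e : E => Sum.inr e ∈ St))) := by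
  exact generic_extension_isVMatroid' r ν hM hQ
end
end

section
/- Let ν : Δ_E^r → Γ̄ be a function with cage a = (a_s)_{s∈E}, let π : E' → E be a map of finite sets with |π^{-1}(s)| = a_s for all s ∈ E, and define the multisymmetric lift M_π(ν) : binom(E', r) → Γ̄ by M_π(ν)(S') = ν(Σ_{s'∈S'} e_{π(s')}). Then ν is M-convex if and only if M_π(ν) is a valuated matroid of rank r on E'. -/
open Finset
open scoped Classical

noncomputable section

/-- `α - e_s + e_t` for a multiset exponent vector `α : E → ℕ`. -/
def move {E : Type*} (α : E → ℕ) (s t : E) : E → ℕ :=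
  fun x => α x - (if x = s then 1 else 0) + (if x = t then 1 else 0)

/-- `ν : Δ_E^r → Γ ∪ {∞}` is an M-convex function of rank `r`. -/
def MConvexFn {E Γ : Type*} [Fintype E] [AddCommGroup Γ] [LinearOrder Γ] [IsOrderedAddMonoid Γ]
    (r : ℕ) (ν : (E → ℕ) → WithTop Γ) : Prop :=
  (∃ α : E → ℕ, (∑ e, α e) = r ∧ ν α ≠ ⊤) ∧
  ∀ α β : E → ℕ, (∑ e, α e) = r → (∑ e, β e) = r → ∀ s : E, β s < α s →
    ∃ t : E, α t < β t ∧ ν (move α s t) + ν (move β t s) ≤ ν α + ν β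

/-- The multisymmetric lift `M_π(ν)(S') = ν(∑_{s' ∈ S'} e_{π(s')})`. -/
def mlift {E E' Γ : Type*} [Fintype E'] [AddCommGroup Γ] [LinearOrder Γ] [IsOrderedAddMonoid Γ]
    (π : E' → E) (ν : (E → ℕ) → WithTop Γ) (S' : Finset E') : WithTop Γ :=
  ν (fun e => (S'.filter (fun x => π x = e)).card)

set_option linter.unusedSectionVars false

section helpers
variable {E E' : Type*} [Fintype E] [Fintype E']

lemma sum_fiber_card (π : E' → E) (S : Finset E') :
    ∑ e, (S.filter (fun x => π x = e)).card = S.card :=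
  (Finset.card_eq_sum_card_fiberwise (fun x _ => Finset.mem_univ (π x))).symm

lemma filter_comp_eq (π : E' → E) (C : E → Finset E') (hC : ∀ e, ∀ x ∈ C e, π x = e) (e : E) :
    (Finset.univ.filter (fun x => x ∈ C (π x))).filter (fun x => π x = e) = C e := by
  ext x
  simp only [Finset.mem_filter, Finset.mem_univ, true_and]
  constructor
  · rintro ⟨hx, he⟩; rwa [he] at hx
  · intro hx; have h := hC e x hx; exact ⟨by rwa [h], h⟩

lemma fiber_move (π : E' → E) (S : Finset E') (s' t' : E') (hs : s' ∈ S) (ht : t' ∉ S) :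
    (fun e => ((insert t' (S.erase s')).filter (fun x => π x = e)).card)
      = move (fun e => (S.filter (fun x => π x = e)).card) (π s') (π t') := by
  funext e
  have hcard1 : 1 ≤ (S.filter (fun x => π x = π s')).card :=
    Finset.card_pos.2 ⟨s', Finset.mem_filter.2 ⟨hs, rfl⟩⟩
  rw [Finset.filter_insert]
  by_cases h1 : π t' = e
  · rw [if_pos h1, Finset.filter_erase,
      Finset.card_insert_of_notMem
        (fun h => ht (Finset.mem_filter.1 (Finset.mem_of_mem_erase h)).1)]
    by_cases h2 : π s' = e
    · rw [Finset.card_erase_of_mem (Finset.mem_filter.2 ⟨hs, h2⟩)]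
      simp only [move, if_pos h2.symm, if_pos h1.symm]
    · have hnm : s' ∉ S.filter (fun x => π x = e) :=
        fun h => h2 (Finset.mem_filter.1 h).2
      rw [Finset.erase_eq_of_notMem hnm]
      simp only [move, if_neg (fun h : e = π s' => h2 h.symm), if_pos h1.symm]
      omega
  · rw [if_neg h1, Finset.filter_erase]
    by_cases h2 : π s' = e
    · rw [Finset.card_erase_of_mem (Finset.mem_filter.2 ⟨hs, h2⟩)]
      simp only [move, if_pos h2.symm, if_neg (fun h : e = π t' => h1 h.symm)]
      omega
    · have hnm : s' ∉ S.filter (fun x => π x = e) :=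
        fun h => h2 (Finset.mem_filter.1 h).2
      rw [Finset.erase_eq_of_notMem hnm]
      simp only [move, if_neg (fun h : e = π s' => h2 h.symm),
        if_neg (fun h : e = π t' => h1 h.symm)]
      omega

lemma exists_lt_of_sum_eq {α β : E → ℕ} (h : ∑ e, α e = ∑ e, β e) {s : E} (hs : β s < α s) :
    ∃ t, α t < β t := by
  by_contra hc
  push_neg at hc
  exact absurd h (Nat.ne_of_gt (Finset.sum_lt_sum (fun i _ => hc i) ⟨s, Finset.mem_univ s, hs⟩))

lemma exists_pair (π : E' → E) (a : E → ℕ)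
    (hπ : ∀ s, (Finset.univ.filter (fun x : E' => π x = s)).card = a s)
    (α β : E → ℕ) (hα : ∀ e, α e ≤ a e) (hβ : ∀ e, β e ≤ a e) :
    ∃ S T : Finset E',
      (∀ e, (S.filter (fun x => π x = e)).card = α e) ∧
      (∀ e, (T.filter (fun x => π x = e)).card = β e) ∧
      (∀ e, β e ≤ α e → T.filter (fun x => π x = e) ⊆ S.filter (fun x => π x = e)) := by
  have hchoice : ∀ e : E, ∃ P Q : Finset E', (∀ x ∈ P, π x = e) ∧ (∀ x ∈ Q, π x = e)
      ∧ P.card = α e ∧ Q.card = β e ∧ (β e ≤ α e → Q ⊆ P) := by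
    intro e
    by_cases h : β e ≤ α e
    · obtain ⟨P, hP, hPc⟩ := Finset.exists_subset_card_eq
        (show α e ≤ (Finset.univ.filter (fun x : E' => π x = e)).card by rw [hπ]; exact hα e)
      obtain ⟨Q, hQ, hQc⟩ := Finset.exists_subset_card_eq (show β e ≤ P.card by rw [hPc]; exact h)
      exact ⟨P, Q, fun x hx => (Finset.mem_filter.1 (hP hx)).2,
        fun x hx => (Finset.mem_filter.1 (hP (hQ hx))).2, hPc, hQc, fun _ => hQ⟩
    · obtain ⟨Q, hQ, hQc⟩ := Finset.exists_subset_card_eq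
        (show β e ≤ (Finset.univ.filter (fun x : E' => π x = e)).card by rw [hπ]; exact hβ e)
      obtain ⟨P, hP, hPc⟩ := Finset.exists_subset_card_eq (show α e ≤ Q.card by rw [hQc]; omega)
      exact ⟨P, Q, fun x hx => (Finset.mem_filter.1 (hQ (hP hx))).2,
        fun x hx => (Finset.mem_filter.1 (hQ hx)).2, hPc, hQc, fun h' => absurd h' h⟩
  choose P Q hP hQ hPc hQc hsub using hchoice
  refine ⟨Finset.univ.filter (fun x => x ∈ P (π x)),
    Finset.univ.filter (fun x => x ∈ Q (π x)), ?_, ?_, ?_⟩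
  · intro e; rw [filter_comp_eq π P hP]; exact hPc e
  · intro e; rw [filter_comp_eq π Q hQ]; exact hQc e
  · intro e h; rw [filter_comp_eq π P hP, filter_comp_eq π Q hQ]; exact hsub e h

end helpers

/-- with `π : E' → E` realizing the cage of `ν`, the function `ν` is M-convex
of rank `r` if and only if its multisymmetric lift is a valuated matroid of rank `r` on `E'`. -/
theorem mconvex_iff_multisymmetric_lift_isVMatroid
    {E E' Γ : Type*} [Fintype E] [Fintype E'] [AddCommGroup Γ] [LinearOrder Γ] [IsOrderedAddMonoid Γ]
    (r : ℕ) (ν : (E → ℕ) → WithTop Γ) (a : E → ℕ) (π : E' → E)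
    -- `a` is the cage of `ν`: the componentwise smallest upper bound on the support
    (hcage_ub : ∀ α : E → ℕ, (∑ e, α e) = r → ν α ≠ ⊤ → ∀ s, α s ≤ a s)
    (hcage_min : ∀ s : E, ∀ b : ℕ,
      (∀ α : E → ℕ, (∑ e, α e) = r → ν α ≠ ⊤ → α s ≤ b) → a s ≤ b)
    -- `π` has fibers of cardinality `a s`
    (hπ : ∀ s : E, (Finset.univ.filter (fun x : E' => π x = s)).card = a s) :
    MConvexFn r ν ↔ IsVMatroid r (mlift π ν) := by
  constructor
  · rintro ⟨⟨α0, hα0sum, hα0⟩, hM⟩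
    constructor
    · -- nontriviality of the lift
      obtain ⟨S, T, hSf, -, -⟩ := exists_pair π a hπ α0 α0
        (hcage_ub α0 hα0sum hα0) (hcage_ub α0 hα0sum hα0)
      refine ⟨S, ?_, ?_⟩
      · rw [← sum_fiber_card π S, Finset.sum_congr rfl (fun e _ => hSf e), hα0sum]
      · show ν _ ≠ ⊤
        have : (fun e => (S.filter (fun x => π x = e)).card) = α0 := funext hSf
        rw [this]; exact hα0
    · -- exchange property of the lift
      intro S T hS hT s' hs'S hs'T
      have hαsum : ∑ e, (S.filter (fun x => π x = e)).card = r := by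
        rw [sum_fiber_card]; exact hS
      have hβsum : ∑ e, (T.filter (fun x => π x = e)).card = r := by
        rw [sum_fiber_card]; exact hT
      by_cases hcase : (T.filter (fun x => π x = π s')).card
          < (S.filter (fun x => π x = π s')).card
      · obtain ⟨t, htlt, hineq⟩ := hM _ _ hαsum hβsum (π s') hcase
        have hnsub : ¬ (T.filter (fun x => π x = t) ⊆ S) := by
          intro hsub
          have hsub2 : T.filter (fun x => π x = t) ⊆ S.filter (fun x => π x = t) :=
            fun x hx => Finset.mem_filter.2 ⟨hsub hx, (Finset.mem_filter.1 hx).2⟩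
          exact absurd (Finset.card_le_card hsub2) (by omega)
        obtain ⟨t', ht'f, ht'S⟩ := Finset.not_subset.1 hnsub
        have hπt' : π t' = t := (Finset.mem_filter.1 ht'f).2
        refine ⟨t', (Finset.mem_filter.1 ht'f).1, ht'S, ?_⟩
        have h1 : mlift π ν (insert t' (S.erase s'))
            = ν (move (fun e => (S.filter (fun x => π x = e)).card) (π s') (π t')) := by
          show ν _ = _; rw [fiber_move π S s' t' hs'S ht'S]
        have h2 : mlift π ν (insert s' (T.erase t'))
            = ν (move (fun e => (T.filter (fun x => π x = e)).card) (π t') (π s')) := by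
          show ν _ = _; rw [fiber_move π T t' s' (Finset.mem_filter.1 ht'f).1 hs'T]
        rw [h1, h2, hπt']
        exact hineq
      · -- same-fiber swap
        push_neg at hcase
        have hmem : s' ∈ S.filter (fun x => π x = π s') := Finset.mem_filter.2 ⟨hs'S, rfl⟩
        have hnsub : ¬ (T.filter (fun x => π x = π s') ⊆ S) := by
          intro hsub
          have hsub2 : T.filter (fun x => π x = π s')
              ⊆ (S.filter (fun x => π x = π s')).erase s' := by
            intro x hx
            refine Finset.mem_erase.2 ⟨?_, Finset.mem_filter.2 ⟨hsub hx, (Finset.mem_filter.1 hx).2⟩⟩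
            rintro rfl; exact hs'T (Finset.mem_filter.1 hx).1
          have hle := Finset.card_le_card hsub2
          rw [Finset.card_erase_of_mem hmem] at hle
          have h1 : 1 ≤ (S.filter (fun x => π x = π s')).card :=
            Finset.card_pos.2 ⟨s', hmem⟩
          omega
        obtain ⟨t', ht'f, ht'S⟩ := Finset.not_subset.1 hnsub
        have hπt' : π t' = π s' := (Finset.mem_filter.1 ht'f).2
        have ht'T : t' ∈ T := (Finset.mem_filter.1 ht'f).1
        refine ⟨t', ht'T, ht'S, ?_⟩
        have hS1 : 1 ≤ (S.filter (fun x => π x = π s')).card :=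
          Finset.card_pos.2 ⟨s', hmem⟩
        have hT1 : 1 ≤ (T.filter (fun x => π x = π s')).card :=
          Finset.card_pos.2 ⟨t', ht'f⟩
        have h1 : mlift π ν (insert t' (S.erase s')) = mlift π ν S := by
          show ν _ = ν _
          rw [fiber_move π S s' t' hs'S ht'S, hπt']
          congr 1
          funext x
          simp only [move]
          by_cases hx : x = π s'
          · subst hx; rw [if_pos rfl]; omega
          · simp only [if_neg hx]; omega
        have h2 : mlift π ν (insert s' (T.erase t')) = mlift π ν T := by
          show ν _ = ν _
          rw [fiber_move π T t' s' ht'T hs'T, hπt']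
          congr 1
          funext x
          simp only [move]
          by_cases hx : x = π s'
          · subst hx; rw [if_pos rfl]; omega
          · simp only [if_neg hx]; omega
        rw [h1, h2]
  · rintro ⟨⟨B, hBcard, hB⟩, hexch⟩
    constructor
    · exact ⟨fun e => (B.filter (fun x => π x = e)).card,
        by rw [sum_fiber_card]; exact hBcard, hB⟩
    · intro α β hαs hβs s hslt
      obtain ⟨t0, ht0⟩ := exists_lt_of_sum_eq (hαs.trans hβs.symm) hslt
      by_cases hfin : ν α = ⊤ ∨ ν β = ⊤
      · refine ⟨t0, ht0, ?_⟩
        rcases hfin with h | h <;> simp [h]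
      · push_neg at hfin
        obtain ⟨hνα, hνβ⟩ := hfin
        obtain ⟨S, T, hSf, hTf, hnest⟩ := exists_pair π a hπ α β
          (hcage_ub α hαs hνα) (hcage_ub β hβs hνβ)
        have hScard : S.card = r := by
          rw [← sum_fiber_card π S, Finset.sum_congr rfl (fun e _ => hSf e), hαs]
        have hTcard : T.card = r := by
          rw [← sum_fiber_card π T, Finset.sum_congr rfl (fun e _ => hTf e), hβs]
        have hnsub : ¬ (S.filter (fun x => π x = s) ⊆ T.filter (fun x => π x = s)) := by
          intro hsub
          have := Finset.card_le_card hsub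
          rw [hSf, hTf] at this
          omega
        obtain ⟨s', hs'f, hs'nf⟩ := Finset.not_subset.1 hnsub
        have hπs' : π s' = s := (Finset.mem_filter.1 hs'f).2
        have hs'S : s' ∈ S := (Finset.mem_filter.1 hs'f).1
        have hs'T : s' ∉ T := fun h => hs'nf (Finset.mem_filter.2 ⟨h, hπs'⟩)
        obtain ⟨t', ht'T, ht'S, hle⟩ := hexch S T hScard hTcard s' hs'S hs'T
        have ht'f : t' ∈ T.filter (fun x => π x = π t') := Finset.mem_filter.2 ⟨ht'T, rfl⟩
        have htlt : α (π t') < β (π t') := by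
          by_contra hc
          push_neg at hc
          exact ht'S (Finset.mem_filter.1 (hnest (π t') hc ht'f)).1
        refine ⟨π t', htlt, ?_⟩
        have eS : mlift π ν S = ν α := by
          show ν _ = _; congr 1; funext e; exact hSf e
        have eT : mlift π ν T = ν β := by
          show ν _ = _; congr 1; funext e; exact hTf e
        have e1 : mlift π ν (insert t' (S.erase s')) = ν (move α s (π t')) := by
          show ν _ = _
          rw [fiber_move π S s' t' hs'S ht'S, hπs']
          congr 1
          funext x
          simp only [move, hSf x]
        have e2 : mlift π ν (insert s' (T.erase t')) = ν (move β (π t') s) := by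
          show ν _ = _
          rw [fiber_move π T t' s' ht'T hs'T, hπs']
          congr 1
          funext x
          simp only [move, hTf x]
        rw [e1, e2, eS, eT] at hle
        exact hle
end
end

section
/- Let ν_P : Δ_E^r → Γ̄ be an M-convex function of rank r, and define its extension ν̃_P on Δ_E^{≤r} = {α ∈ Z_{≥0}^E : |α| ≤ r} by ν̃_P(α) = min{ν_P(β) : β ∈ Δ_E^r, α ≤ β componentwise}. Let Q be a finite set disjoint from E. Then the map ν_P̃ : Δ_{Q⊔E}^r → Γ̄ given by ν_P̃((α_Q, α)) = ν̃_P(α), for α ∈ Δ_E^{≤r} and α_Q ∈ Δ_Q^{r−|α|}, is an M-convex function of rank r on Q ⊔ E. -/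
open Finset
open scoped Classical

noncomputable section
set_option linter.unusedSectionVars false

/-- The `k`-th discrete simplex `Δ_E^k` as a finset of functions `E → ℕ`. -/
def Δfin (E : Type*) [Fintype E] (k : ℕ) : Finset (E → ℕ) :=
  ((Finset.univ : Finset (E → Fin (k + 1))).image (fun f e => (f e : ℕ))).filter
    (fun α => ∑ e, α e = k)

/-- The extension `ν̃(α) = min {ν β : β ∈ Δ_E^r, α ≤ β componentwise}`. -/
def extP {E Γ : Type*} [Fintype E] [AddCommGroup Γ] [LinearOrder Γ] [IsOrderedAddMonoid Γ]
    (r : ℕ) (ν : (E → ℕ) → WithTop Γ) (α : E → ℕ) : WithTop Γ :=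
  ((Δfin E r).filter (fun β => ∀ e, α e ≤ β e)).inf ν

namespace GenExt

variable {E Γ : Type*} [Fintype E] [AddCommGroup Γ] [LinearOrder Γ] [IsOrderedAddMonoid Γ]

/-- add one unit at `t` -/
def vadd (α : E → ℕ) (t : E) : E → ℕ := fun e => α e + if e = t then 1 else 0
/-- remove one unit at `s` (truncated) -/
def vsub (α : E → ℕ) (s : E) : E → ℕ := fun e => α e - if e = s then 1 else 0

lemma move_eq (α : E → ℕ) (s t : E) : move α s t = vadd (vsub α s) t := rfl

lemma sum_vadd (α : E → ℕ) (t : E) : (∑ e, vadd α t e) = (∑ e, α e) + 1 := by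
  simp [vadd, Finset.sum_add_distrib, Finset.sum_ite_eq']

lemma sum_vsub {α : E → ℕ} {s : E} (h : 1 ≤ α s) : (∑ e, vsub α s e) = (∑ e, α e) - 1 := by
  have h2 : (∑ e, (vsub α s e + if e = s then 1 else 0)) = ∑ e, α e := by
    refine Finset.sum_congr rfl (fun e _ => ?_)
    dsimp [vsub]; split_ifs with h' <;> subst_vars <;> omega
  rw [Finset.sum_add_distrib] at h2
  simp [Finset.sum_ite_eq'] at h2
  omega

lemma sum_move {α : E → ℕ} {s : E} (t : E) (h : 1 ≤ α s) :
    (∑ e, move α s t e) = ∑ e, α e := by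
  rw [move_eq, sum_vadd, sum_vsub h]
  have h1 : α s ≤ ∑ e, α e :=
    Finset.single_le_sum (fun i _ => Nat.zero_le _) (Finset.mem_univ s)
  omega

lemma mem_Δfin {k : ℕ} {α : E → ℕ} : α ∈ Δfin E k ↔ (∑ e, α e) = k := by
  constructor
  · intro h; exact (Finset.mem_filter.1 h).2
  · intro h
    refine Finset.mem_filter.2 ⟨?_, h⟩
    refine Finset.mem_image.2 ⟨fun e => ⟨α e, ?_⟩, Finset.mem_univ _, rfl⟩
    have h1 : α e ≤ ∑ e, α e :=
      Finset.single_le_sum (fun i _ => Nat.zero_le _) (Finset.mem_univ e)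
    omega

variable {r : ℕ} {ν : (E → ℕ) → WithTop Γ}

lemma extP_le {α w : E → ℕ} (hw : (∑ e, w e) = r) (h : ∀ e, α e ≤ w e) :
    extP r ν α ≤ ν w :=
  Finset.inf_le (Finset.mem_filter.2 ⟨mem_Δfin.2 hw, h⟩)

lemma extP_mono {α α' : E → ℕ} (h : ∀ e, α e ≤ α' e) : extP r ν α ≤ extP r ν α' := by
  apply Finset.inf_mono
  intro w hw
  rcases Finset.mem_filter.1 hw with ⟨h1, h2⟩
  exact Finset.mem_filter.2 ⟨h1, fun e => le_trans (h e) (h2 e)⟩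

lemma extP_min {α : E → ℕ} (h : extP r ν α ≠ ⊤) :
    ∃ w, (∑ e, w e) = r ∧ (∀ e, α e ≤ w e) ∧ ν w = extP r ν α := by
  have hne : (((Δfin E r).filter (fun β => ∀ e, α e ≤ β e))).Nonempty := by
    rw [Finset.nonempty_iff_ne_empty]
    intro he
    rw [extP, he, Finset.inf_empty] at h
    exact h rfl
  obtain ⟨w, hwmem, hweq⟩ := Finset.exists_mem_eq_inf _ hne ν
  rcases Finset.mem_filter.1 hwmem with ⟨h1, h2⟩
  exact ⟨w, mem_Δfin.1 h1, h2, hweq.symm⟩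

lemma ne_top_l {x y c : WithTop Γ} (h : x + y ≤ c) (hc : c ≠ ⊤) : x ≠ ⊤ := by
  intro hx; rw [hx, top_add] at h; exact hc (top_le_iff.1 h)

lemma ne_top_r {x y c : WithTop Γ} (h : x + y ≤ c) (hc : c ≠ ⊤) : y ≠ ⊤ := by
  intro hy; rw [hy, add_top] at h; exact hc (top_le_iff.1 h)

lemma wt_cancel_right {x y c : WithTop Γ} (hc : c ≠ ⊤) (h : x + c ≤ y + c) : x ≤ y :=
  (WithTop.add_le_add_iff_right hc).1 h

lemma wt_cancel_left {x y c : WithTop Γ} (hc : c ≠ ⊤) (h : c + x ≤ c + y) : x ≤ y :=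
  (WithTop.add_le_add_iff_left hc).1 h

section Lemmas

variable {E Γ : Type*} [Fintype E] [AddCommGroup Γ] [LinearOrder Γ] [IsOrderedAddMonoid Γ]
variable {r : ℕ} {ν : (E → ℕ) → WithTop Γ}

/-- key exchange lemma, case `|α| < |β|`:
`ν̃(α+e_t) + ν̃(β−e_t) ≤ ν̃(α) + ν̃(β)` for some `t` with `α t < β t`. -/
lemma Lup_base (hP : MConvexFn r ν) {α β : E → ℕ} (hab : (∑ e, α e) < (∑ e, β e))
    (hb : (∑ e, β e) = r) :
    ∃ t, α t < β t ∧
      extP r ν (vadd α t) + extP r ν (vsub β t) ≤ extP r ν α + extP r ν β := by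
  have hT : ∃ t, α t < β t := by
    by_contra h; push_neg at h
    exact absurd (Finset.sum_le_sum (fun e _ => h e)) (not_le.2 hab)
  by_cases htop : extP r ν α = ⊤ ∨ extP r ν β = ⊤
  · obtain ⟨t, ht⟩ := hT
    refine ⟨t, ht, ?_⟩
    rcases htop with h | h <;> rw [h] <;> simp
  push_neg at htop
  obtain ⟨w, hwr, hαw, hwv⟩ := extP_min htop.1
  obtain ⟨z, hzr, hβz, hzv⟩ := extP_min htop.2
  have hzβ : z = β := by
    funext e
    by_contra hne
    have h1 : β e < z e := lt_of_le_of_ne (hβz e) (Ne.symm hne)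
    have h2 : (∑ e, β e) < ∑ e, z e :=
      Finset.sum_lt_sum (fun i _ => hβz i) ⟨e, Finset.mem_univ e, h1⟩
    omega
  rw [hzβ] at hzv
  by_cases hgood : ∃ t, α t < β t ∧ α t < w t
  · obtain ⟨t, ht1, ht2⟩ := hgood
    refine ⟨t, ht1, ?_⟩
    have e1 : extP r ν (vadd α t) ≤ ν w := extP_le hwr (fun e => by
      have h1 := hαw e
      dsimp [vadd]; split_ifs with h <;> subst_vars <;> omega)
    have e2 : extP r ν (vsub β t) ≤ extP r ν β := extP_mono (fun e => Nat.sub_le _ _)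
    rw [hwv] at e1
    exact add_le_add e1 e2
  · push_neg at hgood
    have hs : ∃ s, α s < w s := by
      by_contra h; push_neg at h
      have h2 : (∑ e, w e) ≤ ∑ e, α e := Finset.sum_le_sum (fun e _ => h e)
      omega
    obtain ⟨s, hsw⟩ := hs
    have hsT : β s ≤ α s := by
      by_contra h; push_neg at h; exact absurd hsw (not_lt.2 (hgood s h))
    obtain ⟨t, htw, hex⟩ := hP.2 w β hwr hb s (lt_of_le_of_lt hsT hsw)
    have htT : α t < β t := lt_of_le_of_lt (hαw t) htw
    refine ⟨t, htT, ?_⟩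
    have hws : 1 ≤ w s := by omega
    have e1 : extP r ν (vadd α t) ≤ ν (move w s t) := by
      refine extP_le (by rw [sum_move t hws]; exact hwr) (fun e => ?_)
      have h1 := hαw e
      dsimp [vadd, move]; split_ifs <;> subst_vars <;> omega
    have e2 : extP r ν (vsub β t) ≤ ν (move β t s) := by
      refine extP_le (by rw [sum_move s (show 1 ≤ β t by omega)]; exact hb) (fun e => ?_)
      dsimp [vsub, move]; split_ifs <;> subst_vars <;> omega
    calc extP r ν (vadd α t) + extP r ν (vsub β t)
        ≤ ν (move w s t) + ν (move β t s) := add_le_add e1 e2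
      _ ≤ ν w + ν β := hex
      _ = extP r ν α + extP r ν β := by rw [hwv, hzv]

lemma Lup_aux (hP : MConvexFn r ν) :
    ∀ n (α β : E → ℕ), r - (∑ e, β e) ≤ n → (∑ e, α e) < (∑ e, β e) → (∑ e, β e) ≤ r →
    ∃ t, α t < β t ∧
      extP r ν (vadd α t) + extP r ν (vsub β t) ≤ extP r ν α + extP r ν β := by
  intro n
  induction n with
  | zero =>
    intro α β hn hab hbr
    exact Lup_base hP hab (by omega)
  | succ n ih =>
    intro α β hn hab hbr
    by_cases hbrr : (∑ e, β e) = r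
    · exact Lup_base hP hab hbrr
    have hbr' : (∑ e, β e) < r := lt_of_le_of_ne hbr hbrr
    have hT : ∃ t, α t < β t := by
      by_contra h; push_neg at h
      exact absurd (Finset.sum_le_sum (fun e _ => h e)) (not_le.2 hab)
    by_cases htop : extP r ν α = ⊤ ∨ extP r ν β = ⊤
    · obtain ⟨t, ht⟩ := hT
      refine ⟨t, ht, ?_⟩
      rcases htop with h | h <;> rw [h] <;> simp
    push_neg at htop
    obtain ⟨z, hzr, hβz, hzv⟩ := extP_min htop.2
    have hf : ∃ f, β f < z f := by
      by_contra h; push_neg at h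
      have h2 : (∑ e, z e) ≤ ∑ e, β e := Finset.sum_le_sum (fun e _ => h e)
      omega
    obtain ⟨f, hf⟩ := hf
    have hβ1 : extP r ν (vadd β f) = extP r ν β := by
      refine le_antisymm ?_ (extP_mono (fun e => Nat.le_add_right _ _))
      rw [← hzv]
      refine extP_le hzr (fun e => ?_)
      have h1 := hβz e
      dsimp [vadd]; split_ifs with h <;> subst_vars <;> omega
    obtain ⟨t₁, ht₁, hin1⟩ := ih α (vadd β f)
      (by rw [sum_vadd]; omega) (by rw [sum_vadd]; omega) (by rw [sum_vadd]; omega)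
    by_cases ht₁T : α t₁ < β t₁
    · refine ⟨t₁, ht₁T, ?_⟩
      have m2 : extP r ν (vsub β t₁) ≤ extP r ν (vsub (vadd β f) t₁) :=
        extP_mono (fun e => by dsimp [vsub, vadd]; split_ifs <;> omega)
      calc extP r ν (vadd α t₁) + extP r ν (vsub β t₁)
          ≤ extP r ν (vadd α t₁) + extP r ν (vsub (vadd β f) t₁) :=
            add_le_add le_rfl m2
        _ ≤ extP r ν α + extP r ν (vadd β f) := hin1
        _ = extP r ν α + extP r ν β := by rw [hβ1]
    · have htf : t₁ = f ∧ α f = β f := by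
        have h1 : α t₁ < vadd β f t₁ := ht₁
        dsimp [vadd] at h1; split_ifs at h1 with h2
        · subst h2; exact ⟨rfl, by omega⟩
        · exact absurd h1 ht₁T
      obtain ⟨hteq, hαβf⟩ := htf
      subst hteq
      have hvv : vsub (vadd β t₁) t₁ = β := by
        funext e; dsimp [vsub, vadd]; split_ifs <;> omega
      rw [hvv, hβ1] at hin1
      have hraise : extP r ν (vadd α t₁) ≤ extP r ν α := wt_cancel_right htop.2 hin1
      obtain ⟨t, ht, hin2⟩ := ih (vadd α t₁) (vadd β t₁)
        (by rw [sum_vadd]; omega) (by rw [sum_vadd, sum_vadd]; omega)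
        (by rw [sum_vadd]; omega)
      have htne : t ≠ t₁ := by
        intro h; subst h
        dsimp [vadd] at ht; simp at ht; omega
      have htT : α t < β t := by
        have h1 : vadd α t₁ t < vadd β t₁ t := ht
        dsimp [vadd] at h1
        rw [if_neg htne] at h1; omega
      refine ⟨t, htT, ?_⟩
      have m1 : extP r ν (vadd α t) ≤ extP r ν (vadd (vadd α t₁) t) :=
        extP_mono (fun e => by dsimp [vadd]; split_ifs <;> omega)
      have m2 : extP r ν (vsub β t) ≤ extP r ν (vsub (vadd β t₁) t) :=
        extP_mono (fun e => by dsimp [vsub, vadd]; split_ifs <;> omega)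
      calc extP r ν (vadd α t) + extP r ν (vsub β t)
          ≤ extP r ν (vadd (vadd α t₁) t) + extP r ν (vsub (vadd β t₁) t) :=
            add_le_add m1 m2
        _ ≤ extP r ν (vadd α t₁) + extP r ν (vadd β t₁) := hin2
        _ ≤ extP r ν α + extP r ν β := by
            rw [hβ1]; exact add_le_add_left hraise _

lemma Lup (hP : MConvexFn r ν) {α β : E → ℕ}
    (hab : (∑ e, α e) < (∑ e, β e)) (hbr : (∑ e, β e) ≤ r) :
    ∃ t, α t < β t ∧
      extP r ν (vadd α t) + extP r ν (vsub β t) ≤ extP r ν α + extP r ν β :=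
  Lup_aux hP (r - (∑ e, β e)) α β le_rfl hab hbr

/-- Exchange at `s₀` when `|α| = |β| = r`. -/
lemma Leq_base (hP : MConvexFn r ν) {α β : E → ℕ} {s₀ : E}
    (hab : (∑ e, α e) ≤ (∑ e, β e)) (hb : (∑ e, β e) = r) (hs : β s₀ < α s₀) :
    ∃ t, α t < β t ∧
      extP r ν (move α s₀ t) + extP r ν (move β t s₀) ≤ extP r ν α + extP r ν β := by
  have hT : ∃ t, α t < β t := by
    by_contra h; push_neg at h
    have h2 : (∑ e, β e) < ∑ e, α e :=
      Finset.sum_lt_sum (fun i _ => h i) ⟨s₀, Finset.mem_univ s₀, hs⟩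
    omega
  by_cases htop : extP r ν α = ⊤ ∨ extP r ν β = ⊤
  · obtain ⟨t, ht⟩ := hT
    refine ⟨t, ht, ?_⟩
    rcases htop with h | h <;> rw [h] <;> simp
  push_neg at htop
  obtain ⟨w, hwr, hαw, hwv⟩ := extP_min htop.1
  obtain ⟨z, hzr, hβz, hzv⟩ := extP_min htop.2
  have hzβ : z = β := by
    funext e
    by_contra hne
    have h1 : β e < z e := lt_of_le_of_ne (hβz e) (Ne.symm hne)
    have h2 : (∑ e, β e) < ∑ e, z e :=
      Finset.sum_lt_sum (fun i _ => hβz i) ⟨e, Finset.mem_univ e, h1⟩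
    omega
  rw [hzβ] at hzv
  have hws : β s₀ < w s₀ := lt_of_lt_of_le hs (hαw s₀)
  obtain ⟨t, htw, hex⟩ := hP.2 w β hwr hb s₀ hws
  have htT : α t < β t := lt_of_le_of_lt (hαw t) htw
  refine ⟨t, htT, ?_⟩
  have hw1 : 1 ≤ w s₀ := by omega
  have e1 : extP r ν (move α s₀ t) ≤ ν (move w s₀ t) := by
    refine extP_le (by rw [sum_move t hw1]; exact hwr) (fun e => ?_)
    have h1 := hαw e
    dsimp [move]; split_ifs <;> subst_vars <;> omega
  have e2 : extP r ν (move β t s₀) ≤ ν (move β t s₀) :=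
    extP_le (by rw [sum_move s₀ (show 1 ≤ β t by omega)]; exact hb) (fun e => le_rfl)
  calc extP r ν (move α s₀ t) + extP r ν (move β t s₀)
      ≤ ν (move w s₀ t) + ν (move β t s₀) := add_le_add e1 e2
    _ ≤ ν w + ν β := hex
    _ = extP r ν α + extP r ν β := by rw [hwv, hzv]

/-- Exchange at `s₀` when `|α| ≤ |β| ≤ r`. -/
lemma Leq_aux (hP : MConvexFn r ν) :
    ∀ n (α β : E → ℕ) (s₀ : E),
      (r - (∑ e, β e)) * (r + 1) + ((∑ e, β e) - (∑ e, α e)) ≤ n →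
      (∑ e, α e) ≤ (∑ e, β e) → (∑ e, β e) ≤ r → β s₀ < α s₀ →
    ∃ t, α t < β t ∧
      extP r ν (move α s₀ t) + extP r ν (move β t s₀) ≤ extP r ν α + extP r ν β := by
  intro n
  induction n with
  | zero =>
    intro α β s₀ hn hab hbr hs
    have hb : (∑ e, β e) = r := by
      by_contra h
      have h2 : 1 ≤ r - (∑ e, β e) := by omega
      have h3 : 1 * (r + 1) ≤ (r - (∑ e, β e)) * (r + 1) := Nat.mul_le_mul_right _ h2
      obtain ⟨P, hPd⟩ : ∃ P, (r - (∑ e, β e)) * (r + 1) = P := ⟨_, rfl⟩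
      rw [hPd] at h3 hn
      omega
    exact Leq_base hP hab hb hs
  | succ n ih =>
    intro α β s₀ hn hab hbr hs
    by_cases hb : (∑ e, β e) = r
    · exact Leq_base hP hab hb hs
    have hbr' : (∑ e, β e) < r := lt_of_le_of_ne hbr hb
    have hT : ∃ t, α t < β t := by
      by_contra h; push_neg at h
      have h2 : (∑ e, β e) < ∑ e, α e :=
        Finset.sum_lt_sum (fun i _ => h i) ⟨s₀, Finset.mem_univ s₀, hs⟩
      omega
    by_cases htop : extP r ν α = ⊤ ∨ extP r ν β = ⊤
    · obtain ⟨t, ht⟩ := hT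
      refine ⟨t, ht, ?_⟩
      rcases htop with h | h <;> rw [h] <;> simp
    push_neg at htop
    obtain ⟨w, hwr, hαw, hwv⟩ := extP_min htop.1
    obtain ⟨z, hzr, hβz, hzv⟩ := extP_min htop.2
    by_cases hcase : (∑ e, α e) < (∑ e, β e)
    · -- raise α using a surplus coordinate of w
      have hg : ∃ g, α g < w g := by
        by_contra h; push_neg at h
        have h2 : (∑ e, w e) ≤ ∑ e, α e := Finset.sum_le_sum (fun e _ => h e)
        omega
      obtain ⟨g, hgw⟩ := hg
      have hα1 : extP r ν (vadd α g) = extP r ν α := by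
        refine le_antisymm ?_ (extP_mono (fun e => Nat.le_add_right _ _))
        rw [← hwv]
        refine extP_le hwr (fun e => ?_)
        have h1 := hαw e
        dsimp [vadd]; split_ifs <;> subst_vars <;> omega
      obtain ⟨t, ht, hin⟩ := ih (vadd α g) β s₀
        (by
          rw [sum_vadd]
          obtain ⟨P, hPd⟩ : ∃ P, (r - (∑ e, β e)) * (r + 1) = P := ⟨_, rfl⟩
          rw [hPd] at hn ⊢
          omega)
        (by rw [sum_vadd]; omega) hbr
        (by dsimp [vadd]; split_ifs <;> omega)
      have htT : α t < β t := lt_of_le_of_lt (Nat.le_add_right _ _) ht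
      refine ⟨t, htT, ?_⟩
      have m1 : extP r ν (move α s₀ t) ≤ extP r ν (move (vadd α g) s₀ t) :=
        extP_mono (fun e => by
          dsimp [move, vadd]; split_ifs <;> omega)
      calc extP r ν (move α s₀ t) + extP r ν (move β t s₀)
          ≤ extP r ν (move (vadd α g) s₀ t) + extP r ν (move β t s₀) :=
            add_le_add m1 le_rfl
        _ ≤ extP r ν (vadd α g) + extP r ν β := hin
        _ = extP r ν α + extP r ν β := by rw [hα1]
    · have hsab : (∑ e, α e) = (∑ e, β e) := le_antisymm hab (not_lt.1 hcase)
      by_cases hA : ∃ z' fa, ((∑ e, z' e) = r ∧ (∀ e, β e ≤ z' e) ∧ ν z' = extP r ν β) ∧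
          β fa < z' fa ∧ (α fa < β fa ∨ (β fa < α fa ∧ (fa ≠ s₀ ∨ β s₀ + 1 < α s₀)))
      · -- case 4a
        obtain ⟨z', fa, ⟨hz'r, hβz', hz'v⟩, hfa, hdisj⟩ := hA
        have hβ1 : extP r ν (vadd β fa) = extP r ν β := by
          refine le_antisymm ?_ (extP_mono (fun e => Nat.le_add_right _ _))
          rw [← hz'v]
          refine extP_le hz'r (fun e => ?_)
          have h1 := hβz' e
          dsimp [vadd]; split_ifs <;> subst_vars <;> omega
        have hs' : vadd β fa s₀ < α s₀ := by
          dsimp [vadd]; split_ifs with h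
          · subst h
            rcases hdisj with h1 | ⟨h1, h2⟩
            · omega
            · rcases h2 with h2 | h2
              · exact absurd rfl h2
              · omega
          · omega
        obtain ⟨t₁, ht₁, hin⟩ := ih α (vadd β fa) s₀
          (by
            rw [sum_vadd]
            have hstep : (r - (∑ e, β e)) * (r + 1)
                = (r - ((∑ e, β e) + 1)) * (r + 1) + (r + 1) := by
              have h2 : r - (∑ e, β e) = (r - ((∑ e, β e) + 1)) + 1 := by omega
              rw [h2, add_mul, one_mul]
            rw [hstep] at hn
            obtain ⟨P, hPd⟩ : ∃ P, (r - ((∑ e, β e) + 1)) * (r + 1) = P := ⟨_, rfl⟩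
            rw [hPd] at hn ⊢
            omega)
          (by rw [sum_vadd]; omega) (by rw [sum_vadd]; omega) hs'
        have ht₁T : α t₁ < β t₁ := by
          have h1 : α t₁ < vadd β fa t₁ := ht₁
          dsimp [vadd] at h1; split_ifs at h1 with h2
          · subst h2
            rcases hdisj with h3 | ⟨h3, _⟩ <;> omega
          · exact h1
        refine ⟨t₁, ht₁T, ?_⟩
        have m2 : extP r ν (move β t₁ s₀) ≤ extP r ν (move (vadd β fa) t₁ s₀) :=
          extP_mono (fun e => by dsimp [move, vadd]; split_ifs <;> omega)
        calc extP r ν (move α s₀ t₁) + extP r ν (move β t₁ s₀)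
            ≤ extP r ν (move α s₀ t₁) + extP r ν (move (vadd β fa) t₁ s₀) :=
              add_le_add le_rfl m2
          _ ≤ extP r ν α + extP r ν (vadd β fa) := hin
          _ = extP r ν α + extP r ν β := by rw [hβ1]
      by_cases hB : ∃ z' fb, ((∑ e, z' e) = r ∧ (∀ e, β e ≤ z' e) ∧ ν z' = extP r ν β) ∧
          β fb < z' fb ∧ α fb = β fb
      · -- case 4b
        obtain ⟨z', fb, ⟨hz'r, hβz', hz'v⟩, hfb, heq⟩ := hB
        have hfs : fb ≠ s₀ := by intro h; subst h; omega
        have hβ1 : extP r ν (vadd β fb) = extP r ν β := by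
          refine le_antisymm ?_ (extP_mono (fun e => Nat.le_add_right _ _))
          rw [← hz'v]
          refine extP_le hz'r (fun e => ?_)
          have h1 := hβz' e
          dsimp [vadd]; split_ifs <;> subst_vars <;> omega
        have hs' : vadd β fb s₀ < α s₀ := by
          dsimp [vadd]; split_ifs with h
          · exact absurd h.symm hfs
          · omega
        obtain ⟨t₁, ht₁, hin⟩ := ih α (vadd β fb) s₀
          (by
            rw [sum_vadd]
            have hstep : (r - (∑ e, β e)) * (r + 1)
                = (r - ((∑ e, β e) + 1)) * (r + 1) + (r + 1) := by
              have h2 : r - (∑ e, β e) = (r - ((∑ e, β e) + 1)) + 1 := by omega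
              rw [h2, add_mul, one_mul]
            rw [hstep] at hn
            obtain ⟨P, hPd⟩ : ∃ P, (r - ((∑ e, β e) + 1)) * (r + 1) = P := ⟨_, rfl⟩
            rw [hPd] at hn ⊢
            omega)
          (by rw [sum_vadd]; omega) (by rw [sum_vadd]; omega) hs'
        by_cases ht₁T : α t₁ < β t₁
        · refine ⟨t₁, ht₁T, ?_⟩
          have m2 : extP r ν (move β t₁ s₀) ≤ extP r ν (move (vadd β fb) t₁ s₀) :=
            extP_mono (fun e => by dsimp [move, vadd]; split_ifs <;> omega)
          calc extP r ν (move α s₀ t₁) + extP r ν (move β t₁ s₀)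
              ≤ extP r ν (move α s₀ t₁) + extP r ν (move (vadd β fb) t₁ s₀) :=
                add_le_add le_rfl m2
            _ ≤ extP r ν α + extP r ν (vadd β fb) := hin
            _ = extP r ν α + extP r ν β := by rw [hβ1]
        · have ht₁f : t₁ = fb := by
            have h1 : α t₁ < vadd β fb t₁ := ht₁
            dsimp [vadd] at h1; split_ifs at h1 with h2
            · exact h2
            · exact absurd h1 ht₁T
          subst ht₁f
          have hmv : move (vadd β t₁) t₁ s₀ = vadd β s₀ := by
            funext e; dsimp [move, vadd]; split_ifs <;> omega
          rw [hmv, hβ1] at hin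
          have hα1 : 1 ≤ α s₀ := by omega
          obtain ⟨t', ht', hin2⟩ := Lup hP (α := move α s₀ t₁) (β := vadd β s₀)
            (by rw [sum_move _ hα1, sum_vadd]; omega) (by rw [sum_vadd]; omega)
          have hin3 : extP r ν (vadd (move α s₀ t₁) t') + extP r ν (vsub (vadd β s₀) t')
              ≤ extP r ν α + extP r ν β := le_trans hin2 hin
          by_cases ht's : t' = s₀
          · rw [ht's] at hin3
            have hc1 : vadd (move α s₀ t₁) s₀ = vadd α t₁ := by
              funext e; dsimp [vadd, move]; split_ifs <;> subst_vars <;> omega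
            have hc2 : vsub (vadd β s₀) s₀ = β := by
              funext e; dsimp [vsub, vadd]; split_ifs <;> omega
            rw [hc1, hc2] at hin3
            have hraise : extP r ν (vadd α t₁) ≤ extP r ν α := wt_cancel_right htop.2 hin3
            have hs'' : vadd β t₁ s₀ < vadd α t₁ s₀ := by
              dsimp [vadd]; split_ifs with h
              · exact absurd h.symm hfs
              · omega
            obtain ⟨t, ht, hin4⟩ := ih (vadd α t₁) (vadd β t₁) s₀
              (by
                rw [sum_vadd, sum_vadd]
                have hstep : (r - (∑ e, β e)) * (r + 1)
                    = (r - ((∑ e, β e) + 1)) * (r + 1) + (r + 1) := by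
                  have h2 : r - (∑ e, β e) = (r - ((∑ e, β e) + 1)) + 1 := by omega
                  rw [h2, add_mul, one_mul]
                rw [hstep] at hn
                obtain ⟨P, hPd⟩ : ∃ P, (r - ((∑ e, β e) + 1)) * (r + 1) = P := ⟨_, rfl⟩
                rw [hPd] at hn ⊢
                omega)
              (by rw [sum_vadd, sum_vadd]; omega) (by rw [sum_vadd]; omega) hs''
            have htne : t ≠ t₁ := by
              intro h; subst h
              have h1 : vadd α t t < vadd β t t := ht
              dsimp [vadd] at h1; simp at h1; omega
            have htT : α t < β t := by
              have h1 : vadd α t₁ t < vadd β t₁ t := ht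
              dsimp [vadd] at h1; rw [if_neg htne] at h1; omega
            refine ⟨t, htT, ?_⟩
            have m1 : extP r ν (move α s₀ t) ≤ extP r ν (move (vadd α t₁) s₀ t) :=
              extP_mono (fun e => by dsimp [move, vadd]; split_ifs <;> omega)
            have m2 : extP r ν (move β t s₀) ≤ extP r ν (move (vadd β t₁) t s₀) :=
              extP_mono (fun e => by dsimp [move, vadd]; split_ifs <;> omega)
            calc extP r ν (move α s₀ t) + extP r ν (move β t s₀)
                ≤ extP r ν (move (vadd α t₁) s₀ t) + extP r ν (move (vadd β t₁) t s₀) :=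
                  add_le_add m1 m2
              _ ≤ extP r ν (vadd α t₁) + extP r ν (vadd β t₁) := hin4
              _ ≤ extP r ν α + extP r ν β := by
                  rw [hβ1]; exact add_le_add_left hraise _
          · -- t' ∉ {s₀, fb}
            have ht'f : t' ≠ t₁ := by
              intro h
              have h1 : move α s₀ t₁ t' < vadd β s₀ t' := ht'
              rw [h] at h1 ht's
              simp only [move, vadd, if_neg ht's, if_pos rfl] at h1
              omega
            have ht'T : α t' < β t' := by
              have h1 : move α s₀ t₁ t' < vadd β s₀ t' := ht'
              simp only [move, vadd, if_neg ht's, if_neg ht'f] at h1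
              omega
            refine ⟨t', ht'T, ?_⟩
            have hb1 : 1 ≤ β t' := by omega
            have m1 : extP r ν (move α s₀ t') ≤ extP r ν (vadd (move α s₀ t₁) t') :=
              extP_mono (fun e => by dsimp [move, vadd]; split_ifs <;> omega)
            have m2eq : move β t' s₀ = vsub (vadd β s₀) t' := by
              funext e; dsimp [move, vadd, vsub]; split_ifs <;> subst_vars <;> omega
            calc extP r ν (move α s₀ t') + extP r ν (move β t' s₀)
                = extP r ν (move α s₀ t') + extP r ν (vsub (vadd β s₀) t') := by rw [m2eq]
              _ ≤ extP r ν (vadd (move α s₀ t₁) t') + extP r ν (vsub (vadd β s₀) t') :=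
                  add_le_add m1 le_rfl
              _ ≤ extP r ν α + extP r ν β := hin3
      · -- case C
        have hzmin : (∑ e, z e) = r ∧ (∀ e, β e ≤ z e) ∧ ν z = extP r ν β := ⟨hzr, hβz, hzv⟩
        have key : ∀ fa, β fa < z fa → fa = s₀ ∧ α s₀ = β s₀ + 1 := by
          intro fa hfa
          rcases lt_trichotomy (α fa) (β fa) with h | h | h
          · exact absurd ⟨z, fa, hzmin, hfa, Or.inl h⟩ hA
          · exact absurd ⟨z, fa, hzmin, hfa, h⟩ hB
          · by_cases hfa0 : fa = s₀
            · subst hfa0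
              refine ⟨rfl, ?_⟩
              by_contra hne
              have h2 : β fa + 1 < α fa := by omega
              exact absurd ⟨z, fa, hzmin, hfa, Or.inr ⟨h, Or.inr h2⟩⟩ hA
            · exact absurd ⟨z, fa, hzmin, hfa, Or.inr ⟨h, Or.inl hfa0⟩⟩ hA
        have hf0 : ∃ f, β f < z f := by
          by_contra h; push_neg at h
          have h2 : (∑ e, z e) ≤ ∑ e, β e := Finset.sum_le_sum (fun e _ => h e)
          omega
        obtain ⟨f₀, hf₀⟩ := hf0
        have hcorn : α s₀ = β s₀ + 1 := (key f₀ hf₀).2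
        have hzoff : ∀ e, e ≠ s₀ → z e = β e := by
          intro e he
          by_contra h
          exact he (key e (lt_of_le_of_ne (hβz e) (Ne.symm h))).1
        have hzsum : z s₀ + ((∑ e, β e) - β s₀) = r := by
          have h1 : z s₀ + ∑ e ∈ Finset.univ.erase s₀, z e = ∑ e, z e :=
            Finset.add_sum_erase _ _ (Finset.mem_univ s₀)
          have h2 : β s₀ + ∑ e ∈ Finset.univ.erase s₀, β e = ∑ e, β e :=
            Finset.add_sum_erase _ _ (Finset.mem_univ s₀)
          have h3 : ∑ e ∈ Finset.univ.erase s₀, z e = ∑ e ∈ Finset.univ.erase s₀, β e :=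
            Finset.sum_congr rfl (fun e he => hzoff e (Finset.ne_of_mem_erase he))
          omega
        have hβs₀ : β s₀ ≤ ∑ e, β e :=
          Finset.single_le_sum (fun i _ => Nat.zero_le _) (Finset.mem_univ s₀)
        have hz0 : β s₀ + 1 ≤ z s₀ := by omega
        by_cases hgood : ∃ t, α t < β t ∧ α t < w t
        · obtain ⟨t, ht1, ht2⟩ := hgood
          have htne : t ≠ s₀ := by intro h; subst h; omega
          refine ⟨t, ht1, ?_⟩
          have e1 : extP r ν (move α s₀ t) ≤ ν w := extP_le hwr (fun e => by
            have h1 := hαw e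
            dsimp [move]; split_ifs <;> subst_vars <;> omega)
          have e2 : extP r ν (move β t s₀) ≤ ν z := extP_le hzr (fun e => by
            have h1 := hβz e
            dsimp [move]; split_ifs <;> subst_vars <;> omega)
          rw [hwv] at e1; rw [hzv] at e2
          exact add_le_add e1 e2
        · push_neg at hgood
          have hαsum : α s₀ ≤ ∑ e, α e :=
            Finset.single_le_sum (fun i _ => Nat.zero_le _) (Finset.mem_univ s₀)
          obtain ⟨s₁, hs₁w, hs₁z, hs₁T⟩ :
              ∃ s₁, α s₁ < w s₁ ∧ z s₁ < w s₁ ∧ β s₁ ≤ α s₁ := by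
            by_cases hg : ∃ g, g ≠ s₀ ∧ α g < w g
            · obtain ⟨g, hg0, hgw⟩ := hg
              have hgT : β g ≤ α g := by
                by_contra h; push_neg at h
                exact absurd hgw (not_lt.2 (hgood g h))
              refine ⟨g, hgw, ?_, hgT⟩
              rw [hzoff g hg0]; omega
            · push_neg at hg
              have hww : ∀ g, g ≠ s₀ → w g = α g := fun g h =>
                le_antisymm (hg g h) (hαw g)
              have hwsum : w s₀ + ((∑ e, α e) - α s₀) = r := by
                have h1 : w s₀ + ∑ e ∈ Finset.univ.erase s₀, w e = ∑ e, w e :=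
                  Finset.add_sum_erase _ _ (Finset.mem_univ s₀)
                have h2 : α s₀ + ∑ e ∈ Finset.univ.erase s₀, α e = ∑ e, α e :=
                  Finset.add_sum_erase _ _ (Finset.mem_univ s₀)
                have h3 : ∑ e ∈ Finset.univ.erase s₀, w e
                    = ∑ e ∈ Finset.univ.erase s₀, α e :=
                  Finset.sum_congr rfl (fun e he => hww e (Finset.ne_of_mem_erase he))
                omega
              refine ⟨s₀, by omega, by omega, le_of_lt hs⟩
          obtain ⟨t, htwz, hex⟩ := hP.2 w z hwr hzr s₁ hs₁z
          by_cases hts : t = s₀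
          · exfalso
            rw [hts] at htwz hex
            have hs₁0 : s₁ ≠ s₀ := by intro h; subst h; omega
            have hw1 : 1 ≤ w s₁ := by omega
            have hwm : extP r ν α ≤ ν (move w s₁ s₀) := by
              refine extP_le (by rw [sum_move _ hw1]; exact hwr) (fun e => ?_)
              have h1 := hαw e
              dsimp [move]; split_ifs <;> subst_vars <;> omega
            have hz1 : 1 ≤ z s₀ := by omega
            have hch : extP r ν α + ν (move z s₀ s₁) ≤ extP r ν α + extP r ν β := by
              calc extP r ν α + ν (move z s₀ s₁)
                  ≤ ν (move w s₁ s₀) + ν (move z s₀ s₁) := add_le_add hwm le_rfl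
                _ ≤ ν w + ν z := hex
                _ = extP r ν α + extP r ν β := by rw [hwv, hzv]
            have h6 : ν (move z s₀ s₁) ≤ extP r ν β := wt_cancel_left htop.1 hch
            have hge : ∀ e, β e ≤ move z s₀ s₁ e := fun e => by
              have h1 := hβz e
              dsimp [move]; split_ifs <;> subst_vars <;> omega
            have h7 : extP r ν β ≤ ν (move z s₀ s₁) :=
              extP_le (by rw [sum_move _ hz1]; exact hzr) hge
            have hz'm : (∑ e, move z s₀ s₁ e) = r ∧ (∀ e, β e ≤ move z s₀ s₁ e) ∧
                ν (move z s₀ s₁) = extP r ν β :=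
              ⟨by rw [sum_move _ hz1]; exact hzr, hge, le_antisymm h6 h7⟩
            have hz's : β s₁ < move z s₀ s₁ s₁ := by
              have h1 := hzoff s₁ hs₁0
              simp only [move, if_neg hs₁0, if_pos rfl]
              simp only [if_true, eq_self_iff_true]
              omega
            rcases lt_or_eq_of_le hs₁T with h | h
            · exact hA ⟨move z s₀ s₁, s₁, hz'm, hz's, Or.inr ⟨h, Or.inl hs₁0⟩⟩
            · exact hB ⟨move z s₀ s₁, s₁, hz'm, hz's, h.symm⟩
          · have hzt : z t = β t := hzoff t hts
            have htT : α t < β t := by have h1 := hαw t; omega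
            refine ⟨t, htT, ?_⟩
            have hw1 : 1 ≤ w s₁ := by omega
            have hz1t : 1 ≤ z t := by omega
            have e1 : extP r ν (move α s₀ t) ≤ ν (move w s₁ t) := by
              refine extP_le (by rw [sum_move _ hw1]; exact hwr) (fun e => ?_)
              have h1 := hαw e
              dsimp [move]; split_ifs <;> subst_vars <;> omega
            have e2 : extP r ν (move β t s₀) ≤ ν (move z t s₁) := by
              refine extP_le (by rw [sum_move _ hz1t]; exact hzr) (fun e => ?_)
              have h1 := hβz e
              dsimp [move]; split_ifs <;> subst_vars <;> omega
            calc extP r ν (move α s₀ t) + extP r ν (move β t s₀)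
                ≤ ν (move w s₁ t) + ν (move z t s₁) := add_le_add e1 e2
              _ ≤ ν w + ν z := hex
              _ = extP r ν α + extP r ν β := by rw [hwv, hzv]

lemma Leq (hP : MConvexFn r ν) {α β : E → ℕ} {s₀ : E}
    (hab : (∑ e, α e) ≤ (∑ e, β e)) (hbr : (∑ e, β e) ≤ r) (hs : β s₀ < α s₀) :
    ∃ t, α t < β t ∧
      extP r ν (move α s₀ t) + extP r ν (move β t s₀) ≤ extP r ν α + extP r ν β :=
  Leq_aux hP _ α β s₀ le_rfl hab hbr hs

/-- Exchange at `s₀` when `|β| < |α|`, `|β| < r`: either the slack option or a real exchange. -/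
lemma Lgt_aux (hP : MConvexFn r ν) :
    ∀ n (α β : E → ℕ) (s₀ : E), r - (∑ e, β e) ≤ n →
      (∑ e, β e) < (∑ e, α e) → (∑ e, β e) < r → β s₀ < α s₀ →
    (extP r ν (vsub α s₀) + extP r ν (vadd β s₀) ≤ extP r ν α + extP r ν β) ∨
    (∃ t, α t < β t ∧
      extP r ν (move α s₀ t) + extP r ν (move β t s₀) ≤ extP r ν α + extP r ν β) := by
  intro n
  induction n with
  | zero =>
    intro α β s₀ hn hba hbr hs
    exact absurd hbr (by omega)
  | succ n ih =>
    intro α β s₀ hn hba hbr hs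
    by_cases htop : extP r ν α = ⊤ ∨ extP r ν β = ⊤
    · left
      rcases htop with h | h <;> rw [h] <;> simp
    push_neg at htop
    obtain ⟨w, hwr, hαw, hwv⟩ := extP_min htop.1
    obtain ⟨z, hzr, hβz, hzv⟩ := extP_min htop.2
    have har : (∑ e, α e) ≤ r := by
      have h2 : (∑ e, α e) ≤ ∑ e, w e := Finset.sum_le_sum (fun e _ => hαw e)
      omega
    have hf : ∃ f, β f < z f := by
      by_contra h; push_neg at h
      have h2 : (∑ e, z e) ≤ ∑ e, β e := Finset.sum_le_sum (fun e _ => h e)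
      omega
    obtain ⟨f, hff⟩ := hf
    by_cases hfs : f = s₀
    · left
      subst hfs
      have e1 : extP r ν (vsub α f) ≤ extP r ν α := extP_mono (fun e => Nat.sub_le _ _)
      have e2 : extP r ν (vadd β f) ≤ ν z := extP_le hzr (fun e => by
        have h1 := hβz e
        dsimp [vadd]; split_ifs <;> subst_vars <;> omega)
      rw [hzv] at e2
      exact add_le_add e1 e2
    · have hβ1 : extP r ν (vadd β f) = extP r ν β := by
        refine le_antisymm ?_ (extP_mono (fun e => Nat.le_add_right _ _))
        rw [← hzv]
        refine extP_le hzr (fun e => ?_)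
        have h1 := hβz e
        dsimp [vadd]; split_ifs <;> subst_vars <;> omega
      have hs' : vadd β f s₀ < α s₀ := by
        dsimp [vadd]; split_ifs with h
        · exact absurd h.symm hfs
        · omega
      by_cases hcmp : (∑ e, β e) + 1 = (∑ e, α e)
      · obtain ⟨t₁, ht₁, hin⟩ := Leq hP (α := α) (β := vadd β f) (s₀ := s₀)
          (by rw [sum_vadd]; omega) (by rw [sum_vadd]; omega) hs'
        by_cases ht₁T : α t₁ < β t₁
        · right
          refine ⟨t₁, ht₁T, ?_⟩
          have m2 : extP r ν (move β t₁ s₀) ≤ extP r ν (move (vadd β f) t₁ s₀) :=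
            extP_mono (fun e => by dsimp [move, vadd]; split_ifs <;> omega)
          calc extP r ν (move α s₀ t₁) + extP r ν (move β t₁ s₀)
              ≤ extP r ν (move α s₀ t₁) + extP r ν (move (vadd β f) t₁ s₀) :=
                add_le_add le_rfl m2
            _ ≤ extP r ν α + extP r ν (vadd β f) := hin
            _ = extP r ν α + extP r ν β := by rw [hβ1]
        · left
          have ht₁f : t₁ = f := by
            have h1 : α t₁ < vadd β f t₁ := ht₁
            dsimp [vadd] at h1; split_ifs at h1 with h2
            · exact h2
            · exact absurd h1 ht₁T
          have hmv : move (vadd β f) f s₀ = vadd β s₀ := by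
            funext e; dsimp [move, vadd]; split_ifs <;> omega
          rw [ht₁f, hmv, hβ1] at hin
          have m1 : extP r ν (vsub α s₀) ≤ extP r ν (move α s₀ f) :=
            extP_mono (fun e => by dsimp [vsub, move]; split_ifs <;> omega)
          calc extP r ν (vsub α s₀) + extP r ν (vadd β s₀)
              ≤ extP r ν (move α s₀ f) + extP r ν (vadd β s₀) := add_le_add m1 le_rfl
            _ ≤ extP r ν α + extP r ν β := hin
      · have hba' : (∑ e, vadd β f e) < (∑ e, α e) := by rw [sum_vadd]; omega
        have hbr'' : (∑ e, vadd β f e) < r := by rw [sum_vadd]; omega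
        rcases ih α (vadd β f) s₀ (by rw [sum_vadd]; omega) hba' hbr'' hs' with
          hleft | ⟨t₁, ht₁, hin⟩
        · left
          have m1 : extP r ν (vadd β s₀) ≤ extP r ν (vadd (vadd β f) s₀) :=
            extP_mono (fun e => by dsimp [vadd]; split_ifs <;> omega)
          calc extP r ν (vsub α s₀) + extP r ν (vadd β s₀)
              ≤ extP r ν (vsub α s₀) + extP r ν (vadd (vadd β f) s₀) := add_le_add le_rfl m1
            _ ≤ extP r ν α + extP r ν (vadd β f) := hleft
            _ = extP r ν α + extP r ν β := by rw [hβ1]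
        · by_cases ht₁T : α t₁ < β t₁
          · right
            refine ⟨t₁, ht₁T, ?_⟩
            have m2 : extP r ν (move β t₁ s₀) ≤ extP r ν (move (vadd β f) t₁ s₀) :=
              extP_mono (fun e => by dsimp [move, vadd]; split_ifs <;> omega)
            calc extP r ν (move α s₀ t₁) + extP r ν (move β t₁ s₀)
                ≤ extP r ν (move α s₀ t₁) + extP r ν (move (vadd β f) t₁ s₀) :=
                  add_le_add le_rfl m2
              _ ≤ extP r ν α + extP r ν (vadd β f) := hin
              _ = extP r ν α + extP r ν β := by rw [hβ1]
          · left
            have ht₁f : t₁ = f := by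
              have h1 : α t₁ < vadd β f t₁ := ht₁
              dsimp [vadd] at h1; split_ifs at h1 with h2
              · exact h2
              · exact absurd h1 ht₁T
            have hmv : move (vadd β f) f s₀ = vadd β s₀ := by
              funext e; dsimp [move, vadd]; split_ifs <;> omega
            rw [ht₁f, hmv, hβ1] at hin
            have m1 : extP r ν (vsub α s₀) ≤ extP r ν (move α s₀ f) :=
              extP_mono (fun e => by dsimp [vsub, move]; split_ifs <;> omega)
            calc extP r ν (vsub α s₀) + extP r ν (vadd β s₀)
                ≤ extP r ν (move α s₀ f) + extP r ν (vadd β s₀) := add_le_add m1 le_rfl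
              _ ≤ extP r ν α + extP r ν β := hin

lemma Lgt (hP : MConvexFn r ν) {α β : E → ℕ} {s₀ : E}
    (hba : (∑ e, β e) < (∑ e, α e)) (hbr : (∑ e, β e) < r) (hs : β s₀ < α s₀) :
    (extP r ν (vsub α s₀) + extP r ν (vadd β s₀) ≤ extP r ν α + extP r ν β) ∨
    (∃ t, α t < β t ∧
      extP r ν (move α s₀ t) + extP r ν (move β t s₀) ≤ extP r ν α + extP r ν β) :=
  Lgt_aux hP _ α β s₀ le_rfl hba hbr hs

end Lemmas


end GenExt

open GenExt in
/-- the generic extension of an M-convex function of rank `r` on `E` to the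
disjoint union `Q ⊔ E`, given by `ν_P̃((α_Q, α)) = ν̃_P(α)`, is M-convex of rank `r`. -/
theorem generic_extension_MConvex {E Q Γ : Type*} [Fintype E] [Fintype Q]
    [AddCommGroup Γ] [LinearOrder Γ] [IsOrderedAddMonoid Γ]
    (r : ℕ) (ν : (E → ℕ) → WithTop Γ) (hP : MConvexFn r ν) :
    MConvexFn r (fun γ : (Q ⊕ E) → ℕ => extP r ν (fun e => γ (Sum.inr e))) := by
  constructor
  · -- non-triviality
    obtain ⟨α₀, hα₀r, hα₀⟩ := hP.1
    refine ⟨Sum.elim 0 α₀, ?_, ?_⟩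
    · rw [Fintype.sum_sum_type]; simpa using hα₀r
    · have h1 : extP r ν (fun e => Sum.elim (0 : Q → ℕ) α₀ (Sum.inr e)) ≤ ν α₀ := by
        have h2 : (fun e => Sum.elim (0 : Q → ℕ) α₀ (Sum.inr e)) = α₀ := rfl
        rw [h2]
        exact extP_le hα₀r (fun e => le_rfl)
      intro h
      have h' : extP r ν (fun e => Sum.elim (0 : Q → ℕ) α₀ (Sum.inr e)) = ⊤ := h
      rw [h'] at h1
      exact hα₀ (top_le_iff.1 h1)
  · intro γ δ hγ hδ s hs
    rw [Fintype.sum_sum_type] at hγ hδ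
    cases s with
    | inl q =>
      by_cases hq : ∃ q', γ (Sum.inl q') < δ (Sum.inl q')
      · obtain ⟨q', hq'⟩ := hq
        refine ⟨Sum.inl q', hq', ?_⟩
        show extP r ν (fun e => move γ (Sum.inl q) (Sum.inl q') (Sum.inr e)) +
            extP r ν (fun e => move δ (Sum.inl q') (Sum.inl q) (Sum.inr e)) ≤
            extP r ν (fun e => γ (Sum.inr e)) + extP r ν (fun e => δ (Sum.inr e))
        have h1 : (fun e => move γ (Sum.inl q) (Sum.inl q') (Sum.inr e))
            = (fun e => γ (Sum.inr e)) := by funext e; simp [move]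
        have h2 : (fun e => move δ (Sum.inl q') (Sum.inl q) (Sum.inr e))
            = (fun e => δ (Sum.inr e)) := by funext e; simp [move]
        rw [h1, h2]
      · push_neg at hq
        have hQlt : (∑ a, δ (Sum.inl a)) < ∑ a, γ (Sum.inl a) :=
          Finset.sum_lt_sum (fun i _ => hq i) ⟨q, Finset.mem_univ q, hs⟩
        have hab : (∑ e, γ (Sum.inr e)) < ∑ e, δ (Sum.inr e) := by omega
        have hbr : (∑ e, δ (Sum.inr e)) ≤ r := by omega
        obtain ⟨t₀, ht₀, hin⟩ := Lup hP (α := fun e => γ (Sum.inr e))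
          (β := fun e => δ (Sum.inr e)) hab hbr
        refine ⟨Sum.inr t₀, ht₀, ?_⟩
        show extP r ν (fun e => move γ (Sum.inl q) (Sum.inr t₀) (Sum.inr e)) +
            extP r ν (fun e => move δ (Sum.inr t₀) (Sum.inl q) (Sum.inr e)) ≤
            extP r ν (fun e => γ (Sum.inr e)) + extP r ν (fun e => δ (Sum.inr e))
        have h1 : (fun e => move γ (Sum.inl q) (Sum.inr t₀) (Sum.inr e))
            = vadd (fun e => γ (Sum.inr e)) t₀ := by
          funext e; simp [move, vadd]
        have h2 : (fun e => move δ (Sum.inr t₀) (Sum.inl q) (Sum.inr e))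
            = vsub (fun e => δ (Sum.inr e)) t₀ := by
          funext e; simp [move, vsub]
        rw [h1, h2]
        exact hin
    | inr s₀ =>
      have hss : (fun e => δ (Sum.inr e)) s₀ < (fun e => γ (Sum.inr e)) s₀ := hs
      by_cases hq : ∃ q', γ (Sum.inl q') < δ (Sum.inl q')
      · obtain ⟨q', hq'⟩ := hq
        have hδq : 1 ≤ δ (Sum.inl q') := by omega
        have hQ1 : δ (Sum.inl q') ≤ ∑ a, δ (Sum.inl a) :=
          Finset.single_le_sum (f := fun a => δ (Sum.inl a))
            (fun i _ => Nat.zero_le _) (Finset.mem_univ q')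
        have hbr : (∑ e, δ (Sum.inr e)) < r := by omega
        by_cases hab : (∑ e, γ (Sum.inr e)) ≤ ∑ e, δ (Sum.inr e)
        · obtain ⟨t₀, ht₀, hin⟩ := Leq hP (α := fun e => γ (Sum.inr e))
            (β := fun e => δ (Sum.inr e)) (s₀ := s₀) hab (le_of_lt hbr) hss
          refine ⟨Sum.inr t₀, ht₀, ?_⟩
          show extP r ν (fun e => move γ (Sum.inr s₀) (Sum.inr t₀) (Sum.inr e)) +
              extP r ν (fun e => move δ (Sum.inr t₀) (Sum.inr s₀) (Sum.inr e)) ≤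
              extP r ν (fun e => γ (Sum.inr e)) + extP r ν (fun e => δ (Sum.inr e))
          have h1 : (fun e => move γ (Sum.inr s₀) (Sum.inr t₀) (Sum.inr e))
              = move (fun e => γ (Sum.inr e)) s₀ t₀ := by
            funext e; simp [move]
          have h2 : (fun e => move δ (Sum.inr t₀) (Sum.inr s₀) (Sum.inr e))
              = move (fun e => δ (Sum.inr e)) t₀ s₀ := by
            funext e; simp [move]
          rw [h1, h2]
          exact hin
        · push_neg at hab
          rcases Lgt hP (α := fun e => γ (Sum.inr e))
            (β := fun e => δ (Sum.inr e)) (s₀ := s₀) hab hbr hss with hleft | ⟨t₀, ht₀, hin⟩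
          · refine ⟨Sum.inl q', hq', ?_⟩
            show extP r ν (fun e => move γ (Sum.inr s₀) (Sum.inl q') (Sum.inr e)) +
                extP r ν (fun e => move δ (Sum.inl q') (Sum.inr s₀) (Sum.inr e)) ≤
                extP r ν (fun e => γ (Sum.inr e)) + extP r ν (fun e => δ (Sum.inr e))
            have h1 : (fun e => move γ (Sum.inr s₀) (Sum.inl q') (Sum.inr e))
                = vsub (fun e => γ (Sum.inr e)) s₀ := by
              funext e; simp [move, vsub]
            have h2 : (fun e => move δ (Sum.inl q') (Sum.inr s₀) (Sum.inr e))
                = vadd (fun e => δ (Sum.inr e)) s₀ := by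
              funext e; simp [move, vadd]
            rw [h1, h2]
            exact hleft
          · refine ⟨Sum.inr t₀, ht₀, ?_⟩
            show extP r ν (fun e => move γ (Sum.inr s₀) (Sum.inr t₀) (Sum.inr e)) +
                extP r ν (fun e => move δ (Sum.inr t₀) (Sum.inr s₀) (Sum.inr e)) ≤
                extP r ν (fun e => γ (Sum.inr e)) + extP r ν (fun e => δ (Sum.inr e))
            have h1 : (fun e => move γ (Sum.inr s₀) (Sum.inr t₀) (Sum.inr e))
                = move (fun e => γ (Sum.inr e)) s₀ t₀ := by
              funext e; simp [move]
            have h2 : (fun e => move δ (Sum.inr t₀) (Sum.inr s₀) (Sum.inr e))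
                = move (fun e => δ (Sum.inr e)) t₀ s₀ := by
              funext e; simp [move]
            rw [h1, h2]
            exact hin
      · push_neg at hq
        have hQ : (∑ a, δ (Sum.inl a)) ≤ ∑ a, γ (Sum.inl a) :=
          Finset.sum_le_sum (fun i _ => hq i)
        have hab : (∑ e, γ (Sum.inr e)) ≤ ∑ e, δ (Sum.inr e) := by omega
        have hbr : (∑ e, δ (Sum.inr e)) ≤ r := by omega
        obtain ⟨t₀, ht₀, hin⟩ := Leq hP (α := fun e => γ (Sum.inr e))
          (β := fun e => δ (Sum.inr e)) (s₀ := s₀) hab hbr hss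
        refine ⟨Sum.inr t₀, ht₀, ?_⟩
        show extP r ν (fun e => move γ (Sum.inr s₀) (Sum.inr t₀) (Sum.inr e)) +
            extP r ν (fun e => move δ (Sum.inr t₀) (Sum.inr s₀) (Sum.inr e)) ≤
            extP r ν (fun e => γ (Sum.inr e)) + extP r ν (fun e => δ (Sum.inr e))
        have h1 : (fun e => move γ (Sum.inr s₀) (Sum.inr t₀) (Sum.inr e))
            = move (fun e => γ (Sum.inr e)) s₀ t₀ := by
          funext e; simp [move]
        have h2 : (fun e => move δ (Sum.inr t₀) (Sum.inr s₀) (Sum.inr e))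
            = move (fun e => δ (Sum.inr e)) t₀ s₀ := by
          funext e; simp [move]
        rw [h1, h2]
        exact hin
end
end

section
/- Let E and F be disjoint finite sets. A function μ : {(I,J) : I ⊆ E, J ⊆ F, |I| = |J|} → Γ̄ is the minor valuation function of a valuated bimatroid if and only if the function ν : binom(E ⊔ F, |E|) → Γ̄ defined by ν(S) = μ(E − S, S ∩ F) is a valuated matroid of rank |E| on E ⊔ F with ν(E) = 0. -/
open Finset
open scoped Classical

noncomputable section

/-- The axioms of a valuated bimatroid on rows `E` and columns `F` (Murota):
`μ(∅,∅) = 0` together with the two families of exchange inequalities, quantified over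
pairs `(I,J)`, `(Iʹ,Jʹ)` of equal-cardinality subsets. -/
def IsVBimatroid {E F Γ : Type*} [AddCommGroup Γ] [LinearOrder Γ] [IsOrderedAddMonoid Γ]
    (μ : Finset E → Finset F → WithTop Γ) : Prop :=
  μ ∅ ∅ = 0 ∧
  ∀ (I : Finset E) (J : Finset F) (I2 : Finset E) (J2 : Finset F),
    I.card = J.card → I2.card = J2.card →
    ((∀ i2 ∈ I2, i2 ∉ I →
        (∃ i ∈ I, i ∉ I2 ∧
          μ (insert i2 (I.erase i)) J + μ (insert i (I2.erase i2)) J2 ≤ μ I J + μ I2 J2) ∨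
        (∃ j2 ∈ J2, j2 ∉ J ∧
          μ (insert i2 I) (insert j2 J) + μ (I2.erase i2) (J2.erase j2) ≤ μ I J + μ I2 J2))
     ∧
     (∀ j ∈ J, j ∉ J2 →
        (∃ i ∈ I, i ∉ I2 ∧
          μ (I.erase i) (J.erase j) + μ (insert i I2) (insert j J2) ≤ μ I J + μ I2 J2) ∨
        (∃ j2 ∈ J2, j2 ∉ J ∧
          μ I (insert j2 (J.erase j)) + μ I2 (insert j (J2.erase j2)) ≤ μ I J + μ I2 J2)))

/-- The function `ν(S) = μ(E − S, S ∩ F)` on `|E|`-element subsets of `E ⊔ F`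
associated to a pairing `μ`. -/
def hatν {E F Γ : Type*} [Fintype E] [Fintype F] [AddCommGroup Γ] [LinearOrder Γ] [IsOrderedAddMonoid Γ]
    (μ : Finset E → Finset F → WithTop Γ) (S : Finset (E ⊕ F)) : WithTop Γ :=
  μ (Finset.univ.filter (fun e : E => Sum.inl e ∉ S))
    (Finset.univ.filter (fun f : F => Sum.inr f ∈ S))

set_option linter.unusedSectionVars false
section Helpers
variable {E F Γ : Type*} [Fintype E] [Fintype F] [AddCommGroup Γ] [LinearOrder Γ] [IsOrderedAddMonoid Γ]

def rowsOut (S : Finset (E ⊕ F)) : Finset E := Finset.univ.filter (fun e : E => Sum.inl e ∉ S)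
def cols (S : Finset (E ⊕ F)) : Finset F := Finset.univ.filter (fun f : F => Sum.inr f ∈ S)

lemma hatν_eq (μ : Finset E → Finset F → WithTop Γ) (S : Finset (E ⊕ F)) :
    hatν μ S = μ (rowsOut S) (cols S) := rfl

lemma mem_rowsOut {S : Finset (E ⊕ F)} {x : E} : x ∈ rowsOut S ↔ Sum.inl x ∉ S := by
  simp [rowsOut]
lemma mem_cols {S : Finset (E ⊕ F)} {x : F} : x ∈ cols S ↔ Sum.inr x ∈ S := by
  simp [cols]

variable [DecidableEq E] [DecidableEq F] [DecidableEq (E ⊕ F)]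

@[simp] lemma rowsOut_insert_inl (e : E) (S : Finset (E ⊕ F)) :
    rowsOut (insert (Sum.inl e) S) = (rowsOut S).erase e := by
  ext x; simp [rowsOut]
  try tauto
@[simp] lemma rowsOut_insert_inr (f : F) (S : Finset (E ⊕ F)) :
    rowsOut (insert (Sum.inr f) S) = rowsOut S := by
  ext x; simp [rowsOut]
@[simp] lemma rowsOut_erase_inl (e : E) (S : Finset (E ⊕ F)) :
    rowsOut (S.erase (Sum.inl e)) = insert e (rowsOut S) := by
  ext x; simp [rowsOut]
  try tauto
@[simp] lemma rowsOut_erase_inr (f : F) (S : Finset (E ⊕ F)) :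
    rowsOut (S.erase (Sum.inr f)) = rowsOut S := by
  ext x; simp [rowsOut]
@[simp] lemma cols_insert_inl (e : E) (S : Finset (E ⊕ F)) :
    cols (insert (Sum.inl e) S) = cols S := by
  ext x; simp [cols]
@[simp] lemma cols_insert_inr (f : F) (S : Finset (E ⊕ F)) :
    cols (insert (Sum.inr f) S) = insert f (cols S) := by
  ext x; simp [cols]
@[simp] lemma cols_erase_inl (e : E) (S : Finset (E ⊕ F)) :
    cols (S.erase (Sum.inl e)) = cols S := by
  ext x; simp [cols]
@[simp] lemma cols_erase_inr (f : F) (S : Finset (E ⊕ F)) :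
    cols (S.erase (Sum.inr f)) = (cols S).erase f := by
  ext x; simp [cols]

def toS (I : Finset E) (J : Finset F) : Finset (E ⊕ F) :=
  Iᶜ.image Sum.inl ∪ J.image Sum.inr

@[simp] lemma rowsOut_toS (I : Finset E) (J : Finset F) : rowsOut (toS I J) = I := by
  ext x; simp [rowsOut, toS]
@[simp] lemma cols_toS (I : Finset E) (J : Finset F) : cols (toS I J) = J := by
  ext x; simp [cols, toS]
@[simp] lemma inl_mem_toS {I : Finset E} {J : Finset F} {x : E} :
    Sum.inl x ∈ toS I J ↔ x ∉ I := by simp [toS]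
@[simp] lemma inr_mem_toS {I : Finset E} {J : Finset F} {x : F} :
    Sum.inr x ∈ toS I J ↔ x ∈ J := by simp [toS]

lemma card_toS (I : Finset E) (J : Finset F) :
    (toS I J).card = (Fintype.card E - I.card) + J.card := by
  rw [toS, card_union_of_disjoint (by simp [disjoint_left]),
    card_image_of_injective _ Sum.inl_injective,
    card_image_of_injective _ Sum.inr_injective, card_compl]

lemma toS_rowsOut_cols (S : Finset (E ⊕ F)) : toS (rowsOut S) (cols S) = S := by
  ext x; cases x <;> simp [mem_rowsOut, mem_cols]

lemma card_rowsOut_eq_cols {S : Finset (E ⊕ F)} (h : S.card = Fintype.card E) :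
    (rowsOut S).card = (cols S).card := by
  have h1 := card_toS (rowsOut S) (cols S)
  rw [toS_rowsOut_cols, h] at h1
  have h2 : (rowsOut S).card ≤ Fintype.card E := by
    simpa using card_le_univ (rowsOut S)
  omega

lemma card_toS_of_eq {I : Finset E} {J : Finset F} (h : I.card = J.card) :
    (toS I J).card = Fintype.card E := by
  have h2 : I.card ≤ Fintype.card E := by simpa using card_le_univ I
  rw [card_toS]; omega

end Helpers

/-- `μ` is the minor valuation function of a valuated bimatroid on rows `E`
and columns `F` if and only if `ν(S) = μ(E − S, S ∩ F)` is a valuated matroid of rank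
`|E|` on `E ⊔ F` with `ν(E) = 0`. -/
theorem isVBimatroid_iff_hat_isVMatroid {E F Γ : Type*} [Fintype E] [Fintype F]
    [AddCommGroup Γ] [LinearOrder Γ] [IsOrderedAddMonoid Γ] (μ : Finset E → Finset F → WithTop Γ) :
    IsVBimatroid μ ↔
      (IsVMatroid (Fintype.card E) (hatν μ) ∧
        hatν μ ((Finset.univ : Finset E).image Sum.inl) = 0) := by
  have hE0 : hatν μ ((Finset.univ : Finset E).image Sum.inl) = μ ∅ ∅ := by
    rw [hatν_eq]
    have h1 : rowsOut (((Finset.univ : Finset E).image Sum.inl : Finset (E ⊕ F))) = (∅ : Finset E) := by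
      ext x; simp [mem_rowsOut]
    have h2 : cols (((Finset.univ : Finset E).image Sum.inl : Finset (E ⊕ F))) = (∅ : Finset F) := by
      ext x; simp [mem_cols]
    rw [h1, h2]
  constructor
  · rintro ⟨h0, hax⟩
    refine ⟨⟨⟨(Finset.univ : Finset E).image Sum.inl, ?_, ?_⟩, ?_⟩, by rw [hE0, h0]⟩
    · rw [card_image_of_injective _ Sum.inl_injective, card_univ]
    · rw [hE0, h0]; simp
    · intro S T hS hT s hsS hsT
      obtain ⟨hax1, hax2⟩ := hax (rowsOut S) (cols S) (rowsOut T) (cols T)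
        (card_rowsOut_eq_cols hS) (card_rowsOut_eq_cols hT)
      cases s with
      | inl e =>
        rcases hax1 e (mem_rowsOut.2 hsT) (fun h => (mem_rowsOut.1 h) hsS) with
          ⟨i, hiI, hiI2, hle⟩ | ⟨j2, hj2, hj2n, hle⟩
        · refine ⟨Sum.inl i, ?_, mem_rowsOut.1 hiI, ?_⟩
          · by_contra h; exact hiI2 (mem_rowsOut.2 h)
          · have hei : e ≠ i := by rintro rfl; exact (mem_rowsOut.1 hiI) hsS
            simp only [hatν_eq, rowsOut_insert_inl, rowsOut_erase_inl, cols_insert_inl,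
              cols_erase_inl]
            rwa [Finset.erase_insert_of_ne hei, Finset.erase_insert_of_ne hei.symm]
        · refine ⟨Sum.inr j2, mem_cols.1 hj2, fun h => hj2n (mem_cols.2 h), ?_⟩
          simpa only [hatν_eq, rowsOut_insert_inr, rowsOut_erase_inl, rowsOut_insert_inl,
            rowsOut_erase_inr, cols_insert_inr, cols_erase_inl, cols_insert_inl,
            cols_erase_inr] using hle
      | inr j =>
        rcases hax2 j (mem_cols.2 hsS) (fun h => hsT (mem_cols.1 h)) with
          ⟨i, hiI, hiI2, hle⟩ | ⟨j2, hj2, hj2n, hle⟩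
        · refine ⟨Sum.inl i, ?_, mem_rowsOut.1 hiI, ?_⟩
          · by_contra h; exact hiI2 (mem_rowsOut.2 h)
          · simpa only [hatν_eq, rowsOut_insert_inl, rowsOut_erase_inr, rowsOut_insert_inr,
              rowsOut_erase_inl, cols_insert_inl, cols_erase_inr, cols_insert_inr,
              cols_erase_inl] using hle
        · refine ⟨Sum.inr j2, mem_cols.1 hj2, fun h => hj2n (mem_cols.2 h), ?_⟩
          simpa only [hatν_eq, rowsOut_insert_inr, rowsOut_erase_inr, cols_insert_inr,
            cols_erase_inr] using hle
  · rintro ⟨⟨-, hex⟩, h0⟩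
    refine ⟨by rw [← hE0]; exact h0, ?_⟩
    intro I J I2 J2 hc1 hc2
    have hS := card_toS_of_eq hc1
    have hT := card_toS_of_eq hc2
    constructor
    · intro i2 hi2 hi2n
      obtain ⟨t, htT, htS, hle⟩ := hex (toS I J) (toS I2 J2) hS hT (Sum.inl i2)
        (inl_mem_toS.2 hi2n) (by simp [hi2])
      cases t with
      | inl i =>
        have hiI : i ∈ I := by simpa using htS
        have hiI2 : i ∉ I2 := by simpa using htT
        have hne : i2 ≠ i := fun h => hiI2 (h ▸ hi2)
        left; refine ⟨i, hiI, hiI2, ?_⟩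
        simp only [hatν_eq, rowsOut_insert_inl, rowsOut_erase_inl, cols_insert_inl,
          cols_erase_inl, rowsOut_toS, cols_toS] at hle
        rwa [Finset.erase_insert_of_ne hne, Finset.erase_insert_of_ne hne.symm] at hle
      | inr j2 =>
        have hj2 : j2 ∈ J2 := by simpa using htT
        have hj2n : j2 ∉ J := by simpa using htS
        right; refine ⟨j2, hj2, hj2n, ?_⟩
        simpa only [hatν_eq, rowsOut_insert_inr, rowsOut_erase_inl, rowsOut_insert_inl,
          rowsOut_erase_inr, cols_insert_inr, cols_erase_inl, cols_insert_inl,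
          cols_erase_inr, rowsOut_toS, cols_toS] using hle
    · intro j hj hjn
      obtain ⟨t, htT, htS, hle⟩ := hex (toS I J) (toS I2 J2) hS hT (Sum.inr j)
        (by simp [hj]) (by simp [hjn])
      cases t with
      | inl i =>
        have hiI : i ∈ I := by simpa using htS
        have hiI2 : i ∉ I2 := by simpa using htT
        left; refine ⟨i, hiI, hiI2, ?_⟩
        simpa only [hatν_eq, rowsOut_insert_inl, rowsOut_erase_inr, rowsOut_insert_inr,
          rowsOut_erase_inl, cols_insert_inl, cols_erase_inr, cols_insert_inr,
          cols_erase_inl, rowsOut_toS, cols_toS] using hle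
      | inr j2 =>
        have hj2 : j2 ∈ J2 := by simpa using htT
        have hj2n : j2 ∉ J := by simpa using htS
        right; refine ⟨j2, hj2, hj2n, ?_⟩
        simpa only [hatν_eq, rowsOut_insert_inr, rowsOut_erase_inr, cols_insert_inr,
          cols_erase_inr, rowsOut_toS, cols_toS] using hle
end
end

section
/- Let A ∈ K^{E×F} be a matrix over a field K with a valuation val : K → Γ̄. Then the function μ_A(I,J) = val(det [A]_{I,J}) on pairs (I,J) with I ⊆ E, J ⊆ F, |I| = |J| defines a valuated bimatroid on rows E and columns F. -/
open Finset
open scoped Classical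

noncomputable section

set_option linter.unusedSectionVars false
set_option maxHeartbeats 1000000


section Aux
variable {K : Type*} [Field K] {Γ : Type*} [AddCommGroup Γ] [LinearOrder Γ] [IsOrderedAddMonoid Γ]
variable (val : K → WithTop Γ)

lemma aux_val_neg (hval1 : val 1 = 0) (hvalmul : ∀ x y : K, val (x * y) = val x + val y)
    (x : K) : val (-x) = val x := by
  have h := hvalmul (-1) (-1)
  rw [neg_mul_neg, one_mul, hval1] at h
  have h1 : val (-1 : K) = 0 := by
    cases hv : val (-1 : K) with
    | top => rw [hv] at h; simp at h
    | coe a =>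
      rw [hv] at h
      have : (0 : WithTop Γ) = ((a + a : Γ) : WithTop Γ) := by rw [h]; push_cast; rfl
      have ha : a + a = 0 := by exact_mod_cast this.symm
      have : a = 0 := by
        rcases lt_trichotomy a 0 with hlt | he | hgt
        · exact absurd ha (ne_of_lt (by simpa using add_lt_add hlt hlt))
        · exact he
        · exact absurd ha (ne_of_gt (by simpa using add_lt_add hgt hgt))
      simp [this]
  calc val (-x) = val ((-1) * x) := by ring_nf
    _ = val (-1) + val x := hvalmul _ _
    _ = val x := by rw [h1, zero_add]

lemma aux_val_inf_sum (hval0 : ∀ x : K, val x = ⊤ ↔ x = 0)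
    (hvaladd : ∀ x y : K, min (val x) (val y) ≤ val (x + y))
    {ι : Type*} (s : Finset ι) (f : ι → K) :
    s.inf (fun k => val (f k)) ≤ val (∑ k ∈ s, f k) := by
  classical
  induction s using Finset.induction_on with
  | empty => simp [(hval0 0).mpr rfl]
  | insert _ _ hx ih =>
    rename_i a s
    rw [Finset.sum_insert hx, Finset.inf_insert]
    exact le_trans (min_le_min le_rfl ih) (hvaladd _ _)

lemma aux_valdet_perm {n : Type*} [Fintype n] [DecidableEq n]
    (hval1 : val 1 = 0) (hvalmul : ∀ x y : K, val (x * y) = val x + val y)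
    (M : Matrix n n K) (σ τ : Equiv.Perm n) :
    val ((M.submatrix σ τ).det) = val M.det := by
  have h1 : M.submatrix σ τ = (M.submatrix σ id).submatrix id τ := rfl
  rw [h1, Matrix.det_permute' τ, Matrix.det_permute σ]
  have hsign : ∀ (u : ℤˣ) (x : K), val (((u : ℤ) : K) * x) = val x := by
    intro u x
    rcases Int.units_eq_one_or u with h | h <;> rw [h]
    · push_cast; rw [one_mul]
    · push_cast; rw [neg_one_mul]; exact aux_val_neg val hval1 hvalmul x
  rw [hsign, hsign]

lemma aux_valdet_equiv {m n : Type*} [Fintype m] [DecidableEq m] [Fintype n] [DecidableEq n]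
    (hval1 : val 1 = 0) (hvalmul : ∀ x y : K, val (x * y) = val x + val y)
    (M : Matrix n n K) (eR eC : m ≃ n) :
    val ((M.submatrix eR eC).det) = val M.det := by
  have h1 : M.submatrix eR eC
      = (M.submatrix eR eR).submatrix (Equiv.refl m) (eC.trans eR.symm) := by
    ext i j; simp [Matrix.submatrix_apply]
  rw [h1, aux_valdet_perm val hval1 hvalmul _ (Equiv.refl m) (eC.trans eR.symm),
    Matrix.det_submatrix_equiv_self]

lemma aux_valdet_congr {α β κ1 κ2 : Type*} [Fintype κ1] [DecidableEq κ1]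
    [Fintype κ2] [DecidableEq κ2]
    (hval1 : val 1 = 0) (hvalmul : ∀ x y : K, val (x * y) = val x + val y)
    (M : Matrix α β K) (r1 : κ1 → α) (c1 : κ1 → β) (r2 : κ2 → α) (c2 : κ2 → β)
    (hr1 : Function.Injective r1) (hc1 : Function.Injective c1)
    (hr2 : Function.Injective r2) (hc2 : Function.Injective c2)
    (hr : Set.range r2 = Set.range r1) (hc : Set.range c2 = Set.range c1) :
    val ((M.submatrix r2 c2).det) = val ((M.submatrix r1 c1).det) := by
  set eR : κ2 ≃ κ1 :=
    (Equiv.ofInjective r2 hr2).trans ((Equiv.setCongr hr).trans (Equiv.ofInjective r1 hr1).symm)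
  set eC : κ2 ≃ κ1 :=
    (Equiv.ofInjective c2 hc2).trans ((Equiv.setCongr hc).trans (Equiv.ofInjective c1 hc1).symm)
  have hR : ∀ k, r1 (eR k) = r2 k := by
    intro k
    simp only [eR, Equiv.trans_apply, Equiv.apply_ofInjective_symm]
    rfl
  have hC : ∀ k, c1 (eC k) = c2 k := by
    intro k
    simp only [eC, Equiv.trans_apply, Equiv.apply_ofInjective_symm]
    rfl
  have h1 : M.submatrix r2 c2 = (M.submatrix r1 c1).submatrix eR eC := by
    ext i j; simp [Matrix.submatrix_apply, hR, hC]
  rw [h1, aux_valdet_equiv val hval1 hvalmul]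

/-- Grassmann–Plücker / Cramer exchange identity. -/
lemma gp_core {n : Type*} [Fintype n] [DecidableEq n] (C D : Matrix n n K) (p : n) :
    C.det * D.det
      = ∑ k : n, (C.updateCol p (fun i => D i k)).det
          * (D.updateCol k (fun i => C i p)).det := by
  classical
  have hsum : ∀ (s : Finset n) (v : n → n → K),
      (C.updateCol p (fun i => ∑ k ∈ s, v k i)).det
        = ∑ k ∈ s, (C.updateCol p (v k)).det := by
    intro s
    induction s using Finset.induction_on with
    | empty =>
      intro v
      have h0 : (fun i : n => ∑ k ∈ (∅ : Finset n), v k i) = (0 : K) • (fun _ : n => (0:K)) := by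
        funext i; simp
      rw [h0, Matrix.det_updateCol_smul]; simp
    | insert _ _ hx ih =>
      intro v
      rename_i a s
      have h0 : (fun i : n => ∑ k ∈ insert a s, v k i)
          = (fun i => v a i) + (fun i => ∑ k ∈ s, v k i) := by
        funext i; simp [Finset.sum_insert hx]
      rw [h0, Matrix.det_updateCol_add, ih, Finset.sum_insert hx]
  set u : n → K := fun i => C i p with hu
  calc C.det * D.det
      = D.det * (C.updateCol p u).det := by
        rw [Matrix.updateCol_eq_self, mul_comm]
    _ = (C.updateCol p (D.det • u)).det := by
        rw [Matrix.det_updateCol_smul]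
    _ = (C.updateCol p (fun i => ∑ k : n, (D.updateCol k u).det * D i k)).det := by
        have hcol : (D.det • u) = fun i => ∑ k : n, (D.updateCol k u).det * D i k := by
          funext i
          have h2 := congrFun (Matrix.mulVec_cramer D u) i
          simp only [Matrix.mulVec, dotProduct, Matrix.cramer_apply, Pi.smul_apply,
            smul_eq_mul] at h2 ⊢
          rw [← h2]
          exact Finset.sum_congr rfl (fun k _ => mul_comm _ _)
        rw [hcol]
    _ = ∑ k : n, (C.updateCol p ((D.updateCol k u).det • (fun i' => D i' k))).det := by
        rw [show (fun i => ∑ k : n, (D.updateCol k u).det * D i k)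
            = (fun i => ∑ k : n, ((fun kk : n => (D.updateCol kk u).det • (fun i' => D i' kk)) k) i) by
            funext i; simp [smul_eq_mul]]
        exact hsum Finset.univ _
    _ = ∑ k : n, (C.updateCol p (fun i => D i k)).det * (D.updateCol k (fun i => C i p)).det := by
        refine Finset.sum_congr rfl (fun k _ => ?_)
        rw [Matrix.det_updateCol_smul, mul_comm]
end Aux

section Big
variable {K : Type*} [Field K] {Γ : Type*} [AddCommGroup Γ] [LinearOrder Γ] [IsOrderedAddMonoid Γ]
variable {E F : Type*} [Fintype E] [Fintype F]

def bigMat (A : Matrix E F K) : Matrix E (E ⊕ F) K :=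
  Matrix.of fun e x => Sum.elim (fun e' => if e = e' then (1 : K) else 0) (fun f => A e f) x

def senum (S : Finset (E ⊕ F)) (h : S.card = Fintype.card E) : E → E ⊕ F :=
  fun a => ↑(S.equivFin.symm (Fin.cast h.symm ((Fintype.equivFin E) a)))

lemma senum_injective (S : Finset (E ⊕ F)) (h : S.card = Fintype.card E) :
    Function.Injective (senum S h) := by
  intro a b hab
  have h1 := Subtype.coe_injective hab
  have h2 := S.equivFin.symm.injective h1
  have h3 : ((Fintype.equivFin E) a).val = ((Fintype.equivFin E) b).val := by
    simpa using congrArg Fin.val h2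
  exact (Fintype.equivFin E).injective (Fin.ext h3)

lemma senum_mem (S : Finset (E ⊕ F)) (h : S.card = Fintype.card E) (a : E) :
    senum S h a ∈ S := (S.equivFin.symm _).2

lemma aux_range_eq {α β : Type*} [Fintype α] (g : α → β) (S : Finset β)
    (hg : Function.Injective g) (hmem : ∀ a, g a ∈ S) (hcard : S.card = Fintype.card α) :
    Set.range g = ↑S := by
  classical
  have h1 : Finset.univ.image g ⊆ S := by
    intro x hx
    obtain ⟨a, -, rfl⟩ := Finset.mem_image.mp hx
    exact hmem a
  have h2 : (Finset.univ.image g).card = S.card := by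
    rw [Finset.card_image_of_injective _ hg, Finset.card_univ, hcard]
  have h3 : Finset.univ.image g = S := Finset.eq_of_subset_of_card_le h1 (le_of_eq h2.symm)
  rw [← h3]
  ext x
  simp [Finset.mem_image, Set.mem_range, eq_comm]

def bval (val : K → WithTop Γ) (A : Matrix E F K) (S : Finset (E ⊕ F)) : WithTop Γ :=
  if h : S.card = Fintype.card E then val ((bigMat A).submatrix id (senum S h)).det else ⊤

lemma bval_spec (val : K → WithTop Γ)
    (hval1 : val 1 = 0) (hvalmul : ∀ x y : K, val (x * y) = val x + val y)
    (A : Matrix E F K) (S : Finset (E ⊕ F)) (h : S.card = Fintype.card E)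
    (g : E → E ⊕ F) (hg : Function.Injective g) (hmem : ∀ a, g a ∈ S) :
    bval val A S = val ((bigMat A).submatrix id g).det := by
  rw [bval, dif_pos h]
  exact (aux_valdet_congr val hval1 hvalmul (bigMat A) id (senum S h) id g
    Function.injective_id (senum_injective S h) Function.injective_id hg rfl
    (by rw [aux_range_eq g S hg hmem h, aux_range_eq (senum S h) S (senum_injective S h)
      (senum_mem S h) h])).symm

lemma gp_b (val : K → WithTop Γ)
    (hval0 : ∀ x : K, val x = ⊤ ↔ x = 0) (hval1 : val 1 = 0)
    (hvalmul : ∀ x y : K, val (x * y) = val x + val y)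
    (hvaladd : ∀ x y : K, min (val x) (val y) ≤ val (x + y))
    (A : Matrix E F K) (S T : Finset (E ⊕ F))
    (hS : S.card = Fintype.card E) (hT : T.card = Fintype.card E)
    (s : E ⊕ F) (hsS : s ∈ S) (hsT : s ∉ T) :
    ∃ t ∈ T, t ∉ S ∧
      bval val A (insert t (S.erase s)) + bval val A (insert s (T.erase t))
        ≤ bval val A S + bval val A T := by
  classical
  have hTS : ∃ t ∈ T, t ∉ S := by
    by_contra hc
    push_neg at hc
    have hTSeq : T = S := Finset.eq_of_subset_of_card_le (fun x hx => hc x hx) (by rw [hS, hT])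
    exact hsT (hTSeq ▸ hsS)
  by_cases htop : bval val A S + bval val A T = ⊤
  · obtain ⟨t0, ht0T, ht0S⟩ := hTS
    exact ⟨t0, ht0T, ht0S, by rw [htop]; exact le_top⟩
  set C := (bigMat A).submatrix id (senum S hS) with hC
  set D := (bigMat A).submatrix id (senum T hT) with hD
  have hbS : bval val A S = val C.det := by rw [bval, dif_pos hS]
  have hbT : bval val A T = val D.det := by rw [bval, dif_pos hT]
  obtain ⟨p, hp⟩ : ∃ p, senum S hS p = s := by
    refine ⟨(Fintype.equivFin E).symm (Fin.cast hS (S.equivFin ⟨s, hsS⟩)), ?_⟩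
    simp [senum]
  haveI hNE : Nonempty E := by
    rw [← Fintype.card_pos_iff, ← hS]
    exact Finset.card_pos.mpr ⟨s, hsS⟩
  have hkey : bval val A S + bval val A T
      = val (∑ k : E, (C.updateCol p (fun i => D i k)).det
          * (D.updateCol k (fun i => C i p)).det) := by
    rw [hbS, hbT, ← hvalmul, gp_core]
  have hinf := aux_val_inf_sum val hval0 hvaladd Finset.univ
      (fun k : E => (C.updateCol p (fun i => D i k)).det
        * (D.updateCol k (fun i => C i p)).det)
  obtain ⟨k, -, hk⟩ := Finset.exists_mem_eq_inf (Finset.univ : Finset E) Finset.univ_nonempty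
      (fun k : E => val ((C.updateCol p (fun i => D i k)).det
        * (D.updateCol k (fun i => C i p)).det))
  have hterm : val ((C.updateCol p (fun i => D i k)).det
      * (D.updateCol k (fun i => C i p)).det) ≤ bval val A S + bval val A T := by
    rw [hkey, ← hk]
    exact hinf
  set t := senum T hT k with htdef
  have htT : t ∈ T := senum_mem T hT k
  have htS : t ∉ S := by
    intro htS'
    obtain ⟨q, hq⟩ : ∃ q, senum S hS q = t := by
      refine ⟨(Fintype.equivFin E).symm (Fin.cast hS (S.equivFin ⟨t, htS'⟩)), ?_⟩
      simp [senum]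
    have hqp : q ≠ p := by
      intro hqpe
      rw [hqpe, hp] at hq
      exact hsT (hq ▸ htT)
    have hX : (C.updateCol p (fun i => D i k)).det = 0 := by
      apply Matrix.det_zero_of_column_eq hqp
      intro r
      rw [Matrix.updateCol_ne hqp, Matrix.updateCol_self]
      simp [hC, hD, hq, htdef]
    rw [hX, zero_mul, (hval0 0).mpr rfl] at hterm
    exact htop (top_le_iff.mp hterm)
  refine ⟨t, htT, htS, ?_⟩
  have hXeq : C.updateCol p (fun i => D i k)
      = (bigMat A).submatrix id (Function.update (senum S hS) p t) := by
    ext r j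
    by_cases hj : j = p
    · subst hj
      simp [Matrix.updateCol_self, hC, hD, Function.update_self, htdef]
    · simp [Matrix.updateCol_ne hj, hC, Function.update_of_ne hj]
  have hYeq : D.updateCol k (fun i => C i p)
      = (bigMat A).submatrix id (Function.update (senum T hT) k s) := by
    ext r j
    by_cases hj : j = k
    · subst hj
      simp [Matrix.updateCol_self, hC, hD, Function.update_self, hp]
    · simp [Matrix.updateCol_ne hj, hD, Function.update_of_ne hj]
  have hcard1 : (insert t (S.erase s)).card = Fintype.card E := by
    rw [Finset.card_insert_of_notMem (fun hmem => htS (Finset.mem_of_mem_erase hmem)),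
      Finset.card_erase_of_mem hsS, hS]
    have := Fintype.card_pos_iff.mpr hNE
    omega
  have hcard2 : (insert s (T.erase t)).card = Fintype.card E := by
    rw [Finset.card_insert_of_notMem (fun hmem => hsT (Finset.mem_of_mem_erase hmem)),
      Finset.card_erase_of_mem htT, hT]
    have := Fintype.card_pos_iff.mpr hNE
    omega
  have hupd_inj : ∀ (g : E → E ⊕ F) (_ : Function.Injective g) (p0 : E) (t0 : E ⊕ F),
      (∀ e, g e ≠ t0) → Function.Injective (Function.update g p0 t0) := by
    intro g hg p0 t0 hne a b hab
    by_cases ha : a = p0 <;> by_cases hb : b = p0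
    · rw [ha, hb]
    · subst ha
      rw [Function.update_self, Function.update_of_ne hb] at hab
      exact absurd hab.symm (hne b)
    · subst hb
      rw [Function.update_self, Function.update_of_ne ha] at hab
      exact absurd hab (hne a)
    · rw [Function.update_of_ne ha, Function.update_of_ne hb] at hab
      exact hg hab
  have hb1 : bval val A (insert t (S.erase s))
      = val ((bigMat A).submatrix id (Function.update (senum S hS) p t)).det := by
    apply bval_spec val hval1 hvalmul A _ hcard1
    · exact hupd_inj _ (senum_injective S hS) p t (fun e he => htS (he ▸ senum_mem S hS e))
    · intro e
      by_cases he : e = p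
      · subst he
        rw [Function.update_self]
        exact Finset.mem_insert_self _ _
      · rw [Function.update_of_ne he]
        refine Finset.mem_insert_of_mem (Finset.mem_erase.mpr ⟨?_, senum_mem S hS e⟩)
        intro hcontra
        exact he (senum_injective S hS (by rw [hcontra, hp]))
  have hb2 : bval val A (insert s (T.erase t))
      = val ((bigMat A).submatrix id (Function.update (senum T hT) k s)).det := by
    apply bval_spec val hval1 hvalmul A _ hcard2
    · exact hupd_inj _ (senum_injective T hT) k s (fun e he => hsT (he ▸ senum_mem T hT e))
    · intro e
      by_cases he : e = k
      · subst he
        rw [Function.update_self]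
        exact Finset.mem_insert_self _ _
      · rw [Function.update_of_ne he]
        refine Finset.mem_insert_of_mem (Finset.mem_erase.mpr ⟨?_, senum_mem T hT e⟩)
        intro hcontra
        exact he (senum_injective T hT (by rw [hcontra, htdef]))
  rw [hb1, hb2, ← hXeq, ← hYeq, ← hvalmul]
  exact hterm

end Big

section Bridge
variable {K : Type*} [Field K] {Γ : Type*} [AddCommGroup Γ] [LinearOrder Γ] [IsOrderedAddMonoid Γ]
variable {E F : Type*} [Fintype E] [Fintype F]

def sbset (I : Finset E) (J : Finset F) : Finset (E ⊕ F) :=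
  Iᶜ.map ⟨Sum.inl, Sum.inl_injective⟩ ∪ J.map ⟨Sum.inr, Sum.inr_injective⟩

@[simp] lemma mem_sbset_inl (I : Finset E) (J : Finset F) (e : E) :
    Sum.inl e ∈ sbset I J ↔ e ∉ I := by
  simp [sbset, Finset.mem_union, Finset.mem_map]

@[simp] lemma mem_sbset_inr (I : Finset E) (J : Finset F) (f : F) :
    Sum.inr f ∈ sbset I J ↔ f ∈ J := by
  simp [sbset, Finset.mem_union, Finset.mem_map]

lemma sbset_card (I : Finset E) (J : Finset F) (h : I.card = J.card) :
    (sbset I J).card = Fintype.card E := by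
  classical
  have hdisj : Disjoint (Iᶜ.map ⟨Sum.inl, Sum.inl_injective⟩)
      (J.map ⟨Sum.inr, Sum.inr_injective⟩) := by
    rw [Finset.disjoint_left]
    rintro x hx hx'
    obtain ⟨a, -, rfl⟩ := Finset.mem_map.mp hx
    obtain ⟨b, -, hb⟩ := Finset.mem_map.mp hx'
    exact Sum.inl_ne_inr (a := a) (b := b) (by simpa using hb.symm)
  rw [sbset, Finset.card_union_of_disjoint hdisj, Finset.card_map, Finset.card_map,
    Finset.card_compl, ← h]
  have := Finset.card_le_univ I
  omega

lemma mu_eq (val : K → WithTop Γ)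
    (hval1 : val 1 = 0) (hvalmul : ∀ x y : K, val (x * y) = val x + val y)
    (A : Matrix E F K) (I : Finset E) (J : Finset F) (h : I.card = J.card) :
    val ((A.submatrix (fun i : Fin I.card => (I.equivFin.symm i : E))
        (fun j : Fin I.card => (J.equivFin.symm (Fin.cast h j) : F))).det)
      = bval val A (sbset I J) := by
  classical
  have hScard : (sbset I J).card = Fintype.card E := sbset_card I J h
  rw [bval, dif_pos hScard]
  set eJI : {x // x ∈ J} ≃ {x // x ∈ I} :=
    J.equivFin.trans ((finCongr h.symm).trans I.equivFin.symm) with heJI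
  set r : ({x // x ∈ Iᶜ} ⊕ {x // x ∈ J}) → E :=
    Sum.elim (fun a => (a : E)) (fun j => (eJI j : E)) with hrdef
  set g : ({x // x ∈ Iᶜ} ⊕ {x // x ∈ J}) → E ⊕ F :=
    Sum.elim (fun a => Sum.inl (a : E)) (fun j => Sum.inr (j : F)) with hgdef
  have hrinj : Function.Injective r := by
    rintro (a | a) (b | b) hab <;> simp only [hrdef, Sum.elim_inl, Sum.elim_inr] at hab
    · exact congrArg Sum.inl (Subtype.ext hab)
    · exact absurd (hab ▸ (eJI b).2) (Finset.mem_compl.mp a.2)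
    · exact absurd (hab ▸ (eJI a).2) (Finset.mem_compl.mp b.2)
    · exact congrArg Sum.inr (eJI.injective (Subtype.ext hab))
  have hginj : Function.Injective g := by
    rintro (a | a) (b | b) hab <;> simp only [hgdef, Sum.elim_inl, Sum.elim_inr,
      Sum.inl.injEq, Sum.inr.injEq, reduceCtorEq] at hab
    · exact congrArg Sum.inl (Subtype.ext hab)
    · exact congrArg Sum.inr (Subtype.ext hab)
  have hκcard : Fintype.card ({x // x ∈ Iᶜ} ⊕ {x // x ∈ J}) = Fintype.card E := by
    rw [Fintype.card_sum, Fintype.card_coe, Fintype.card_coe, Finset.card_compl, ← h]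
    have := Finset.card_le_univ I
    omega
  have hgmem : ∀ x, g x ∈ sbset I J := by
    rintro (a | a)
    · simpa [hgdef] using Finset.mem_compl.mp a.2
    · simpa [hgdef] using a.2
  have step1 : val ((bigMat A).submatrix id (senum (sbset I J) hScard)).det
      = val ((bigMat A).submatrix r g).det := by
    refine aux_valdet_congr val hval1 hvalmul (bigMat A) r g id (senum (sbset I J) hScard)
      hrinj hginj Function.injective_id (senum_injective _ _) ?_ ?_
    · rw [Set.range_id, aux_range_eq r Finset.univ hrinj (fun a => Finset.mem_univ _)
        (by rw [Finset.card_univ, hκcard]), Finset.coe_univ]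
    · rw [aux_range_eq (senum (sbset I J) hScard) (sbset I J) (senum_injective _ _)
        (senum_mem _ _) hScard,
        aux_range_eq g (sbset I J) hginj hgmem (hScard.trans hκcard.symm)]
  have hblock : (bigMat A).submatrix r g
      = Matrix.fromBlocks (1 : Matrix {x // x ∈ Iᶜ} {x // x ∈ Iᶜ} K)
          (Matrix.of fun (a : {x // x ∈ Iᶜ}) (j : {x // x ∈ J}) => A (a : E) (j : F)) 0
          (A.submatrix (fun j : {x // x ∈ J} => (eJI j : E)) (fun j : {x // x ∈ J} => (j : F))) := by
    ext (i | i) (j | j)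
    · simp only [Matrix.submatrix_apply, hrdef, hgdef, Sum.elim_inl, bigMat, Matrix.of_apply,
        Sum.elim_inl, Matrix.fromBlocks_apply₁₁, Matrix.one_apply, Subtype.ext_iff]
    · simp [hrdef, hgdef, bigMat]
    · simp only [Matrix.submatrix_apply, hrdef, hgdef, Sum.elim_inr, Sum.elim_inl, bigMat,
        Matrix.of_apply, Matrix.fromBlocks_apply₂₁, Matrix.zero_apply]
      rw [if_neg]
      intro hcontra
      exact absurd (hcontra ▸ (eJI i).2) (Finset.mem_compl.mp j.2)
    · simp [hrdef, hgdef, bigMat]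
  have step2 : val ((bigMat A).submatrix r g).det
      = val (A.submatrix (fun j : {x // x ∈ J} => (eJI j : E)) (fun j : {x // x ∈ J} => (j : F))).det := by
    rw [hblock, Matrix.det_fromBlocks_zero₂₁, Matrix.det_one, one_mul]
  rw [step1, step2]
  refine (aux_valdet_congr val hval1 hvalmul A
    (fun i : Fin I.card => (I.equivFin.symm i : E))
    (fun j : Fin I.card => (J.equivFin.symm (Fin.cast h j) : F))
    (fun j : {x // x ∈ J} => (eJI j : E)) (fun j : {x // x ∈ J} => (j : F))
    (fun a b hab => (Equiv.injective _) (Subtype.ext hab))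
    (fun a b hab => by
      have := Subtype.ext hab
      have h2 := (J.equivFin.symm.injective this)
      exact Fin.ext (by simpa using congrArg Fin.val h2))
    (fun a b hab => eJI.injective (Subtype.ext hab))
    (fun a b hab => Subtype.ext hab) ?_ ?_).symm
  · have h1 : Set.range (fun j : {x // x ∈ J} => (eJI j : E))
        = Set.range (fun x : {x // x ∈ I} => (x : E)) := by
      rw [show (fun j : {x // x ∈ J} => (eJI j : E))
          = (fun x : {x // x ∈ I} => (x : E)) ∘ eJI from rfl, Set.range_comp,
        eJI.surjective.range_eq, Set.image_univ]
    have h2 : Set.range (fun i : Fin I.card => (I.equivFin.symm i : E))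
        = Set.range (fun x : {x // x ∈ I} => (x : E)) := by
      rw [show (fun i : Fin I.card => (I.equivFin.symm i : E))
          = (fun x : {x // x ∈ I} => (x : E)) ∘ I.equivFin.symm from rfl, Set.range_comp,
        I.equivFin.symm.surjective.range_eq, Set.image_univ]
    rw [h1, h2]
  · have h1 : Set.range (fun j : {x // x ∈ J} => (j : F))
        = Set.range (fun x : {x // x ∈ J} => (x : F)) := rfl
    have h2 : Set.range (fun j : Fin I.card => (J.equivFin.symm (Fin.cast h j) : F))
        = Set.range (fun x : {x // x ∈ J} => (x : F)) := by
      rw [show (fun j : Fin I.card => (J.equivFin.symm (Fin.cast h j) : F))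
          = (fun x : {x // x ∈ J} => (x : F)) ∘ (J.equivFin.symm ∘ Fin.cast h) from rfl,
        Set.range_comp]
      have hsurj : Function.Surjective (J.equivFin.symm ∘ Fin.cast h) := by
        apply Function.Surjective.comp J.equivFin.symm.surjective
        intro x
        exact ⟨Fin.cast h.symm x, rfl⟩
      rw [hsurj.range_eq, Set.image_univ]
    rw [h1, h2]

end Bridge

/-- for a matrix `A` over a field `K` with a non-Archimedean valuation
`val : K → Γ ∪ {∞}`, the valuations of the minors `μ_A(I,J) = val(det [A]_{I,J})`
form a valuated bimatroid on rows `E` and columns `F`. -/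
theorem matrix_minors_isVBimatroid {E F Γ K : Type*} [Fintype E] [Fintype F]
    [AddCommGroup Γ] [LinearOrder Γ] [IsOrderedAddMonoid Γ] [Field K]
    (val : K → WithTop Γ)
    (hval0 : ∀ x : K, val x = ⊤ ↔ x = 0)
    (hval1 : val 1 = 0)
    (hvalmul : ∀ x y : K, val (x * y) = val x + val y)
    (hvaladd : ∀ x y : K, min (val x) (val y) ≤ val (x + y))
    (A : Matrix E F K) :
    IsVBimatroid (fun (I : Finset E) (J : Finset F) =>
      if h : I.card = J.card then
        val ((A.submatrix (fun i : Fin I.card => (I.equivFin.symm i : E))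
          (fun j : Fin I.card => (J.equivFin.symm (Fin.cast h j) : F))).det)
      else ⊤) := by
  classical
  have hmu : ∀ (I : Finset E) (J : Finset F) (h : I.card = J.card),
      (if h' : I.card = J.card then
        val ((A.submatrix (fun i : Fin I.card => (I.equivFin.symm i : E))
          (fun j : Fin I.card => (J.equivFin.symm (Fin.cast h' j) : F))).det)
      else ⊤) = bval val A (sbset I J) := by
    intro I J h
    rw [dif_pos h]
    exact mu_eq val hval1 hvalmul A I J h
  constructor
  · have h0 : (∅ : Finset E).card = (∅ : Finset F).card := by simp
    beta_reduce
    rw [dif_pos h0]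
    haveI : IsEmpty (Fin (∅ : Finset E).card) := by
      rw [Finset.card_empty]; infer_instance
    rw [Matrix.det_isEmpty]
    exact hval1
  · intro I J I2 J2 hIJ hI2J2
    beta_reduce
    rw [hmu I J hIJ, hmu I2 J2 hI2J2]
    constructor
    · -- row exchange
      intro i2 hi2T hi2I
      obtain ⟨t, htT, htS, hle⟩ := gp_b val hval0 hval1 hvalmul hvaladd A (sbset I J)
        (sbset I2 J2) (sbset_card I J hIJ) (sbset_card I2 J2 hI2J2) (Sum.inl i2)
        (by simpa using hi2I) (by simp [hi2T])
      rcases t with i | j2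
      · have hiI : i ∈ I := not_not.mp (by simpa using htS)
        have hiI2 : i ∉ I2 := by simpa using htT
        left
        refine ⟨i, hiI, hiI2, ?_⟩
        have hii2 : i ≠ i2 := fun hh => hi2I (hh ▸ hiI)
        have hc1 : (insert i2 (I.erase i)).card = J.card := by
          rw [Finset.card_insert_of_notMem (fun hmem => hi2I (Finset.mem_of_mem_erase hmem)),
            Finset.card_erase_of_mem hiI]
          have := Finset.card_pos.mpr ⟨i, hiI⟩
          omega
        have hc2 : (insert i (I2.erase i2)).card = J2.card := by
          rw [Finset.card_insert_of_notMem (fun hmem => hiI2 (Finset.mem_of_mem_erase hmem)),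
            Finset.card_erase_of_mem hi2T]
          have := Finset.card_pos.mpr ⟨i2, hi2T⟩
          omega
        rw [hmu _ _ hc1, hmu _ _ hc2]
        have hset1 : sbset (insert i2 (I.erase i)) J
            = insert (Sum.inl i) ((sbset I J).erase (Sum.inl i2)) := by
          ext x
          rcases x with e | f
          · simp only [mem_sbset_inl, Finset.mem_insert, Finset.mem_erase, Finset.mem_compl,
              Sum.inl.injEq, ne_eq]
            by_cases h1 : e = i <;> by_cases h2 : e = i2 <;> simp_all
          · simp [Finset.mem_insert, Finset.mem_erase]
        have hset2 : sbset (insert i (I2.erase i2)) J2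
            = insert (Sum.inl i2) ((sbset I2 J2).erase (Sum.inl i)) := by
          ext x
          rcases x with e | f
          · simp only [mem_sbset_inl, Finset.mem_insert, Finset.mem_erase, Finset.mem_compl,
              Sum.inl.injEq, ne_eq]
            by_cases h1 : e = i <;> by_cases h2 : e = i2 <;> simp_all
          · simp [Finset.mem_insert, Finset.mem_erase]
        rw [hset1, hset2]
        exact hle
      · have hj2J2 : j2 ∈ J2 := by simpa using htT
        have hj2J : j2 ∉ J := by simpa using htS
        right
        refine ⟨j2, hj2J2, hj2J, ?_⟩
        have hc1 : (insert i2 I).card = (insert j2 J).card := by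
          rw [Finset.card_insert_of_notMem hi2I, Finset.card_insert_of_notMem hj2J, hIJ]
        have hc2 : (I2.erase i2).card = (J2.erase j2).card := by
          rw [Finset.card_erase_of_mem hi2T, Finset.card_erase_of_mem hj2J2, hI2J2]
        rw [hmu _ _ hc1, hmu _ _ hc2]
        have hset1 : sbset (insert i2 I) (insert j2 J)
            = insert (Sum.inr j2) ((sbset I J).erase (Sum.inl i2)) := by
          ext x
          rcases x with e | f
          · simp only [mem_sbset_inl, Finset.mem_insert, Finset.mem_erase, Finset.mem_compl,
              ne_eq, reduceCtorEq, Sum.inl.injEq, false_or]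
            by_cases h2 : e = i2 <;> simp_all
          · simp [Finset.mem_insert, Finset.mem_erase]
        have hset2 : sbset (I2.erase i2) (J2.erase j2)
            = insert (Sum.inl i2) ((sbset I2 J2).erase (Sum.inr j2)) := by
          ext x
          rcases x with e | f
          · simp only [mem_sbset_inl, Finset.mem_insert, Finset.mem_erase, Finset.mem_compl,
              ne_eq, reduceCtorEq, Sum.inl.injEq]
            by_cases h2 : e = i2 <;> simp_all
          · simp only [mem_sbset_inr, Finset.mem_insert, Finset.mem_erase, ne_eq,
              reduceCtorEq, Sum.inr.injEq, false_or]
            try (by_cases h2 : f = j2 <;> simp_all)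
        rw [hset1, hset2]
        exact hle
    · -- column exchange
      intro j hjJ hjJ2
      obtain ⟨t, htT, htS, hle⟩ := gp_b val hval0 hval1 hvalmul hvaladd A (sbset I J)
        (sbset I2 J2) (sbset_card I J hIJ) (sbset_card I2 J2 hI2J2) (Sum.inr j)
        (by simpa using hjJ) (by simpa using hjJ2)
      rcases t with i | j2
      · have hiI : i ∈ I := not_not.mp (by simpa using htS)
        have hiI2 : i ∉ I2 := by simpa using htT
        left
        refine ⟨i, hiI, hiI2, ?_⟩
        have hc1 : (I.erase i).card = (J.erase j).card := by
          rw [Finset.card_erase_of_mem hiI, Finset.card_erase_of_mem hjJ, hIJ]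
        have hc2 : (insert i I2).card = (insert j J2).card := by
          rw [Finset.card_insert_of_notMem hiI2, Finset.card_insert_of_notMem hjJ2, hI2J2]
        rw [hmu _ _ hc1, hmu _ _ hc2]
        have hset1 : sbset (I.erase i) (J.erase j)
            = insert (Sum.inl i) ((sbset I J).erase (Sum.inr j)) := by
          ext x
          rcases x with e | f
          · simp only [mem_sbset_inl, Finset.mem_insert, Finset.mem_erase, Finset.mem_compl,
              ne_eq, reduceCtorEq, Sum.inl.injEq]
            by_cases h1 : e = i <;> simp_all
          · simp only [mem_sbset_inr, Finset.mem_insert, Finset.mem_erase, ne_eq,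
              reduceCtorEq, Sum.inr.injEq, false_or]
            try (by_cases h1 : f = j <;> simp_all)
        have hset2 : sbset (insert i I2) (insert j J2)
            = insert (Sum.inr j) ((sbset I2 J2).erase (Sum.inl i)) := by
          ext x
          rcases x with e | f
          · simp only [mem_sbset_inl, Finset.mem_insert, Finset.mem_erase, Finset.mem_compl,
              ne_eq, reduceCtorEq, Sum.inl.injEq, false_or]
            by_cases h1 : e = i <;> simp_all
          · simp [Finset.mem_insert, Finset.mem_erase]
        rw [hset1, hset2]
        exact hle
      · have hj2J2 : j2 ∈ J2 := by simpa using htT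
        have hj2J : j2 ∉ J := by simpa using htS
        right
        refine ⟨j2, hj2J2, hj2J, ?_⟩
        have hjj2 : j ≠ j2 := fun hh => hj2J (hh ▸ hjJ)
        have hc1 : I.card = (insert j2 (J.erase j)).card := by
          rw [Finset.card_insert_of_notMem (fun hmem => hj2J (Finset.mem_of_mem_erase hmem)),
            Finset.card_erase_of_mem hjJ]
          have := Finset.card_pos.mpr ⟨j, hjJ⟩
          omega
        have hc2 : I2.card = (insert j (J2.erase j2)).card := by
          rw [Finset.card_insert_of_notMem (fun hmem => hjJ2 (Finset.mem_of_mem_erase hmem)),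
            Finset.card_erase_of_mem hj2J2]
          have := Finset.card_pos.mpr ⟨j2, hj2J2⟩
          omega
        rw [hmu _ _ hc1, hmu _ _ hc2]
        have hset1 : sbset I (insert j2 (J.erase j))
            = insert (Sum.inr j2) ((sbset I J).erase (Sum.inr j)) := by
          ext x
          rcases x with e | f
          · simp [Finset.mem_insert, Finset.mem_erase]
          · simp only [mem_sbset_inr, Finset.mem_insert, Finset.mem_erase, ne_eq,
              Sum.inr.injEq]
            try (by_cases h1 : f = j <;> by_cases h2 : f = j2 <;> simp_all)
        have hset2 : sbset I2 (insert j (J2.erase j2))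
            = insert (Sum.inr j) ((sbset I2 J2).erase (Sum.inr j2)) := by
          ext x
          rcases x with e | f
          · simp [Finset.mem_insert, Finset.mem_erase]
          · simp only [mem_sbset_inr, Finset.mem_insert, Finset.mem_erase, ne_eq,
              Sum.inr.injEq]
            try (by_cases h1 : f = j <;> by_cases h2 : f = j2 <;> simp_all)
        rw [hset1, hset2]
        exact hle
end
end

section
/- Let M be a valuated matroid of rank r on a finite set E and 0 ≤ ρ ≤ r. Then the restriction of the independent-set extension ν̃_M to binom(E, ρ) defines a valuated matroid M_ρ of rank ρ on E (i.e., it satisfies the valuated symmetric basis exchange property for ρ-element subsets). -/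
open Finset
open scoped Classical

noncomputable section

/-!
On `k`-sets with `k < r`, `ν̃` is the truncation `S ↦ min {ν̃ (S ∪ {x}) : x ∉ S}` of its values on
`(k+1)`-sets, so by descending induction from `r` it suffices to show that truncating by one
preserves the exchange property. Given `S`, `T`, `s ∈ S \ T` and optimal extensions `S + x`,
`T + y`, exchanging `s` between `S + x` and `T + y` in rank `k + 1` already gives the claim unless
the element returned is `y` (or `y = s`). Then a second exchange, of `x` between `S - s + x + y`
and `T + s`, either gives the claim or shows that `T + x` is optimal for `T` as well, and exchanging
`s` between `S + x` and `T + x` finishes.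
-/

theorem Finset.card_exchange {α : Type*} {s : Finset α} {a b : α} (ha : a ∉ s) (hb : b ∈ s) :
    #(insert a (s.erase b)) = #s := by
  rw [card_insert_of_notMem (fun h => ha (mem_of_mem_erase h)), card_erase_add_one hb]

section Truncation

variable {E α : Type*} [Fintype E]

def truncation [SemilatticeInf α] [OrderTop α] (f : Finset E → α) (S : Finset E) : α :=
  (univ \ S).inf fun x => f (insert x S)

theorem truncation_le [SemilatticeInf α] [OrderTop α] {f : Finset E → α} {S : Finset E} {x : E}
    (hx : x ∉ S) : truncation f S ≤ f (insert x S) :=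
  inf_le (by simpa using hx)

theorem exists_truncation_eq [LinearOrder α] [OrderTop α] {f : Finset E → α} {S : Finset E}
    (hS : truncation f S ≠ ⊤) : ∃ x ∉ S, f (insert x S) = truncation f S := by
  have hne : (univ \ S).Nonempty := by
    by_contra h
    rw [not_nonempty_iff_eq_empty] at h
    simp [truncation, h] at hS
  obtain ⟨x, hx, hfx⟩ := exists_mem_eq_inf _ hne fun x => f (insert x S)
  exact ⟨x, by simpa using hx, hfx.symm⟩

end Truncation

section Exchange

variable {E Γ : Type*} [AddCommGroup Γ] [LinearOrder Γ] [IsOrderedAddMonoid Γ]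

theorem ExchProp.congr {k : ℕ} {f g : Finset E → WithTop Γ} (hf : ExchProp k f)
    (hfg : ∀ S : Finset E, #S = k → f S = g S) : ExchProp k g := by
  intro S T hS hT s hs hsT
  obtain ⟨t, ht, htS, hle⟩ := hf S T hS hT s hs hsT
  refine ⟨t, ht, htS, ?_⟩
  rwa [← hfg S hS, ← hfg T hT, ← hfg _ (by rw [card_exchange htS hs, hS]),
    ← hfg _ (by rw [card_exchange hsT ht, hT])]

variable [Fintype E] {f : Finset E → WithTop Γ} {k : ℕ} {S T : Finset E} {s : E}

theorem exists_exch_truncation_le {t a b : E} {c : WithTop Γ} (ht : t ∈ T) (htS : t ∉ S)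
    (ha : a ∉ insert t (S.erase s)) (hb : b ∉ insert s (T.erase t))
    (hle : f (insert a (insert t (S.erase s))) + f (insert b (insert s (T.erase t))) ≤ c) :
    ∃ t ∈ T, t ∉ S ∧
      truncation f (insert t (S.erase s)) + truncation f (insert s (T.erase t)) ≤ c :=
  ⟨t, ht, htS, (add_le_add (truncation_le ha) (truncation_le hb)).trans hle⟩

theorem exists_exch_truncation_le_of_insert (hf : ExchProp (k + 1) f) (hS : #S = k)
    (hT : #T = k) (hs : s ∈ S) (hsT : s ∉ T) {x : E} (hxS : x ∉ S) (hxT : x ∉ T) :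
    ∃ t ∈ T, t ∉ S ∧
      truncation f (insert t (S.erase s)) + truncation f (insert s (T.erase t)) ≤
        f (insert x S) + f (insert x T) := by
  obtain ⟨t, ht, htS, hle⟩ := hf (insert x S) (insert x T)
    (by rw [card_insert_of_notMem hxS, hS]) (by rw [card_insert_of_notMem hxT, hT]) s
    (mem_insert_of_mem hs) (by grind)
  have hA : insert t ((insert x S).erase s) = insert x (insert t (S.erase s)) := by grind
  have hB : insert s ((insert x T).erase t) = insert x (insert s (T.erase t)) := by grind
  rw [hA, hB] at hle
  exact exists_exch_truncation_le (by grind) (by grind) (by grind) (by grind) hle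

theorem exists_exch_truncation_le_of_insert_erase (hf : ExchProp (k + 1) f) (hS : #S = k)
    (hT : #T = k) (hs : s ∈ S) (hsT : s ∉ T) {x a : E} (hxS : x ∉ S)
    (hfx : f (insert x S) = truncation f S) (hS_top : truncation f S ≠ ⊤)
    (haS : a ∉ S.erase s) (hax : a ≠ x)
    (hle : f (insert a (insert x (S.erase s))) + f (insert s T) ≤
      truncation f S + truncation f T) :
    ∃ t ∈ T, t ∉ S ∧
      truncation f (insert t (S.erase s)) + truncation f (insert s (T.erase t)) ≤
        truncation f S + truncation f T := by
  by_cases hxT : x ∈ T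
  · have hB : insert x (insert s (T.erase x)) = insert s T := by grind
    exact exists_exch_truncation_le hxT hxS (by grind) (by grind) (hB ▸ hle)
  set C := insert a (insert x (S.erase s))
  have hk : 1 ≤ k := hS ▸ card_pos.mpr ⟨s, hs⟩
  have hC : #C = k + 1 := by
    rw [card_insert_of_notMem (by grind), card_insert_of_notMem (by grind),
      card_erase_of_mem hs, hS]
    omega
  obtain ⟨w, hw, hwC, hle'⟩ := hf C (insert s T) hC (by rw [card_insert_of_notMem hsT, hT]) x
    (by grind) (by grind)
  replace hle := hle'.trans hle
  rcases eq_or_ne w s with rfl | hws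
  · have hA : insert w (C.erase x) = insert a S := by grind
    have hB : insert x ((insert w T).erase w) = insert x T := by grind
    rw [hA, hB] at hle
    have hxT_opt : f (insert x T) ≤ truncation f T := (WithTop.add_le_add_iff_left hS_top).mp
      ((add_le_add_left (truncation_le (by grind)) _).trans hle)
    obtain ⟨t, ht, htS, h⟩ := exists_exch_truncation_le_of_insert hf hS hT hs hsT hxS hxT
    exact ⟨t, ht, htS, h.trans (hfx ▸ add_le_add_right hxT_opt _)⟩
  · have hA : insert w (C.erase x) = insert a (insert w (S.erase s)) := by grind
    have hB : insert x ((insert s T).erase w) = insert x (insert s (T.erase w)) := by grind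
    rw [hA, hB] at hle
    exact exists_exch_truncation_le (by grind) (by grind) (by grind) (by grind) hle

theorem exchProp_truncation (hf : ExchProp (k + 1) f) : ExchProp k (truncation f) := by
  intro S T hS hT s hs hsT
  by_cases htop : truncation f S = ⊤ ∨ truncation f T = ⊤
  · obtain ⟨t, ht, htS⟩ : ∃ t ∈ T, t ∉ S := by
      by_contra! hTS
      exact hsT (eq_of_subset_of_card_le hTS (by omega) ▸ hs)
    exact ⟨t, ht, htS, by rcases htop with h | h <;> simp [h]⟩
  push Not at htop
  obtain ⟨x, hxS, hfx⟩ := exists_truncation_eq htop.1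
  obtain ⟨y, hyT, hfy⟩ := exists_truncation_eq htop.2
  rcases eq_or_ne y s with rfl | hys
  · have hA : insert y (insert x (S.erase y)) = insert x S := by grind
    exact exists_exch_truncation_le_of_insert_erase hf hS hT hs hsT hxS hfx htop.1 (a := y)
      (by simp) (by grind) (by rw [hA, hfx, hfy])
  obtain ⟨v, hv, hvS, hle⟩ := hf (insert x S) (insert y T)
    (by rw [card_insert_of_notMem hxS, hS]) (by rw [card_insert_of_notMem hyT, hT]) s
    (mem_insert_of_mem hs) (by grind)
  rw [hfx, hfy] at hle
  rcases eq_or_ne v y with rfl | hvy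
  · have hA : insert v ((insert x S).erase s) = insert v (insert x (S.erase s)) := by grind
    have hB : insert s ((insert v T).erase v) = insert s T := by grind
    rw [hA, hB] at hle
    exact exists_exch_truncation_le_of_insert_erase hf hS hT hs hsT hxS hfx htop.1 (by grind)
      (by grind) hle
  · have hA : insert v ((insert x S).erase s) = insert x (insert v (S.erase s)) := by grind
    have hB : insert s ((insert y T).erase v) = insert y (insert s (T.erase v)) := by grind
    rw [hA, hB] at hle
    exact exists_exch_truncation_le (by grind) (by grind) (by grind) (by grind) hle

end Exchange

section Extension

variable {E Γ : Type*} [Fintype E] [AddCommGroup Γ] [LinearOrder Γ] [IsOrderedAddMonoid Γ]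
  {r : ℕ} {ν : Finset E → WithTop Γ}

theorem extν_le {S B : Finset E} (hB : #B = r) (hSB : S ⊆ B) : extν r ν S ≤ ν B :=
  inf_le (by simp [hB, hSB])

theorem extν_mono : Monotone (extν r ν) := fun _ _ h =>
  Finset.le_inf fun _ hB => extν_le (mem_powersetCard.mp (mem_filter.mp hB).1).2
    (h.trans (mem_filter.mp hB).2)

theorem extν_of_card_eq {S : Finset E} (hS : #S = r) : extν r ν S = ν S :=
  (extν_le hS subset_rfl).antisymm <| Finset.le_inf fun B hB => by
    simp only [mem_filter, mem_powersetCard] at hB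
    rw [eq_of_subset_of_card_le hB.2 (by rw [hB.1.2, hS])]

theorem extν_eq_truncation {S : Finset E} (hS : #S < r) :
    extν r ν S = truncation (extν r ν) S := by
  refine le_antisymm (Finset.le_inf fun x _ => extν_mono (subset_insert x S))
    (Finset.le_inf fun B hB => ?_)
  simp only [mem_filter, mem_powersetCard] at hB
  obtain ⟨x, hxB, hxS⟩ := not_subset.mp fun h => (card_le_card h).not_gt (hB.1.2 ▸ hS)
  exact (truncation_le hxS).trans (extν_le hB.1.2 (insert_subset hxB hB.2))

theorem exchProp_extν (hν : ExchProp r ν) {ρ : ℕ} (hρ : ρ ≤ r) : ExchProp ρ (extν r ν) := by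
  induction hρ using Nat.decreasingInduction with
  | of_succ k hk ih =>
    exact (exchProp_truncation ih).congr fun S hS => (extν_eq_truncation (hS ▸ hk)).symm
  | self => exact hν.congr fun S hS => (extν_of_card_eq hS).symm

theorem exists_extν_ne_top (hν : ∃ B : Finset E, #B = r ∧ ν B ≠ ⊤) {ρ : ℕ} (hρ : ρ ≤ r) :
    ∃ S : Finset E, #S = ρ ∧ extν r ν S ≠ ⊤ := by
  obtain ⟨B, hB, hνB⟩ := hν
  obtain ⟨S, hSB, hS⟩ := exists_subset_card_eq (hB ▸ hρ)
  exact ⟨S, hS, ne_top_of_le_ne_top hνB (extν_le hB hSB)⟩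

end Extension

/-- for every `0 ≤ ρ ≤ r`, the restriction of the independent-set extension
`ν̃` to `ρ`-element subsets is a valuated matroid of rank `ρ`. -/
theorem extension_truncation_isVMatroid {E Γ : Type*} [Fintype E] [AddCommGroup Γ] [LinearOrder Γ] [IsOrderedAddMonoid Γ]
    (r : ℕ) (ν : Finset E → WithTop Γ) (hM : IsVMatroid r ν)
    (ρ : ℕ) (hρ : ρ ≤ r) :
    IsVMatroid ρ (extν r ν) :=
  ⟨exists_extν_ne_top hM.1 hρ, exchProp_extν hM.2 hρ⟩
end
end

section
/- Let E and F be finite sets and A ∈ Γ̄^{E×F} a matrix with entries in Γ̄ ⊆ ℝ̄. Define μ_A(I,J) = tropdet [A]_{I,J} := min over bijections σ : I → J of Σ_{i∈I} a_{i,σ(i)}, with μ_A(∅,∅) = 0. Then μ_A is the minor valuation function of a valuated bimatroid (the Stiefel bimatroid St(A)). -/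
open Finset
open scoped Classical

noncomputable section

/-- The tropical determinant of the minor of `A : E → F → ℝ ∪ {∞}` on rows `I` and
columns `J` (of equal cardinality): the minimum over all bijections `I → J` of the sum
of the corresponding entries. -/
def tropMinor {E F : Type*} (A : E → F → WithTop ℝ) (I : Finset E) (J : Finset F)
    (h : I.card = J.card) : WithTop ℝ :=
  (Finset.univ : Finset (Equiv.Perm (Fin I.card))).inf
    (fun σ => ∑ i : Fin I.card,
      A (I.equivFin.symm i : E) (J.equivFin.symm (Fin.cast h (σ i)) : F))


section Aux

variable {α β : Type*}

/-- weight of a matching `f` on rows `I`. -/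
def wtA (A : α → β → WithTop ℝ) (I : Finset α) (f : α → β) : WithTop ℝ :=
  ∑ i ∈ I, A i (f i)

lemma bijOn_erase {f : α → β} {I : Finset α} {J : Finset β}
    (hf : Set.BijOn f ↑I ↑J) {a : α} (ha : a ∈ I) :
    Set.BijOn f ↑(I.erase a) ↑(J.erase (f a)) := by
  refine ⟨?_, fun x hx y hy hxy => hf.injOn ?_ ?_ hxy, ?_⟩
  · intro x hx
    simp only [coe_erase, Set.mem_diff, Set.mem_singleton_iff] at hx ⊢
    exact ⟨hf.mapsTo hx.1, fun hc => hx.2 (hf.injOn hx.1 (by exact_mod_cast ha) hc)⟩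
  · exact (by simpa using hx : x ∈ ↑I ∧ x ≠ a).1
  · exact (by simpa using hy : y ∈ ↑I ∧ y ≠ a).1
  · intro y hy
    simp only [coe_erase, Set.mem_diff, Set.mem_singleton_iff] at hy
    obtain ⟨x, hx, rfl⟩ := hf.surjOn hy.1
    refine ⟨x, ?_, rfl⟩
    simp only [coe_erase, Set.mem_diff, Set.mem_singleton_iff]
    exact ⟨hx, fun hc => hy.2 (by rw [hc])⟩

lemma bijOn_update {f : α → β} {I : Finset α} {J : Finset β}
    (hf : Set.BijOn f ↑I ↑J) {a : α} {b : β} (ha : a ∉ I) (hb : b ∉ J) :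
    Set.BijOn (Function.update f a b) ↑(insert a I) ↑(insert b J) := by
  simp only [coe_insert]
  refine ⟨?_, ?_, ?_⟩
  · rintro x (rfl | hx)
    · simp
    · have hxa : x ≠ a := fun hc => ha (by rwa [hc] at hx)
      rw [Function.update_of_ne hxa]
      exact Set.mem_insert_of_mem _ (hf.mapsTo hx)
  · intro x hx y hy hxy
    rcases hx with rfl | hx <;> rcases hy with rfl | hy
    · rfl
    · exfalso
      have hya : y ≠ x := fun hc => ha (Finset.mem_coe.mp (hc ▸ hy))
      rw [Function.update_self, Function.update_of_ne hya] at hxy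
      have hJ : f y ∈ (J : Set β) := hf.mapsTo hy
      rw [← hxy] at hJ
      exact hb hJ
    · exfalso
      have hxa : x ≠ y := fun hc => ha (Finset.mem_coe.mp (hc ▸ hx))
      rw [Function.update_of_ne hxa, Function.update_self] at hxy
      have hJ : f x ∈ (J : Set β) := hf.mapsTo hx
      rw [hxy] at hJ
      exact hb hJ
    · have hxa : x ≠ a := fun hc => ha (Finset.mem_coe.mp (hc ▸ hx))
      have hya : y ≠ a := fun hc => ha (Finset.mem_coe.mp (hc ▸ hy))
      rw [Function.update_of_ne hxa, Function.update_of_ne hya] at hxy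
      exact hf.injOn hx hy hxy
  · rintro y (rfl | hy)
    · exact ⟨a, Set.mem_insert _ _, by simp⟩
    · obtain ⟨x, hx, rfl⟩ := hf.surjOn hy
      have hxa : x ≠ a := fun hc => ha (by rwa [hc] at hx)
      exact ⟨x, Set.mem_insert_of_mem _ hx, by rw [Function.update_of_ne hxa]⟩

lemma wtA_insert (A : α → β → WithTop ℝ) {I : Finset α} {a : α} (ha : a ∉ I) (f : α → β) :
    wtA A (insert a I) f = A a (f a) + wtA A I f := Finset.sum_insert ha

lemma wtA_erase (A : α → β → WithTop ℝ) {I : Finset α} {a : α} (ha : a ∈ I) (f : α → β) :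
    A a (f a) + wtA A (I.erase a) f = wtA A I f := Finset.add_sum_erase I (fun i => A i (f i)) ha

lemma wtA_congr (A : α → β → WithTop ℝ) {I : Finset α} {f g : α → β}
    (h : ∀ i ∈ I, f i = g i) : wtA A I f = wtA A I g :=
  Finset.sum_congr rfl fun i hi => by rw [h i hi]

lemma wtA_update (A : α → β → WithTop ℝ) {I : Finset α} {a : α} (ha : a ∉ I) (f : α → β) (b : β) :
    wtA A I (Function.update f a b) = wtA A I f :=
  wtA_congr A fun i hi => Function.update_of_ne (fun hc => ha (by rw [← hc]; exact hi)) _ _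

lemma exchange_aux (A : α → β → WithTop ℝ) :
    ∀ (n : ℕ) (I2 : Finset α), I2.card ≤ n → ∀ (J2 : Finset β) (I : Finset α) (J : Finset β)
      (f g : α → β), Set.BijOn f ↑I ↑J → Set.BijOn g ↑I2 ↑J2 →
      ∀ i2 ∈ I2, i2 ∉ I →
      (∃ i ∈ I, i ∉ I2 ∧ f i ∈ J2 ∧ ∃ p q : α → β,
        Set.BijOn p ↑(insert i2 (I.erase i)) ↑J ∧ Set.BijOn q ↑(insert i (I2.erase i2)) ↑J2 ∧
        wtA A (insert i2 (I.erase i)) p + wtA A (insert i (I2.erase i2)) q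
          = wtA A I f + wtA A I2 g) ∨
      (∃ j2 ∈ J2, j2 ∉ J ∧ ∃ p q : α → β,
        Set.BijOn p ↑(insert i2 I) ↑(insert j2 J) ∧ Set.BijOn q ↑(I2.erase i2) ↑(J2.erase j2) ∧
        wtA A (insert i2 I) p + wtA A (I2.erase i2) q = wtA A I f + wtA A I2 g) := by
  intro n
  induction n with
  | zero =>
    intro I2 hc J2 I J f g hf hg i2 hi2 _
    rw [Nat.le_zero, Finset.card_eq_zero] at hc
    simp [hc] at hi2
  | succ n ih =>
    intro I2 hc J2 I J f g hf hg i2 hi2 hi2I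
    have hj1J2 : g i2 ∈ J2 := by exact_mod_cast hg.mapsTo (by exact_mod_cast hi2)
    by_cases hj1J : g i2 ∈ J
    · -- g i2 ∈ J : follow the path through f
      obtain ⟨i1, hi1I', hfi1⟩ := hf.surjOn (by exact_mod_cast hj1J)
      have hi1I : i1 ∈ I := by exact_mod_cast hi1I'
      have hi1i2 : i1 ≠ i2 := fun hcc => hi2I (hcc ▸ hi1I)
      -- the modified first matching ft on (insert i2 (I.erase i1)) → J
      set ft := Function.update f i2 (g i2) with hftdef
      have hi2e : i2 ∉ I.erase i1 := fun hcc => hi2I (Finset.mem_of_mem_erase hcc)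
      have hgj1e : g i2 ∉ J.erase (g i2) := Finset.notMem_erase _ _
      have hft : Set.BijOn ft ↑(insert i2 (I.erase i1)) ↑J := by
        have h1 := bijOn_update (b := g i2) (bijOn_erase hf hi1I) hi2e (hfi1 ▸ hgj1e)
        rwa [hfi1, Finset.insert_erase hj1J] at h1
      have hfti2 : ft i2 = g i2 := Function.update_self _ _ _
      -- weight identity for ft
      have E1 : wtA A (insert i2 (I.erase i1)) ft + A i1 (g i2)
          = wtA A I f + A i2 (g i2) := by
        rw [wtA_insert A hi2e, hfti2, wtA_update A hi2e]
        have := wtA_erase A hi1I f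
        rw [hfi1] at this
        rw [← this]
        abel
      -- the restricted second matching
      have hgt : Set.BijOn g ↑(I2.erase i2) ↑(J2.erase (g i2)) := bijOn_erase hg hi2
      have E2 : A i2 (g i2) + wtA A (I2.erase i2) g = wtA A I2 g := wtA_erase A hi2 g
      by_cases hi1I2 : i1 ∈ I2
      · -- recurse
        have hcard : (I2.erase i2).card ≤ n := by
          have := Finset.card_erase_of_mem hi2
          omega
        have hi1mem : i1 ∈ I2.erase i2 := Finset.mem_erase.mpr ⟨hi1i2, hi1I2⟩
        have hi1not : i1 ∉ insert i2 (I.erase i1) := by simp [hi1i2]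
        rcases ih (I2.erase i2) hcard (J2.erase (g i2)) (insert i2 (I.erase i1)) J ft g
            hft hgt i1 hi1mem hi1not with
          ⟨i, hiT, hiT2, hfti, p', q', hp', hq', hw'⟩ | ⟨j2, hj2T, hj2J, p', q', hp', hq', hw'⟩
        · -- case (a') from IH
          left
          have hftine : ft i ≠ g i2 := by
            intro hcc
            exact Finset.notMem_erase (g i2) J2 (hcc ▸ hfti)
          have hii2 : i ≠ i2 := fun hcc => hftine (hcc ▸ hfti2)
          have hie : i ∈ I.erase i1 := by
            rcases Finset.mem_insert.mp hiT with h | h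
            · exact absurd h hii2
            · exact h
          have hiI : i ∈ I := Finset.mem_of_mem_erase hie
          have hii1 : i ≠ i1 := Finset.ne_of_mem_erase hie
          have hiI2 : i ∉ I2 := fun hcc =>
            hiT2 (Finset.mem_erase.mpr ⟨hii2, hcc⟩)
          have hfi : f i = ft i := (Function.update_of_ne hii2 _ _).symm
          have hfiJ2 : f i ∈ J2 := by
            rw [hfi]; exact Finset.mem_of_mem_erase hfti
          refine ⟨i, hiI, hiI2, hfiJ2, p', Function.update q' i1 (g i2), ?_, ?_, ?_⟩
          · -- domain identity S1
            have S1 : insert i1 ((insert i2 (I.erase i1)).erase i) = insert i2 (I.erase i) := by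
              ext x
              simp only [Finset.mem_insert, Finset.mem_erase]
              constructor
              · rintro (rfl | ⟨hxi, (rfl | ⟨hxi1, hxI⟩)⟩)
                · exact Or.inr ⟨Ne.symm hii1, hi1I⟩
                · exact Or.inl rfl
                · exact Or.inr ⟨hxi, hxI⟩
              · rintro (rfl | ⟨hxi, hxI⟩)
                · exact Or.inr ⟨Ne.symm hii2, Or.inl rfl⟩
                · by_cases hx1 : x = i1
                  · exact Or.inl hx1
                  · exact Or.inr ⟨hxi, Or.inr ⟨hx1, hxI⟩⟩
            rwa [S1] at hp'
          · -- q = update q' i1 (g i2)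
            have hi1nq : i1 ∉ insert i ((I2.erase i2).erase i1) := by
              simp [Ne.symm hii1]
            have hq := bijOn_update hq' hi1nq (Finset.notMem_erase _ _)
            have S2 : insert i1 (insert i ((I2.erase i2).erase i1)) = insert i (I2.erase i2) := by
              rw [Finset.insert_comm, Finset.insert_erase hi1mem]
            rwa [S2, Finset.insert_erase hj1J2] at hq
          · -- weights in case (a')
            have S1 : insert i1 ((insert i2 (I.erase i1)).erase i) = insert i2 (I.erase i) := by
              ext x
              simp only [Finset.mem_insert, Finset.mem_erase]
              constructor
              · rintro (rfl | ⟨hxi, (rfl | ⟨hxi1, hxI⟩)⟩)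
                · exact Or.inr ⟨Ne.symm hii1, hi1I⟩
                · exact Or.inl rfl
                · exact Or.inr ⟨hxi, hxI⟩
              · rintro (rfl | ⟨hxi, hxI⟩)
                · exact Or.inr ⟨Ne.symm hii2, Or.inl rfl⟩
                · by_cases hx1 : x = i1
                  · exact Or.inl hx1
                  · exact Or.inr ⟨hxi, Or.inr ⟨hx1, hxI⟩⟩
            have hi1nq : i1 ∉ insert i ((I2.erase i2).erase i1) := by
              simp [Ne.symm hii1]
            have S2 : insert i1 (insert i ((I2.erase i2).erase i1)) = insert i (I2.erase i2) := by
              rw [Finset.insert_comm, Finset.insert_erase hi1mem]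
            rw [← S1, ← S2, wtA_insert A hi1nq, Function.update_self, wtA_update A hi1nq]
            calc wtA A (insert i1 ((insert i2 (I.erase i1)).erase i)) p'
                  + (A i1 (g i2) + wtA A (insert i ((I2.erase i2).erase i1)) q')
                = (wtA A (insert i1 ((insert i2 (I.erase i1)).erase i)) p'
                  + wtA A (insert i ((I2.erase i2).erase i1)) q') + A i1 (g i2) := by abel
              _ = (wtA A (insert i2 (I.erase i1)) ft + wtA A (I2.erase i2) g) + A i1 (g i2) := by
                    rw [hw']
              _ = (wtA A (insert i2 (I.erase i1)) ft + A i1 (g i2)) + wtA A (I2.erase i2) g := by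
                    abel
              _ = (wtA A I f + A i2 (g i2)) + wtA A (I2.erase i2) g := by rw [E1]
              _ = wtA A I f + (A i2 (g i2) + wtA A (I2.erase i2) g) := by abel
              _ = wtA A I f + wtA A I2 g := by rw [E2]
        · -- case (b') from IH
          right
          have hj2J2 : j2 ∈ J2 := Finset.mem_of_mem_erase hj2T
          have hj2j1 : j2 ≠ g i2 := Finset.ne_of_mem_erase hj2T
          have S3 : insert i1 (insert i2 (I.erase i1)) = insert i2 I := by
            rw [Finset.insert_comm, Finset.insert_erase hi1I]
          have hi1nq : i1 ∉ (I2.erase i2).erase i1 := Finset.notMem_erase _ _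
          have hgnot : g i2 ∉ (J2.erase (g i2)).erase j2 := fun hcc =>
            Finset.notMem_erase (g i2) J2 (Finset.mem_of_mem_erase hcc)
          have hq := bijOn_update hq' hi1nq hgnot
          have S4 : insert i1 ((I2.erase i2).erase i1) = I2.erase i2 :=
            Finset.insert_erase hi1mem
          have S5 : insert (g i2) ((J2.erase (g i2)).erase j2) = J2.erase j2 := by
            rw [Finset.erase_right_comm]
            exact Finset.insert_erase (Finset.mem_erase.mpr ⟨Ne.symm hj2j1, hj1J2⟩)
          refine ⟨j2, hj2J2, hj2J, p', Function.update q' i1 (g i2), ?_, ?_, ?_⟩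
          · rwa [S3] at hp'
          · rwa [S4, S5] at hq
          · rw [← S3, ← S4, wtA_insert A hi1nq, Function.update_self, wtA_update A hi1nq]
            calc wtA A (insert i1 (insert i2 (I.erase i1))) p'
                  + (A i1 (g i2) + wtA A ((I2.erase i2).erase i1) q')
                = (wtA A (insert i1 (insert i2 (I.erase i1))) p'
                  + wtA A ((I2.erase i2).erase i1) q') + A i1 (g i2) := by abel
              _ = (wtA A (insert i2 (I.erase i1)) ft + wtA A (I2.erase i2) g) + A i1 (g i2) := by
                    rw [hw']
              _ = (wtA A (insert i2 (I.erase i1)) ft + A i1 (g i2)) + wtA A (I2.erase i2) g := by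
                    abel
              _ = (wtA A I f + A i2 (g i2)) + wtA A (I2.erase i2) g := by rw [E1]
              _ = wtA A I f + (A i2 (g i2) + wtA A (I2.erase i2) g) := by abel
              _ = wtA A I f + wtA A I2 g := by rw [E2]
      · -- i1 ∉ I2 : direct exchange, option (a)
        left
        have hi1ne : i1 ∉ I2.erase i2 := fun hcc => hi1I2 (Finset.mem_of_mem_erase hcc)
        have hq : Set.BijOn (Function.update g i1 (g i2)) ↑(insert i1 (I2.erase i2)) ↑J2 := by
          have h1 := bijOn_update hgt hi1ne (Finset.notMem_erase _ _)
          rwa [Finset.insert_erase hj1J2] at h1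
        refine ⟨i1, hi1I, hi1I2, hfi1.symm ▸ hj1J2, ft, Function.update g i1 (g i2),
          hft, hq, ?_⟩
        rw [wtA_insert A hi1ne, Function.update_self, wtA_update A hi1ne]
        calc wtA A (insert i2 (I.erase i1)) ft + (A i1 (g i2) + wtA A (I2.erase i2) g)
            = (wtA A (insert i2 (I.erase i1)) ft + A i1 (g i2)) + wtA A (I2.erase i2) g := by abel
          _ = (wtA A I f + A i2 (g i2)) + wtA A (I2.erase i2) g := by rw [E1]
          _ = wtA A I f + (A i2 (g i2) + wtA A (I2.erase i2) g) := by abel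
          _ = wtA A I f + wtA A I2 g := by rw [E2]
    · -- g i2 ∉ J : direct option (b)
      right
      refine ⟨g i2, hj1J2, hj1J, Function.update f i2 (g i2), g,
        bijOn_update hf hi2I hj1J, bijOn_erase hg hi2, ?_⟩
      rw [wtA_insert A hi2I, Function.update_self, wtA_update A hi2I]
      calc A i2 (g i2) + wtA A I f + wtA A (I2.erase i2) g
          = wtA A I f + (A i2 (g i2) + wtA A (I2.erase i2) g) := by abel
        _ = wtA A I f + wtA A I2 g := by rw [wtA_erase A hi2 g]


end Aux

section Bridge
variable {E F : Type*}

lemma tropMinor_le_wtA (A : E → F → WithTop ℝ) {I : Finset E} {J : Finset F}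
    (h : I.card = J.card) {f : E → F} (hf : Set.BijOn f ↑I ↑J) :
    tropMinor A I J h ≤ wtA A I f := by
  let e0 : ↥(↑I : Set E) ≃ ↥(↑J : Set F) := hf.equiv f
  let e : {x // x ∈ I} ≃ {y // y ∈ J} :=
    ((Equiv.subtypeEquivRight (fun x => (Finset.mem_coe).symm)).trans e0).trans
      (Equiv.subtypeEquivRight (fun y => Finset.mem_coe))
  have he : ∀ x : {x // x ∈ I}, (e x : F) = f x := fun x => rfl
  let σ : Equiv.Perm (Fin I.card) :=
    (I.equivFin.symm.trans (e.trans J.equivFin)).trans (finCongr h.symm)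
  have key : ∀ i : Fin I.card,
      (J.equivFin.symm (Fin.cast h (σ i)) : F) = f (I.equivFin.symm i) := by
    intro i
    have h1 : Fin.cast h (σ i) = J.equivFin (e (I.equivFin.symm i)) := by
      simp [σ, finCongr_apply, Fin.cast_cast]
    rw [h1, Equiv.symm_apply_apply, he]
  refine le_trans (Finset.inf_le (Finset.mem_univ σ)) (le_of_eq ?_)
  calc ∑ i : Fin I.card, A (I.equivFin.symm i) (J.equivFin.symm (Fin.cast h (σ i)))
      = ∑ i : Fin I.card,
          A (I.equivFin.symm i) (f (I.equivFin.symm i)) :=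
        Finset.sum_congr rfl fun i _ => by rw [key i]
    _ = ∑ x : {x // x ∈ I}, A x (f x) :=
        Equiv.sum_comp I.equivFin.symm (fun x : {x // x ∈ I} => A x (f x))
    _ = ∑ i ∈ I, A i (f i) := by simpa using Finset.sum_coe_sort I (fun i => A i (f i))

lemma exists_bijOn_wtA_eq [Nonempty F] (A : E → F → WithTop ℝ)
    (I : Finset E) (J : Finset F) (h : I.card = J.card) :
    ∃ f : E → F, Set.BijOn f ↑I ↑J ∧ wtA A I f = tropMinor A I J h := by
  obtain ⟨σ, -, hσ⟩ := Finset.exists_mem_eq_inf (Finset.univ : Finset (Equiv.Perm (Fin I.card)))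
    ⟨1, Finset.mem_univ 1⟩
    (fun σ => ∑ i : Fin I.card,
      A (I.equivFin.symm i : E) (J.equivFin.symm (Fin.cast h (σ i)) : F))
  let e : {x // x ∈ I} ≃ {y // y ∈ J} :=
    I.equivFin.trans ((σ.trans (finCongr h)).trans J.equivFin.symm)
  let f : E → F := fun i => if hi : i ∈ I then (e ⟨i, hi⟩ : F) else Classical.arbitrary F
  have hfI : ∀ (i : E) (hi : i ∈ I), f i = (e ⟨i, hi⟩ : F) := fun i hi => dif_pos hi
  have hbij : Set.BijOn f ↑I ↑J := by
    refine ⟨?_, ?_, ?_⟩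
    · intro x hx
      rw [Finset.mem_coe] at hx
      rw [hfI x hx]
      exact Finset.mem_coe.mpr (e ⟨x, hx⟩).2
    · intro x hx y hy hxy
      rw [Finset.mem_coe] at hx hy
      rw [hfI x hx, hfI y hy] at hxy
      have := e.injective (Subtype.coe_injective hxy)
      exact congrArg Subtype.val this
    · intro j hj
      rw [Finset.mem_coe] at hj
      refine ⟨(e.symm ⟨j, hj⟩ : E), Finset.mem_coe.mpr (e.symm ⟨j, hj⟩).2, ?_⟩
      rw [hfI _ (e.symm ⟨j, hj⟩).2]
      have : (⟨(e.symm ⟨j, hj⟩ : E), (e.symm ⟨j, hj⟩).2⟩ : {x // x ∈ I}) = e.symm ⟨j, hj⟩ := rfl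
      rw [this, Equiv.apply_symm_apply]
  refine ⟨f, hbij, ?_⟩
  unfold tropMinor
  rw [hσ]
  calc wtA A I f = ∑ x : {x // x ∈ I}, A x (f x) := (Finset.sum_coe_sort I _).symm
    _ = ∑ i : Fin I.card, A (I.equivFin.symm i) (f (I.equivFin.symm i)) :=
        (Equiv.sum_comp I.equivFin.symm (fun x : {x // x ∈ I} => A x (f x))).symm
    _ = ∑ i : Fin I.card, A (I.equivFin.symm i) (J.equivFin.symm (Fin.cast h (σ i))) := by
        refine Finset.sum_congr rfl fun i _ => ?_
        congr 1
        rw [hfI _ (I.equivFin.symm i).2]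
        have h2 : (⟨(I.equivFin.symm i : E), (I.equivFin.symm i).2⟩ : {x // x ∈ I})
            = I.equivFin.symm i := rfl
        rw [h2]
        show (J.equivFin.symm ((finCongr h) (σ (I.equivFin (I.equivFin.symm i)))) : F) = _
        rw [Equiv.apply_symm_apply, finCongr_apply]

lemma wtA_inv (A : E → F → WithTop ℝ) {I : Finset E} {J : Finset F} {f : E → F} {g : F → E}
    (hf : Set.BijOn f ↑I ↑J) (hinv : Set.InvOn g f ↑I ↑J) :
    ∑ j ∈ J, A (g j) j = wtA A I f := by
  refine Finset.sum_bij' (fun j (_ : j ∈ J) => g j) (fun i (_ : i ∈ I) => f i)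
    ?_ ?_ ?_ ?_ ?_
  · intro j hj
    show g j ∈ I
    obtain ⟨x, hx, rfl⟩ := hf.surjOn (Finset.mem_coe.mpr hj)
    have : g (f x) = x := hinv.1 hx
    rw [this]
    exact Finset.mem_coe.mp hx
  · intro i hi
    show f i ∈ J
    exact Finset.mem_coe.mp (hf.mapsTo (Finset.mem_coe.mpr hi))
  · intro j hj
    show f (g j) = j
    exact hinv.2 (Finset.mem_coe.mpr hj)
  · intro i hi
    show g (f i) = i
    exact hinv.1 (Finset.mem_coe.mpr hi)
  · intro j hj
    show A (g j) j = A (g j) (f (g j))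
    rw [hinv.2 (Finset.mem_coe.mpr hj)]

lemma tropMinor_le_wtA_col [Nonempty F] (A : E → F → WithTop ℝ) {I : Finset E} {J : Finset F}
    (h : I.card = J.card) {p : F → E} (hp : Set.BijOn p ↑J ↑I) :
    tropMinor A I J h ≤ ∑ j ∈ J, A (p j) j := by
  have hinv := hp.invOn_invFunOn
  have hf : Set.BijOn (Function.invFunOn p ↑J) ↑I ↑J := Set.BijOn.symm hinv.symm hp
  calc tropMinor A I J h ≤ wtA A I (Function.invFunOn p ↑J) := tropMinor_le_wtA A h hf
    _ = ∑ j ∈ J, A (p j) j := (wtA_inv A hf hinv.symm).symm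

lemma exists_bijOn_wtA_eq_col [Nonempty E] [Nonempty F] (A : E → F → WithTop ℝ)
    (I : Finset E) (J : Finset F) (h : I.card = J.card) :
    ∃ p : F → E, Set.BijOn p ↑J ↑I ∧ ∑ j ∈ J, A (p j) j = tropMinor A I J h := by
  obtain ⟨f, hf, hw⟩ := exists_bijOn_wtA_eq A I J h
  have hinv := hf.invOn_invFunOn
  refine ⟨Function.invFunOn f ↑I, Set.BijOn.symm hinv.symm hf, ?_⟩
  rw [wtA_inv A hf hinv, hw]

end Bridge

/-- for any matrix `A` with entries in `ℝ ∪ {∞}`, the tropical minors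
`μ_A(I,J) = tropdet [A]_{I,J}` form a valuated bimatroid (the Stiefel bimatroid `St(A)`). -/
theorem stiefel_isVBimatroid {E F : Type*} [Fintype E] [Fintype F]
    (A : E → F → WithTop ℝ) :
    IsVBimatroid (fun (I : Finset E) (J : Finset F) =>
      if h : I.card = J.card then tropMinor A I J h else ⊤) := by
  constructor
  · -- μ ∅ ∅ = 0
    dsimp only
    rw [dif_pos (by simp : (#(∅ : Finset E)) = (#(∅ : Finset F)))]
    haveI : IsEmpty (Fin (#(∅ : Finset E))) := by
      rw [Finset.card_empty]; infer_instance
    refine le_antisymm ?_ ?_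
    · refine le_trans (Finset.inf_le (Finset.mem_univ 1)) (le_of_eq ?_)
      rw [Finset.univ_eq_empty (α := Fin (#(∅ : Finset E))), Finset.sum_empty]
    · refine Finset.le_inf fun σ _ => le_of_eq ?_
      rw [Finset.univ_eq_empty (α := Fin (#(∅ : Finset E))), Finset.sum_empty]
  · intro I J I2 J2 hIJ hI2J2
    constructor
    · -- first exchange family
      intro i2 hi2 hi2I
      haveI : Nonempty E := ⟨i2⟩
      have hJ2ne : J2.Nonempty := by
        rw [← Finset.card_pos, ← hI2J2, Finset.card_pos]
        exact ⟨i2, hi2⟩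
      haveI : Nonempty F := ⟨hJ2ne.choose⟩
      obtain ⟨f, hf, hwf⟩ := exists_bijOn_wtA_eq A I J hIJ
      obtain ⟨g, hg, hwg⟩ := exists_bijOn_wtA_eq A I2 J2 hI2J2
      have hone : 1 ≤ I2.card := Finset.card_pos.mpr ⟨i2, hi2⟩
      rcases exchange_aux A I2.card I2 le_rfl J2 I J f g hf hg i2 hi2 hi2I with
        ⟨i, hiI, hiI2, _, p, q, hp, hq, hw⟩ | ⟨j2, hj2J2, hj2J, p, q, hp, hq, hw⟩
      · left
        refine ⟨i, hiI, hiI2, ?_⟩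
        have honeI : 1 ≤ I.card := Finset.card_pos.mpr ⟨i, hiI⟩
        have hc1 : (insert i2 (I.erase i)).card = J.card := by
          rw [Finset.card_insert_of_notMem (fun hcc => hi2I (Finset.mem_of_mem_erase hcc)),
            Finset.card_erase_of_mem hiI]
          omega
        have hc2 : (insert i (I2.erase i2)).card = J2.card := by
          rw [Finset.card_insert_of_notMem
              (fun hcc => hiI2 (Finset.mem_of_mem_erase hcc)),
            Finset.card_erase_of_mem hi2]
          omega
        simp only []
        rw [dif_pos hc1, dif_pos hc2, dif_pos hIJ, dif_pos hI2J2]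
        calc tropMinor A (insert i2 (I.erase i)) J hc1
              + tropMinor A (insert i (I2.erase i2)) J2 hc2
            ≤ wtA A (insert i2 (I.erase i)) p + wtA A (insert i (I2.erase i2)) q :=
              add_le_add (tropMinor_le_wtA A hc1 hp) (tropMinor_le_wtA A hc2 hq)
          _ = wtA A I f + wtA A I2 g := hw
          _ = tropMinor A I J hIJ + tropMinor A I2 J2 hI2J2 := by rw [hwf, hwg]
      · right
        refine ⟨j2, hj2J2, hj2J, ?_⟩
        have hc1 : (insert i2 I).card = (insert j2 J).card := by
          rw [Finset.card_insert_of_notMem hi2I, Finset.card_insert_of_notMem hj2J, hIJ]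
        have hc2 : (I2.erase i2).card = (J2.erase j2).card := by
          rw [Finset.card_erase_of_mem hi2, Finset.card_erase_of_mem hj2J2, hI2J2]
        simp only []
        rw [dif_pos hc1, dif_pos hc2, dif_pos hIJ, dif_pos hI2J2]
        calc tropMinor A (insert i2 I) (insert j2 J) hc1
              + tropMinor A (I2.erase i2) (J2.erase j2) hc2
            ≤ wtA A (insert i2 I) p + wtA A (I2.erase i2) q :=
              add_le_add (tropMinor_le_wtA A hc1 hp) (tropMinor_le_wtA A hc2 hq)
          _ = wtA A I f + wtA A I2 g := hw
          _ = tropMinor A I J hIJ + tropMinor A I2 J2 hI2J2 := by rw [hwf, hwg]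
    · -- second exchange family
      intro j hjJ hjJ2
      haveI : Nonempty F := ⟨j⟩
      have hIne : I.Nonempty := by
        rw [← Finset.card_pos, hIJ, Finset.card_pos]
        exact ⟨j, hjJ⟩
      haveI : Nonempty E := ⟨hIne.choose⟩
      obtain ⟨p1, hp1, hw1⟩ := exists_bijOn_wtA_eq_col A I J hIJ
      obtain ⟨p2, hp2, hw2⟩ := exists_bijOn_wtA_eq_col A I2 J2 hI2J2
      have honeJ : 1 ≤ J.card := Finset.card_pos.mpr ⟨j, hjJ⟩
      rcases exchange_aux (fun (jj : F) (ii : E) => A ii jj) J.card J le_rfl I J2 I2 p2 p1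
          hp2 hp1 j hjJ hjJ2 with
        ⟨c, hcJ2, hcJ, _, p, q, hp, hq, hw⟩ | ⟨i, hiI, hiI2, p, q, hp, hq, hw⟩
      · right
        refine ⟨c, hcJ2, hcJ, ?_⟩
        have hc1 : I.card = (insert c (J.erase j)).card := by
          rw [Finset.card_insert_of_notMem (fun hcc => hcJ (Finset.mem_of_mem_erase hcc)),
            Finset.card_erase_of_mem hjJ]
          omega
        have hc2 : I2.card = (insert j (J2.erase c)).card := by
          have honeJ2 : 1 ≤ J2.card := Finset.card_pos.mpr ⟨c, hcJ2⟩
          rw [Finset.card_insert_of_notMem (fun hcc => hjJ2 (Finset.mem_of_mem_erase hcc)),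
            Finset.card_erase_of_mem hcJ2]
          omega
        simp only []
        rw [dif_pos hc1, dif_pos hc2, dif_pos hIJ, dif_pos hI2J2]
        calc tropMinor A I (insert c (J.erase j)) hc1
              + tropMinor A I2 (insert j (J2.erase c)) hc2
            ≤ (∑ x ∈ insert c (J.erase j), A (q x) x)
              + ∑ x ∈ insert j (J2.erase c), A (p x) x :=
              add_le_add (tropMinor_le_wtA_col A hc1 hq) (tropMinor_le_wtA_col A hc2 hp)
          _ = wtA (fun (jj : F) (ii : E) => A ii jj) (insert j (J2.erase c)) p
              + wtA (fun (jj : F) (ii : E) => A ii jj) (insert c (J.erase j)) q := by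
              rw [add_comm]; rfl
          _ = wtA (fun (jj : F) (ii : E) => A ii jj) J2 p2
              + wtA (fun (jj : F) (ii : E) => A ii jj) J p1 := hw
          _ = tropMinor A I J hIJ + tropMinor A I2 J2 hI2J2 := by
              rw [add_comm]
              show (∑ x ∈ J, A (p1 x) x) + ∑ x ∈ J2, A (p2 x) x = _
              rw [hw1, hw2]
      · left
        refine ⟨i, hiI, hiI2, ?_⟩
        have hc1 : (I.erase i).card = (J.erase j).card := by
          rw [Finset.card_erase_of_mem hiI, Finset.card_erase_of_mem hjJ, hIJ]
        have hc2 : (insert i I2).card = (insert j J2).card := by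
          rw [Finset.card_insert_of_notMem hiI2, Finset.card_insert_of_notMem hjJ2, hI2J2]
        simp only []
        rw [dif_pos hc1, dif_pos hc2, dif_pos hIJ, dif_pos hI2J2]
        calc tropMinor A (I.erase i) (J.erase j) hc1
              + tropMinor A (insert i I2) (insert j J2) hc2
            ≤ (∑ x ∈ J.erase j, A (q x) x) + ∑ x ∈ insert j J2, A (p x) x :=
              add_le_add (tropMinor_le_wtA_col A hc1 hq) (tropMinor_le_wtA_col A hc2 hp)
          _ = wtA (fun (jj : F) (ii : E) => A ii jj) (insert j J2) p
              + wtA (fun (jj : F) (ii : E) => A ii jj) (J.erase j) q := by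
              rw [add_comm]; rfl
          _ = wtA (fun (jj : F) (ii : E) => A ii jj) J2 p2
              + wtA (fun (jj : F) (ii : E) => A ii jj) J p1 := hw
          _ = tropMinor A I J hIJ + tropMinor A I2 J2 hI2J2 := by
              rw [add_comm]
              show (∑ x ∈ J, A (p1 x) x) + ∑ x ∈ J2, A (p2 x) x = _
              rw [hw1, hw2]
end
end

section
/- Let ν : Δ_E^r → Γ̄ be a function, π : E' → E a surjection realizing the cage of ν (|π^{-1}(s)| = a_s), and define Φ : binom(E', r) → Δ_E^r by Φ(S') = Σ_{s'∈S'} e_{π(s')}. Then Φ is surjective onto Δ_{E,a}^r := {α ∈ Δ_E^r : α ≤ a componentwise}, and for every α ∈ Δ_{E,a}^r and every β ∈ Δ_{E,a}^r there exist S', T' ∈ binom(E',r) with Φ(S') = α, Φ(T') = β, and |S' ∩ T' ∩ π^{-1}(e)| = min(α_e, β_e) for all e ∈ E. -/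
open Finset

/-- the combinatorial lifting lemma. With `π : E' → E` having fibers of
cardinality `a s` and `Φ(S') = ∑_{s' ∈ S'} e_{π(s')}` (recorded via fiber counts),
`Φ` surjects onto `Δ_{E,a}^r = {α ∈ Δ_E^r : α ≤ a}`, and any two elements
`α, β ∈ Δ_{E,a}^r` admit lifts `S', T'` with `|S' ∩ T' ∩ π⁻¹(e)| = min(α_e, β_e)`. -/
theorem multisymmetric_lifting_lemma
    {E E' : Type*} [Fintype E] [Fintype E'] [DecidableEq E] [DecidableEq E']
    (r : ℕ) (a : E → ℕ) (ha : r ≤ ∑ s, a s) (π : E' → E)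
    (hπ : ∀ s : E, (Finset.univ.filter (fun x : E' => π x = s)).card = a s) :
    (∀ α : E → ℕ, (∑ e, α e) = r → (∀ e, α e ≤ a e) →
      ∃ S' : Finset E', S'.card = r ∧
        ∀ e, (S'.filter (fun x => π x = e)).card = α e) ∧
    (∀ α β : E → ℕ, (∑ e, α e) = r → (∑ e, β e) = r →
      (∀ e, α e ≤ a e) → (∀ e, β e ≤ a e) →
      ∃ S' T' : Finset E', S'.card = r ∧ T'.card = r ∧
        (∀ e, (S'.filter (fun x => π x = e)).card = α e) ∧
        (∀ e, (T'.filter (fun x => π x = e)).card = β e) ∧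
        ∀ e, ((S' ∩ T').filter (fun x => π x = e)).card = min (α e) (β e)) := by
  classical
  set F : E → Finset E' := fun e => Finset.univ.filter (fun x : E' => π x = e) with hF
  have main : ∀ α β : E → ℕ, (∑ e, α e) = r → (∑ e, β e) = r →
      (∀ e, α e ≤ a e) → (∀ e, β e ≤ a e) →
      ∃ S' T' : Finset E', S'.card = r ∧ T'.card = r ∧
        (∀ e, (S'.filter (fun x => π x = e)).card = α e) ∧
        (∀ e, (T'.filter (fun x => π x = e)).card = β e) ∧
        ∀ e, ((S' ∩ T').filter (fun x => π x = e)).card = min (α e) (β e) := by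
    intro α β hα hβ hαa hβa
    have hex : ∀ e : E, ∃ p : Finset E' × Finset E', p.1 ⊆ F e ∧ p.2 ⊆ F e ∧
        p.1.card = α e ∧ p.2.card = β e ∧ (p.1 ∩ p.2).card = min (α e) (β e) := by
      intro e
      have hcard : (F e).card = a e := hπ e
      have hmax : max (α e) (β e) ≤ (F e).card := by
        rw [hcard]; exact max_le (hαa e) (hβa e)
      obtain ⟨C, hCF, hC⟩ := Finset.exists_subset_card_eq hmax
      have hmin : min (α e) (β e) ≤ C.card := by
        rw [hC]; exact min_le_max
      obtain ⟨c, hcC, hc⟩ := Finset.exists_subset_card_eq hmin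
      rcases le_total (α e) (β e) with h | h
      · refine ⟨(c, C), hcC.trans hCF, hCF, ?_, ?_, ?_⟩
        · rw [hc, min_eq_left h]
        · rw [hC, max_eq_right h]
        · rw [Finset.inter_eq_left.mpr hcC, hc]
      · refine ⟨(C, c), hCF, hcC.trans hCF, ?_, ?_, ?_⟩
        · rw [hC, max_eq_left h]
        · rw [hc, min_eq_right h]
        · rw [Finset.inter_eq_right.mpr hcC, hc]
    choose p hp1 hp2 hp3 hp4 hp5 using hex
    set S' : Finset E' := Finset.univ.biUnion (fun e => (p e).1) with hS'
    set T' : Finset E' := Finset.univ.biUnion (fun e => (p e).2) with hT'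
    have hfibS : ∀ e, S'.filter (fun x => π x = e) = (p e).1 := by
      intro e
      ext x
      simp only [hS', Finset.mem_filter, Finset.mem_biUnion, Finset.mem_univ, true_and]
      constructor
      · rintro ⟨⟨e', hx⟩, hpe⟩
        have := hp1 e' hx
        simp only [hF, Finset.mem_filter] at this
        obtain rfl : e' = e := this.2.symm.trans hpe
        exact hx
      · intro hx
        have := hp1 e hx
        simp only [hF, Finset.mem_filter] at this
        exact ⟨⟨e, hx⟩, this.2⟩
    have hfibT : ∀ e, T'.filter (fun x => π x = e) = (p e).2 := by
      intro e
      ext x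
      simp only [hT', Finset.mem_filter, Finset.mem_biUnion, Finset.mem_univ, true_and]
      constructor
      · rintro ⟨⟨e', hx⟩, hpe⟩
        have := hp2 e' hx
        simp only [hF, Finset.mem_filter] at this
        obtain rfl : e' = e := this.2.symm.trans hpe
        exact hx
      · intro hx
        have := hp2 e hx
        simp only [hF, Finset.mem_filter] at this
        exact ⟨⟨e, hx⟩, this.2⟩
    have hScard : S'.card = r := by
      rw [Finset.card_eq_sum_card_fiberwise (f := π) (t := Finset.univ)
        (fun x _ => Finset.mem_univ _)]
      simp only [hfibS]
      rw [← hα]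
      exact Finset.sum_congr rfl fun e _ => hp3 e
    have hTcard : T'.card = r := by
      rw [Finset.card_eq_sum_card_fiberwise (f := π) (t := Finset.univ)
        (fun x _ => Finset.mem_univ _)]
      simp only [hfibT]
      rw [← hβ]
      exact Finset.sum_congr rfl fun e _ => hp4 e
    refine ⟨S', T', hScard, hTcard, fun e => by rw [hfibS e]; exact hp3 e,
      fun e => by rw [hfibT e]; exact hp4 e, fun e => ?_⟩
    rw [Finset.filter_inter_distrib, hfibS e, hfibT e]
    exact hp5 e
  refine ⟨fun α hα hαa => ?_, main⟩
  obtain ⟨S', T', hS, _, hfS, _, _⟩ := main α α hα hα hαa hαa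
  exact ⟨S', hS, hfS⟩
end
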